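/- arXiv:1710.01090 — 12 statements merged into one kernel-verified Lean document; each statement's English description precedes it below -/
import Mathlib

section
/- For all sufficiently large n, ℙ( f_n(x) > 0 for all x ∈ [√n + α_n, ∞) ) ≥ exp( −4 (log n)^4 ). In particular, liminf_{n→∞} (1/√n) · log ℙ( f_n(x) > 0 for all x ∈ [√n + α_n, ∞) ) ≥ 0. -/
open MeasureTheory ProbabilityTheory Filter Finset
open scoped Topology

open Real in
lemma wp_gauss_pdf_le (L x : ℝ) (hL : 1 ≤ L) (hx : L ≤ x) :
    gaussianPDFReal 0 1 x ≤ rexp (-(L^2)/2) * (rexp L * rexp (-x)) := by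
  rw [gaussianPDFReal]
  have h1 : (√(2 * π * ((1:NNReal):ℝ)))⁻¹ ≤ 1 := by
    rw [NNReal.coe_one, mul_one, inv_le_one_iff₀]
    right
    rw [show (1:ℝ) = √1 by simp]
    exact Real.sqrt_le_sqrt (by nlinarith [pi_gt_three])
  have h2 : rexp (-(x - 0)^2 / (2 * ((1:NNReal):ℝ))) ≤ rexp (-(L^2)/2) * (rexp L * rexp (-x)) := by
    rw [← Real.exp_add, ← Real.exp_add, Real.exp_le_exp, NNReal.coe_one]
    nlinarith
  calc (√(2 * π * ((1:NNReal):ℝ)))⁻¹ * rexp (-(x - 0)^2 / (2 * ((1:NNReal):ℝ)))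
      ≤ 1 * (rexp (-(L^2)/2) * (rexp L * rexp (-x))) :=
        mul_le_mul h1 h2 (Real.exp_nonneg _) zero_le_one
    _ = _ := one_mul _

open Real in
lemma wp_gauss_tail_upper (L : ℝ) (hL : 1 ≤ L) :
    gaussianReal 0 1 {x | L ≤ x} ≤ ENNReal.ofReal (rexp (-(L^2)/2)) := by
  rw [gaussianReal_apply_eq_integral 0 one_ne_zero]
  apply ENNReal.ofReal_le_ofReal
  have hset : {x : ℝ | L ≤ x} = Set.Ici L := rfl
  rw [hset, MeasureTheory.integral_Ici_eq_integral_Ioi]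
  have hint : IntegrableOn (fun x : ℝ => rexp (-(L^2)/2) * (rexp L * rexp (-x))) (Set.Ioi L) := by
    apply Integrable.const_mul
    apply Integrable.const_mul
    exact (by simpa using exp_neg_integrableOn_Ioi L (by norm_num : (0:ℝ) < 1) :
      IntegrableOn (fun x : ℝ => rexp (-x)) (Set.Ioi L))
  have hle : ∫ x in Set.Ioi L, gaussianPDFReal 0 1 x ≤
      ∫ x in Set.Ioi L, rexp (-(L^2)/2) * (rexp L * rexp (-x)) := by
    apply setIntegral_mono_on ((integrable_gaussianPDFReal 0 1).integrableOn) hint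
      measurableSet_Ioi
    exact fun x hx => wp_gauss_pdf_le L x hL (le_of_lt hx)
  refine hle.trans ?_
  rw [MeasureTheory.integral_const_mul, MeasureTheory.integral_const_mul, integral_exp_neg_Ioi,
    ← Real.exp_add]
  simp

open Real in
lemma wp_gauss_tail_lower (L : ℝ) (hL : 1 ≤ L) :
    gaussianReal 0 1 {x | x ≤ -L} ≤ ENNReal.ofReal (rexp (-(L^2)/2)) := by
  have hmap : (gaussianReal 0 1).map (fun x => (-1 : ℝ) * x) = gaussianReal 0 1 := by
    rw [gaussianReal_map_const_mul]
    norm_num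
  have h0 : {x:ℝ | x ≤ -L} = Set.Iic (-L) := rfl
  have h2 : gaussianReal 0 1 {x | x ≤ -L}
      = (gaussianReal 0 1).map (fun x => (-1:ℝ) * x) (Set.Iic (-L)) := by rw [hmap, h0]
  rw [h2, Measure.map_apply (by fun_prop) (measurableSet_Iic (a := -L))]
  have h1 : (fun x : ℝ => (-1:ℝ) * x) ⁻¹' Set.Iic (-L) = {x | L ≤ x} := by
    ext y; simp only [Set.mem_preimage, Set.mem_Iic, Set.mem_setOf_eq]
    constructor <;> intro h <;> linarith
  rw [h1]
  exact wp_gauss_tail_upper L hL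

open Real in
lemma wp_gauss_interval (t : ℝ) (ht : 0 ≤ t) :
    ENNReal.ofReal ((√(2*π))⁻¹ * rexp (-((t+1)^2)/2)) ≤ gaussianReal 0 1 (Set.Icc t (t+1)) := by
  rw [gaussianReal_apply_eq_integral 0 one_ne_zero]
  apply ENNReal.ofReal_le_ofReal
  have hle : ∫ x in Set.Icc t (t+1), ((√(2*π))⁻¹ * rexp (-((t+1)^2)/2)) ≤
      ∫ x in Set.Icc t (t+1), gaussianPDFReal 0 1 x := by
    apply setIntegral_mono_on (integrableOn_const (s := Set.Icc t (t+1)) (μ := volume) (by simp))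
      ((integrable_gaussianPDFReal 0 1).integrableOn) measurableSet_Icc
    intro x hx
    rw [gaussianPDFReal]
    simp only [NNReal.coe_one, mul_one, sub_zero]
    apply mul_le_mul_of_nonneg_left _ (by positivity)
    apply Real.exp_le_exp.2
    apply div_le_div_of_nonneg_right _ (by norm_num)
    · simp only [neg_le_neg_iff]
      obtain ⟨h1, h2⟩ := hx
      nlinarith
  refine le_trans ?_ hle
  rw [setIntegral_const, Real.volume_real_Icc, smul_eq_mul]
  rw [show t + 1 - t = 1 by ring]
  simp

/-- `weylPoly a n ω x = ∑_{i=0}^n (a i ω / √(i!)) xⁱ` is the random Weyl polynomial. -/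
noncomputable def weylPoly {Ω : Type*} (a : ℕ → Ω → ℝ) (n : ℕ) (ω : Ω) (x : ℝ) : ℝ :=
  ∑ i ∈ Finset.range (n + 1), (a i ω / Real.sqrt (Nat.factorial i)) * x ^ i

open Real in
lemma wp_pos_of_coeffs {Ω : Type*} (a : ℕ → Ω → ℝ) (n : ℕ) (ω : Ω)
    (hn : 1 ≤ n) (hl : 1 ≤ Real.log n)
    (hbd : ∀ i < n, |a i ω| ≤ Real.log n)
    (htop : Real.log n ^ 2 + 1 ≤ a n ω) :
    ∀ x : ℝ, Real.sqrt n + Real.sqrt n / Real.log n ≤ x → 0 < weylPoly a n ω x := by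
  intro x hx
  set ℓ := Real.log n with hℓ
  have hl0 : 0 < ℓ := lt_of_lt_of_le zero_lt_one hl
  set r : ℝ := 1 + 1/ℓ with hr
  have hr1 : 1 < r := by
    rw [hr]
    have : 0 < 1/ℓ := by positivity
    linarith
  have hr0 : 0 < r := lt_trans zero_lt_one hr1
  have hsq : (1:ℝ) ≤ Real.sqrt n := by
    rw [show (1:ℝ) = Real.sqrt 1 by simp]
    apply Real.sqrt_le_sqrt
    exact_mod_cast hn
  have hxr : Real.sqrt n * r ≤ x := by
    calc Real.sqrt n * r = Real.sqrt n + Real.sqrt n / ℓ := by rw [hr]; ring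
      _ ≤ x := hx
  have hx0 : 0 < x := lt_of_lt_of_le (by nlinarith) hxr
  set T : ℕ → ℝ := fun i => x ^ i / Real.sqrt (Nat.factorial i) with hT
  have hT0 : ∀ i, 0 < T i := by
    intro i
    have : (0:ℝ) < (Nat.factorial i : ℝ) := by exact_mod_cast (Nat.factorial_pos i)
    rw [hT]
    positivity
  have step : ∀ j, j < n → r * T j ≤ T (j+1) := by
    intro j hj
    have hsj : Real.sqrt ((j:ℝ)+1) ≤ Real.sqrt n := by
      apply Real.sqrt_le_sqrt
      have : (j:ℝ) + 1 ≤ (n:ℝ) := by exact_mod_cast hj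
      linarith
    have hsj0 : 0 < Real.sqrt ((j:ℝ)+1) := Real.sqrt_pos.2 (by positivity)
    have key : r * Real.sqrt ((j:ℝ)+1) ≤ x := by
      calc r * Real.sqrt ((j:ℝ)+1) ≤ r * Real.sqrt n :=
            mul_le_mul_of_nonneg_left hsj hr0.le
        _ = Real.sqrt n * r := mul_comm _ _
        _ ≤ x := hxr
    have hrle : r ≤ x / Real.sqrt ((j:ℝ)+1) := by
      rw [le_div_iff₀ hsj0]; exact key
    have heq : (x / Real.sqrt ((j:ℝ)+1)) * T j = T (j+1) := by
      rw [hT]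
      have hfact : ((Nat.factorial (j+1) : ℕ) : ℝ) = ((j:ℝ)+1) * (Nat.factorial j : ℝ) := by
        rw [Nat.factorial_succ]; push_cast; ring
      have hsqrt : Real.sqrt (Nat.factorial (j+1)) =
          Real.sqrt ((j:ℝ)+1) * Real.sqrt (Nat.factorial j) := by
        rw [hfact, Real.sqrt_mul (by positivity)]
      simp only []
      rw [hsqrt]
      have hfj0 : (0:ℝ) < Real.sqrt (Nat.factorial j) :=
        Real.sqrt_pos.2 (by exact_mod_cast Nat.factorial_pos j)
      field_simp
      ring
    calc r * T j ≤ (x / Real.sqrt ((j:ℝ)+1)) * T j :=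
          mul_le_mul_of_nonneg_right hrle (hT0 j).le
      _ = T (j+1) := heq
  have chain : ∀ d i, i + d = n → T i * r ^ d ≤ T n := by
    intro d
    induction d with
    | zero => intro i hi; simp only [pow_zero, mul_one]; rw [show i = n by omega]
    | succ d ih =>
      intro i hi
      have hi' : i < n := by omega
      calc T i * r ^ (d+1) = (r * T i) * r ^ d := by ring
        _ ≤ T (i+1) * r ^ d :=
            mul_le_mul_of_nonneg_right (step i hi') (pow_nonneg hr0.le d)
        _ ≤ T n := ih (i+1) (by omega)
  have hTle : ∀ i, i < n → T i ≤ T n * (r⁻¹) ^ (n - i) := by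
    intro i hi
    have h := chain (n - i) i (by omega)
    have hrp : (0:ℝ) < r ^ (n - i) := pow_pos hr0 _
    rw [inv_pow, ← div_eq_mul_inv, le_div_iff₀ hrp]
    exact h
  have hρ0 : (0:ℝ) ≤ r⁻¹ := inv_nonneg.2 hr0.le
  have hρ1 : r⁻¹ < 1 := by
    rw [inv_lt_one_iff₀]; right; exact hr1
  have hgeo : ∑ j ∈ Finset.range n, (r⁻¹)^j ≤ (1 - r⁻¹)⁻¹ := by
    rw [geom_sum_eq (by linarith : r⁻¹ ≠ 1)]
    rw [div_le_iff_of_neg (by linarith : r⁻¹ - 1 < 0)]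
    have hne : (1:ℝ) - r⁻¹ ≠ 0 := by linarith
    have heq : (1 - r⁻¹)⁻¹ * (r⁻¹ - 1) = -1 := by
      rw [show r⁻¹ - 1 = -(1 - r⁻¹) by ring, mul_neg, inv_mul_cancel₀ hne]
    have := pow_nonneg hρ0 n
    linarith
  have hsum1 : ∑ j ∈ Finset.range n, (r⁻¹)^(n-j) = ∑ j ∈ Finset.range n, (r⁻¹)^(j+1) := by
    rw [← Finset.sum_range_reflect (fun j => (r⁻¹)^(j+1)) n]
    apply Finset.sum_congr rfl
    intro j hj
    rw [Finset.mem_range] at hj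
    congr 1
    omega
  have hsum2 : ∑ j ∈ Finset.range n, (r⁻¹)^(j+1) ≤ r⁻¹ * (1 - r⁻¹)⁻¹ := by
    have : ∑ j ∈ Finset.range n, (r⁻¹)^(j+1) = r⁻¹ * ∑ j ∈ Finset.range n, (r⁻¹)^j := by
      rw [Finset.mul_sum]
      exact Finset.sum_congr rfl fun j _ => by rw [pow_succ]; ring
    rw [this]
    exact mul_le_mul_of_nonneg_left hgeo hρ0
  have hfrac : r⁻¹ * (1 - r⁻¹)⁻¹ = ℓ := by
    rw [hr]
    have h1 : ℓ + 1 ≠ 0 := by linarith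
    field_simp
    ring
  have hTsum : ∑ i ∈ Finset.range n, T i ≤ T n * ℓ := by
    calc ∑ i ∈ Finset.range n, T i
        ≤ ∑ i ∈ Finset.range n, T n * (r⁻¹)^(n-i) := by
          apply Finset.sum_le_sum
          intro i hi
          exact hTle i (Finset.mem_range.1 hi)
      _ = T n * ∑ i ∈ Finset.range n, (r⁻¹)^(n-i) := by rw [Finset.mul_sum]
      _ ≤ T n * ℓ := by
          apply mul_le_mul_of_nonneg_left _ (hT0 n).le
          rw [hsum1, ← hfrac]
          exact hsum2
  have hpoly : weylPoly a n ω x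
      = (∑ i ∈ Finset.range n, a i ω * T i) + a n ω * T n := by
    rw [weylPoly, Finset.sum_range_succ]
    congr 1
    · exact Finset.sum_congr rfl fun i _ => by rw [hT]; ring
    · rw [hT]; ring
  have hS : -(ℓ * (T n * ℓ)) ≤ ∑ i ∈ Finset.range n, a i ω * T i := by
    calc -(ℓ * (T n * ℓ)) ≤ -(ℓ * ∑ i ∈ Finset.range n, T i) := by
          apply neg_le_neg
          exact mul_le_mul_of_nonneg_left hTsum hl0.le
      _ = ∑ i ∈ Finset.range n, -ℓ * T i := by
            rw [Finset.mul_sum, ← Finset.sum_neg_distrib]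
            exact Finset.sum_congr rfl fun i _ => by ring
      _ ≤ ∑ i ∈ Finset.range n, a i ω * T i := by
          apply Finset.sum_le_sum
          intro i hi
          apply mul_le_mul_of_nonneg_right _ (hT0 i).le
          exact (abs_le.1 (hbd i (Finset.mem_range.1 hi))).1
  have hlast : (ℓ^2 + 1) * T n ≤ a n ω * T n :=
    mul_le_mul_of_nonneg_right htop (hT0 n).le
  have hTn := hT0 n
  have hring : ℓ * (T n * ℓ) = ℓ^2 * T n := by ring
  rw [hpoly]
  nlinarith

open Real in
lemma wp_prob_bound {Ω : Type*} [MeasurableSpace Ω] (P : Measure Ω) [IsProbabilityMeasure P]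
    (a : ℕ → Ω → ℝ) (hmeas : ∀ i, Measurable (a i))
    (hindep : iIndepFun a P)
    (hgauss : ∀ i, Measure.map (a i) P = gaussianReal 0 1)
    (n : ℕ) (hn : 1 ≤ n) (hl2 : 2 ≤ Real.log n)
    (hsm : (n:ℝ) * rexp (-(Real.log n)^2/2) ≤ 1/4) :
    Real.exp (-4 * (Real.log n) ^ 4) ≤
      (P {ω | ∀ x : ℝ, Real.sqrt n + Real.sqrt n / Real.log n ≤ x →
          0 < weylPoly a n ω x}).toReal := by
  set ℓ := Real.log n with hℓ
  have hl1 : 1 ≤ ℓ := by linarith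
  set s : ℝ := ℓ^2 + 1 with hs
  set A : Set Ω := ⋂ i ∈ Finset.range n, {ω | |a i ω| ≤ ℓ} with hA
  set B : Set Ω := a n ⁻¹' Set.Icc s (s+1) with hB
  -- event inclusion
  have hsub : A ∩ B ⊆ {ω | ∀ x : ℝ, Real.sqrt n + Real.sqrt n / Real.log n ≤ x →
      0 < weylPoly a n ω x} := by
    rintro ω ⟨hωA, hωB⟩
    have hbd : ∀ i < n, |a i ω| ≤ ℓ := by
      intro i hi
      have := Set.mem_iInter₂.1 hωA i (Finset.mem_range.2 hi)
      exact this
    have htop : ℓ^2 + 1 ≤ a n ω := by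
      have : a n ω ∈ Set.Icc s (s+1) := hωB
      exact this.1
    exact wp_pos_of_coeffs a n ω hn hl1 hbd htop
  -- independence
  have hABeq : P (A ∩ B) = P A * P B := by
    have hdisj : Disjoint (Finset.range n) ({n} : Finset ℕ) := by
      simp [Finset.disjoint_left]
      omega
    have hind := hindep.indepFun_finset (Finset.range n) {n} hdisj hmeas
    set F : Ω → ((i : (Finset.range n : Finset ℕ)) → ℝ) := fun ω i => a i ω with hF
    set G : Ω → ((i : ({n} : Finset ℕ)) → ℝ) := fun ω i => a i ω with hG
    set SA : Set ((i : (Finset.range n : Finset ℕ)) → ℝ) := {g | ∀ i, |g i| ≤ ℓ} with hSA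
    set SB : Set ((i : ({n} : Finset ℕ)) → ℝ) :=
      (fun g => g ⟨n, Finset.mem_singleton_self n⟩) ⁻¹' Set.Icc s (s+1) with hSB
    have hSAm : MeasurableSet SA := by
      rw [hSA]
      have : {g : (i : (Finset.range n : Finset ℕ)) → ℝ | ∀ i, |g i| ≤ ℓ}
          = ⋂ i, (fun g : (i : (Finset.range n : Finset ℕ)) → ℝ => g i) ⁻¹' (Set.Icc (-ℓ) ℓ) := by
        ext g; simp [abs_le, Set.mem_iInter]
      rw [this]
      exact MeasurableSet.iInter fun i => (measurable_pi_apply i) measurableSet_Icc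
    have hSBm : MeasurableSet SB := (measurable_pi_apply _) measurableSet_Icc
    have hAeq : A = F ⁻¹' SA := by
      ext ω
      simp only [hA, Set.mem_iInter, Set.mem_setOf_eq, Set.mem_preimage, hSA, hF, Subtype.forall,
        Finset.mem_range, Finset.mem_coe]
    have hBeq : B = G ⁻¹' SB := rfl
    rw [hAeq, hBeq]
    exact hind.measure_inter_preimage_eq_mul SA SB hSAm hSBm
  -- lower bound for P B
  have hPB : ENNReal.ofReal ((√(2*π))⁻¹ * rexp (-((s+1)^2)/2)) ≤ P B := by
    have hPBeq : P B = gaussianReal 0 1 (Set.Icc s (s+1)) := by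
      rw [← hgauss n, Measure.map_apply (hmeas n) measurableSet_Icc]
    rw [hPBeq]
    exact wp_gauss_interval s (by nlinarith)
  -- lower bound for P A
  have hAm : MeasurableSet A := by
    apply MeasurableSet.biInter ((Finset.range n).finite_toSet.countable)
    intro i _
    have : {ω | |a i ω| ≤ ℓ} = a i ⁻¹' (Set.Icc (-ℓ) ℓ) := by
      ext ω; simp [abs_le]
    rw [this]
    exact (hmeas i) measurableSet_Icc
  have hPA : ENNReal.ofReal (1/2) ≤ P A := by
    have hAc : P Aᶜ ≤ ENNReal.ofReal (1/2) := by
      have hcompl : Aᶜ = ⋃ i ∈ Finset.range n, {ω | |a i ω| ≤ ℓ}ᶜ := by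
        rw [hA]
        simp [Set.compl_iInter]
      rw [hcompl]
      calc P (⋃ i ∈ Finset.range n, {ω | |a i ω| ≤ ℓ}ᶜ)
          ≤ ∑ i ∈ Finset.range n, P ({ω | |a i ω| ≤ ℓ}ᶜ) := measure_biUnion_finset_le _ _
        _ ≤ ∑ _i ∈ Finset.range n, ENNReal.ofReal (2 * rexp (-(ℓ^2)/2)) := by
            apply Finset.sum_le_sum
            intro i _
            have hsubi : {ω | |a i ω| ≤ ℓ}ᶜ ⊆
                (a i ⁻¹' {y | ℓ ≤ y}) ∪ (a i ⁻¹' {y | y ≤ -ℓ}) := by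
              intro ω hω
              simp only [Set.mem_compl_iff, Set.mem_setOf_eq, not_le] at hω
              rcases lt_abs.1 hω with h | h
              · exact Or.inl (le_of_lt h)
              · exact Or.inr (by simp only [Set.mem_preimage, Set.mem_setOf_eq]; linarith)
            have h1 : P (a i ⁻¹' {y | ℓ ≤ y}) ≤ ENNReal.ofReal (rexp (-(ℓ^2)/2)) := by
              rw [show P (a i ⁻¹' {y | ℓ ≤ y}) = gaussianReal 0 1 {y | ℓ ≤ y} by
                rw [← hgauss i, Measure.map_apply (hmeas i)
                  (show MeasurableSet {y:ℝ | ℓ ≤ y} from measurableSet_Ici)]]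
              exact wp_gauss_tail_upper ℓ hl1
            have h2 : P (a i ⁻¹' {y | y ≤ -ℓ}) ≤ ENNReal.ofReal (rexp (-(ℓ^2)/2)) := by
              rw [show P (a i ⁻¹' {y | y ≤ -ℓ}) = gaussianReal 0 1 {y | y ≤ -ℓ} by
                rw [← hgauss i, Measure.map_apply (hmeas i)
                  (show MeasurableSet {y:ℝ | y ≤ -ℓ} from measurableSet_Iic)]]
              exact wp_gauss_tail_lower ℓ hl1
            calc P ({ω | |a i ω| ≤ ℓ}ᶜ)
                ≤ P ((a i ⁻¹' {y | ℓ ≤ y}) ∪ (a i ⁻¹' {y | y ≤ -ℓ})) := measure_mono hsubi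
              _ ≤ P (a i ⁻¹' {y | ℓ ≤ y}) + P (a i ⁻¹' {y | y ≤ -ℓ}) := measure_union_le _ _
              _ ≤ ENNReal.ofReal (rexp (-(ℓ^2)/2)) + ENNReal.ofReal (rexp (-(ℓ^2)/2)) :=
                  add_le_add h1 h2
              _ = ENNReal.ofReal (2 * rexp (-(ℓ^2)/2)) := by
                  rw [← ENNReal.ofReal_add (Real.exp_nonneg _) (Real.exp_nonneg _)]
                  congr 1; ring
        _ = (n : ENNReal) * ENNReal.ofReal (2 * rexp (-(ℓ^2)/2)) := by
            rw [Finset.sum_const, Finset.card_range, nsmul_eq_mul]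
        _ = ENNReal.ofReal ((n:ℝ) * (2 * rexp (-(ℓ^2)/2))) := by
            rw [ENNReal.ofReal_mul (by positivity : (0:ℝ) ≤ (n:ℝ)), ENNReal.ofReal_natCast]
        _ ≤ ENNReal.ofReal (1/2) := by
            apply ENNReal.ofReal_le_ofReal
            nlinarith [Real.exp_nonneg (-(ℓ^2)/2)]
    have hsum : P A + P Aᶜ = 1 := by
      rw [measure_add_measure_compl hAm]
      exact measure_univ
    have h12 : (1:ENNReal) - ENNReal.ofReal (1/2) ≤ P A := by
      rw [tsub_le_iff_right]
      calc (1:ENNReal) = P A + P Aᶜ := hsum.symm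
        _ ≤ P A + ENNReal.ofReal (1/2) := add_le_add_right hAc _
    calc ENNReal.ofReal (1/2) = (1:ENNReal) - ENNReal.ofReal (1/2) := by
          rw [show (1:ENNReal) = ENNReal.ofReal 1 from ENNReal.ofReal_one.symm,
            ← ENNReal.ofReal_sub _ (by norm_num : (0:ℝ) ≤ 1/2)]
          norm_num
      _ ≤ P A := h12
  -- combine
  set c : ℝ := (√(2*π))⁻¹ * rexp (-((s+1)^2)/2) with hc
  have hc0 : 0 ≤ c := by positivity
  have hkey : ENNReal.ofReal (1/2 * c) ≤
      P {ω | ∀ x : ℝ, Real.sqrt n + Real.sqrt n / Real.log n ≤ x → 0 < weylPoly a n ω x} := by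
    calc ENNReal.ofReal (1/2 * c) = ENNReal.ofReal (1/2) * ENNReal.ofReal c :=
          ENNReal.ofReal_mul (by norm_num)
      _ ≤ P A * P B := mul_le_mul' hPA hPB
      _ = P (A ∩ B) := hABeq.symm
      _ ≤ _ := measure_mono hsub
  have hfin : P {ω | ∀ x : ℝ, Real.sqrt n + Real.sqrt n / Real.log n ≤ x →
      0 < weylPoly a n ω x} ≠ ⊤ := measure_ne_top _ _
  have htr := ENNReal.toReal_mono hfin hkey
  rw [ENNReal.toReal_ofReal (by positivity)] at htr
  refine le_trans ?_ htr
  -- final numeric inequality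
  have hs1 : s + 1 = ℓ^2 + 2 := by rw [hs]; ring
  have hsqrt2pi : √(2*π) ≤ 3 := by
    rw [show (3:ℝ) = √(3^2) by rw [Real.sqrt_sq]; norm_num]
    apply Real.sqrt_le_sqrt
    nlinarith [pi_le_four]
  have h2pi0 : (0:ℝ) < √(2*π) := Real.sqrt_pos.2 (by positivity)
  have hinv : (1:ℝ)/3 ≤ (√(2*π))⁻¹ := by
    rw [show (√(2*π))⁻¹ = 1/√(2*π) by rw [one_div]]
    exact one_div_le_one_div_of_le h2pi0 hsqrt2pi
  have hexp6 : (6:ℝ) ≤ rexp 2 := by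
    have h1 : rexp 2 = rexp 1 * rexp 1 := by rw [← Real.exp_add]; norm_num
    nlinarith [Real.exp_one_gt_d9]
  have hE0 : (0:ℝ) < rexp (-((s+1)^2)/2) := Real.exp_pos _
  calc rexp (-4 * ℓ^4) ≤ rexp (-((s+1)^2)/2 - 2) := by
        apply Real.exp_le_exp.2
        rw [hs1]
        have h4 : (4:ℝ) ≤ ℓ^2 := by nlinarith
        have h5 : 4*ℓ^2 ≤ ℓ^4 := by nlinarith
        nlinarith
    _ = rexp (-((s+1)^2)/2) / rexp 2 := by rw [Real.exp_sub]
    _ ≤ rexp (-((s+1)^2)/2) / 6 := by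
        apply div_le_div_of_nonneg_left hE0.le (by norm_num) hexp6
    _ = 1/2 * (1/3 * rexp (-((s+1)^2)/2)) := by ring
    _ ≤ 1/2 * c := by
        rw [hc]
        apply mul_le_mul_of_nonneg_left _ (by norm_num)
        exact mul_le_mul_of_nonneg_right hinv hE0.le

open Real in
lemma wp_eventually_small :
    ∀ᶠ n : ℕ in atTop, (n:ℝ) * rexp (-(Real.log n)^2/2) ≤ 1/4 := by
  have ht1 : Tendsto (fun t : ℝ => t - t^2/2) atTop atBot := by
    apply tendsto_atBot_mono' atTop ?_ tendsto_neg_atTop_atBot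
    filter_upwards [eventually_ge_atTop (4:ℝ)] with t ht
    nlinarith
  have ht2 : Tendsto (fun t : ℝ => rexp (t - t^2/2)) atTop (𝓝 0) :=
    Real.tendsto_exp_atBot.comp ht1
  have ht3 : Tendsto (fun m : ℕ => rexp (Real.log m - (Real.log m)^2/2)) atTop (𝓝 0) :=
    ht2.comp (Real.tendsto_log_atTop.comp tendsto_natCast_atTop_atTop)
  have ht4 : ∀ᶠ m : ℕ in atTop, rexp (Real.log m - (Real.log m)^2/2) ≤ 1/4 :=
    ht3.eventually_le_const (by norm_num)
  filter_upwards [ht4, eventually_ge_atTop 1] with m h4 h1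
  have hm0 : (0:ℝ) < m := by exact_mod_cast h1
  calc (m:ℝ) * rexp (-(Real.log m)^2/2)
      = rexp (Real.log m) * rexp (-(Real.log m)^2/2) := by rw [Real.exp_log hm0]
    _ = rexp (Real.log m - (Real.log m)^2/2) := by rw [← Real.exp_add]; ring_nf
    _ ≤ 1/4 := h4

/-- With `α_n = √n / log n`, for all large `n`,
`ℙ(f_n > 0 on [√n + α_n, ∞)) ≥ exp(−4 (log n)⁴)`; in particular
`liminf (1/√n) log ℙ(f_n > 0 on [√n + α_n, ∞)) ≥ 0`. -/
theorem weyl_persistence_far_right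
    {Ω : Type*} [MeasurableSpace Ω] (P : Measure Ω) [IsProbabilityMeasure P]
    (a : ℕ → Ω → ℝ) (hmeas : ∀ i, Measurable (a i))
    (hindep : iIndepFun a P)
    (hgauss : ∀ i, Measure.map (a i) P = gaussianReal 0 1) :
    (∀ᶠ n : ℕ in atTop,
      Real.exp (-4 * (Real.log n) ^ 4) ≤
        (P {ω | ∀ x : ℝ, Real.sqrt n + Real.sqrt n / Real.log n ≤ x →
            0 < weylPoly a n ω x}).toReal) ∧
    0 ≤ Filter.liminf (fun n : ℕ =>
        (1 / Real.sqrt n) *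
          Real.log ((P {ω | ∀ x : ℝ,
              Real.sqrt n + Real.sqrt n / Real.log n ≤ x →
              0 < weylPoly a n ω x}).toReal)) atTop := by
  have he1 : ∀ᶠ n : ℕ in atTop, 2 ≤ Real.log n :=
    (Real.tendsto_log_atTop.comp tendsto_natCast_atTop_atTop).eventually_ge_atTop 2
  have hpart1 : ∀ᶠ n : ℕ in atTop,
      Real.exp (-4 * (Real.log n) ^ 4) ≤
        (P {ω | ∀ x : ℝ, Real.sqrt n + Real.sqrt n / Real.log n ≤ x →
            0 < weylPoly a n ω x}).toReal := by
    filter_upwards [he1, eventually_ge_atTop 1, wp_eventually_small] with n hl2 hn1 hsm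
    exact wp_prob_bound P a hmeas hindep hgauss n hn1 hl2 hsm
  refine ⟨hpart1, ?_⟩
  set q : ℕ → ℝ := fun n =>
    (P {ω | ∀ x : ℝ, Real.sqrt n + Real.sqrt n / Real.log n ≤ x →
        0 < weylPoly a n ω x}).toReal with hq
  set g : ℕ → ℝ := fun n => -4 * (Real.log n)^4 / Real.sqrt n with hg
  -- g tends to 0
  have hsqrt_top : Tendsto Real.sqrt atTop atTop := by
    rw [tendsto_atTop_atTop]
    intro b
    refine ⟨(max b 0)^2, fun x hx => ?_⟩
    have h0 : 0 ≤ max b 0 := le_max_right _ _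
    have h1 := Real.sqrt_le_sqrt hx
    rw [Real.sqrt_sq h0] at h1
    exact le_trans (le_max_left b 0) h1
  have hbase : Tendsto (fun y : ℝ => Real.log y ^ 4 / (1*y+0)) atTop (𝓝 0) :=
    Real.tendsto_pow_log_div_mul_add_atTop 1 0 4 one_ne_zero
  have hcomp : Tendsto (fun n : ℕ => Real.log (Real.sqrt n) ^ 4 / (1*Real.sqrt n+0)) atTop
      (𝓝 0) := hbase.comp (hsqrt_top.comp tendsto_natCast_atTop_atTop)
  have hg0 : Tendsto g atTop (𝓝 0) := by
    have hmul : Tendsto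
        (fun n : ℕ => -64 * (Real.log (Real.sqrt n) ^ 4 / (1*Real.sqrt n+0))) atTop
        (𝓝 (-64 * 0)) := hcomp.const_mul (-64)
    rw [mul_zero] at hmul
    apply hmul.congr'
    filter_upwards [eventually_ge_atTop 1] with n hn1
    have hn0 : (0:ℝ) ≤ n := by positivity
    rw [Real.log_sqrt hn0, hg]
    ring
  -- eventual lower bound for the liminf expression
  have hlow : ∀ᶠ n : ℕ in atTop, g n ≤ (1 / Real.sqrt n) * Real.log (q n) := by
    filter_upwards [hpart1, eventually_ge_atTop 1] with n hp hn1
    have hn0 : (0:ℝ) < n := by exact_mod_cast hn1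
    have hs0 : 0 < Real.sqrt n := Real.sqrt_pos.2 hn0
    have hlog : -4 * (Real.log n)^4 ≤ Real.log (q n) := by
      have h := Real.log_le_log (Real.exp_pos _) hp
      rwa [Real.log_exp] at h
    calc g n = (1 / Real.sqrt n) * (-4 * (Real.log n)^4) := by rw [hg]; ring
      _ ≤ (1 / Real.sqrt n) * Real.log (q n) :=
          mul_le_mul_of_nonneg_left hlog (by positivity)
  -- liminf comparison
  have hub : ∀ᶠ n : ℕ in atTop, (1 / Real.sqrt n) * Real.log (q n) ≤ 0 := by
    filter_upwards with n
    apply mul_nonpos_of_nonneg_of_nonpos (by positivity)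
    apply Real.log_nonpos ENNReal.toReal_nonneg
    exact ENNReal.toReal_le_of_le_ofReal zero_le_one (by simpa using prob_le_one (μ := P))
  have hcob : IsCoboundedUnder (· ≥ ·) atTop (fun n : ℕ => (1 / Real.sqrt (n:ℝ)) * Real.log (q n)) :=
    isCoboundedUnder_ge_of_eventually_le atTop hub
  have hbd : IsBoundedUnder (· ≥ ·) atTop g := hg0.isBoundedUnder_ge
  calc (0:ℝ) = liminf g atTop := hg0.liminf_eq.symm
    _ ≤ liminf (fun n : ℕ => (1 / Real.sqrt (n:ℝ)) * Real.log (q n)) atTop :=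
        liminf_le_liminf hlow hbd hcob
end

section
/- For all sufficiently large n ∈ ℕ and every real x ≥ √n + √n/log n, one has Σ_{i=0}^{n−1} x^i/√(i!) ≤ (log n) · x^n/√(n!). -/
open Filter Finset

/-- For all sufficiently large `n` and every `x ≥ √n + √n/log n`,
`∑_{i=0}^{n−1} xⁱ/√(i!) ≤ (log n) · xⁿ/√(n!)`. -/
theorem weyl_tail_sum_bound :
    ∀ᶠ n : ℕ in atTop, ∀ x : ℝ,
      Real.sqrt n + Real.sqrt n / Real.log n ≤ x →
      ∑ i ∈ Finset.range n, x ^ i / Real.sqrt (Nat.factorial i) ≤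
        Real.log n * (x ^ n / Real.sqrt (Nat.factorial n)) := by
  filter_upwards [eventually_ge_atTop 3] with n hn x hx
  have hn3 : (3 : ℝ) ≤ n := by exact_mod_cast hn
  have hnpos : (0 : ℝ) < n := by linarith
  set L := Real.log n with hLdef
  have hL1 : 1 ≤ L := by
    rw [hLdef, Real.le_log_iff_exp_le hnpos]
    have := Real.exp_one_lt_d9
    linarith
  have hLpos : 0 < L := by linarith
  have hL1pos : 0 < L + 1 := by linarith
  set r : ℝ := L / (L + 1) with hrdef
  have hr0 : 0 ≤ r := by positivity
  have hr1 : r < 1 := by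
    rw [hrdef, div_lt_one hL1pos]; linarith
  have hsn : 0 < Real.sqrt n := Real.sqrt_pos.mpr hnpos
  have hx0 : 0 < x := by
    have h1 : 0 ≤ Real.sqrt n / L := by positivity
    linarith
  -- key inequality: √n ≤ x * r
  have hkey : Real.sqrt n ≤ x * r := by
    have h1 : Real.sqrt n * L + Real.sqrt n ≤ x * L := by
      have h2 := mul_le_mul_of_nonneg_right hx hLpos.le
      have h3 : (Real.sqrt n + Real.sqrt n / L) * L = Real.sqrt n * L + Real.sqrt n := by
        field_simp
      linarith [h3 ▸ h2]
    rw [hrdef, ← mul_div_assoc, le_div_iff₀ hL1pos]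
    nlinarith
  set t : ℕ → ℝ := fun i => x ^ i / Real.sqrt (Nat.factorial i) with htdef
  have ht0 : ∀ i, 0 ≤ t i := by
    intro i
    simp only [htdef]
    positivity
  have hstep : ∀ m, m + 1 ≤ n → t m ≤ r * t (m + 1) := by
    intro m hm
    have hfact : Real.sqrt (Nat.factorial (m + 1)) =
        Real.sqrt ((m : ℝ) + 1) * Real.sqrt (Nat.factorial m) := by
      rw [Nat.factorial_succ]
      push_cast
      rw [Real.sqrt_mul (by positivity)]
    have hfm : (0 : ℝ) < Real.sqrt (Nat.factorial m) := by
      apply Real.sqrt_pos.mpr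
      exact_mod_cast Nat.factorial_pos m
    have hm1 : (0 : ℝ) < Real.sqrt ((m : ℝ) + 1) := by positivity
    have heq : t m * x = t (m + 1) * Real.sqrt ((m : ℝ) + 1) := by
      simp only [htdef, hfact, pow_succ]
      field_simp
    have hle : Real.sqrt ((m : ℝ) + 1) ≤ Real.sqrt n := by
      apply Real.sqrt_le_sqrt
      exact_mod_cast hm
    have ht1 : 0 ≤ t (m + 1) := ht0 _
    have hmain : t m * x ≤ r * t (m + 1) * x := by
      rw [heq]
      calc t (m + 1) * Real.sqrt ((m : ℝ) + 1)
          ≤ t (m + 1) * Real.sqrt n := by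
            exact mul_le_mul_of_nonneg_left hle ht1
        _ ≤ t (m + 1) * (x * r) := mul_le_mul_of_nonneg_left hkey ht1
        _ = r * t (m + 1) * x := by ring
    exact le_of_mul_le_mul_right hmain hx0
  have hclaim : ∀ k, k ≤ n → t (n - k) ≤ t n * r ^ k := by
    intro k
    induction k with
    | zero => intro _; simp
    | succ k ih =>
      intro hk
      have hk' : k ≤ n := Nat.le_of_succ_le hk
      have h1 : n - (k + 1) + 1 = n - k := by omega
      have h2 := hstep (n - (k + 1)) (by omega)
      rw [h1] at h2
      calc t (n - (k + 1)) ≤ r * t (n - k) := h2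
        _ ≤ r * (t n * r ^ k) := mul_le_mul_of_nonneg_left (ih hk') hr0
        _ = t n * r ^ (k + 1) := by ring
  have htn : 0 ≤ t n := ht0 n
  -- geometric sum bound
  have hgeom : ∑ k ∈ range n, r ^ k ≤ (1 - r)⁻¹ := by
    rcases eq_or_lt_of_le hr0 with h | h
    · simp only [← h]
      rcases Nat.eq_zero_or_pos n with h0 | h0
      · simp [h0]
      · rw [Finset.sum_eq_single 0]
        · simp
        · intro b _ hb; exact zero_pow hb
        · intro hb; exact absurd (Finset.mem_range.mpr h0) hb
    · have h1r : (0:ℝ) < 1 - r := by linarith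
      have hrn : 0 < r ^ n := pow_pos h n
      rw [geom_sum_eq (ne_of_lt hr1)]
      have heq2 : (r ^ n - 1) / (r - 1) = (1 - r ^ n) / (1 - r) := by
        rw [div_eq_div_iff (by linarith) (by linarith)]; ring
      rw [heq2, div_le_iff₀ h1r, inv_mul_cancel₀ (ne_of_gt h1r)]
      linarith
  have hchain :
      ∑ i ∈ range n, t i ≤ t n * L := by
    calc ∑ i ∈ range n, t i
        ≤ ∑ i ∈ range n, t n * r ^ (n - i) := by
          apply Finset.sum_le_sum
          intro i hi
          have hi' := Finset.mem_range.mp hi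
          have h := hclaim (n - i) (Nat.sub_le _ _)
          rwa [Nat.sub_sub_self hi'.le] at h
      _ = t n * ∑ i ∈ range n, r ^ (n - i) := by rw [Finset.mul_sum]
      _ = t n * ∑ k ∈ range n, r ^ (k + 1) := by
          congr 1
          rw [← Finset.sum_range_reflect (fun k => r ^ (k + 1)) n]
          apply Finset.sum_congr rfl
          intro i hi
          have hi' := Finset.mem_range.mp hi
          congr 1
          omega
      _ = t n * (r * ∑ k ∈ range n, r ^ k) := by
          congr 1
          rw [Finset.mul_sum]
          apply Finset.sum_congr rfl
          intro i _
          ring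
      _ ≤ t n * (r * (1 - r)⁻¹) := by
          apply mul_le_mul_of_nonneg_left _ htn
          exact mul_le_mul_of_nonneg_left hgeom hr0
      _ = t n * L := by
          congr 1
          rw [hrdef]
          have : (1 : ℝ) - L / (L + 1) = 1 / (L + 1) := by field_simp; ring
          rw [this]
          field_simp
  exact hchain.trans_eq (by ring)
end

section
/- There exists a constant Δ > 0 such that for all sufficiently large n ∈ ℕ and all real x with √n − α_n ≤ x ≤ √n, one has 2Δ² · Σ_{i=0}^n ( i/x − x )² x^{2i}/i! ≤ Σ_{i=0}^n x^{2i}/i!. (Equivalently, writing g_n(x) = e^{−x²/2} f_n(x) for the rescaled Weyl polynomial, 2Δ² · E[g_n'(x)²] ≤ E[g_n(x)²] on this interval.) -/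
open Filter Finset

lemma weyl_key (x : ℝ) (hx : x ≠ 0) : ∀ m : ℕ,
    ∑ i ∈ Finset.range (m + 2), ((i : ℝ) / x - x) ^ 2 * x ^ (2 * i) / (Nat.factorial i)
      = ∑ i ∈ Finset.range (m + 2), x ^ (2 * i) / (Nat.factorial i)
        + (x ^ 2 - 1) * x ^ (2 * (m + 1)) / (Nat.factorial (m + 1))
        - x ^ 2 * x ^ (2 * m) / (Nat.factorial m) := by
  intro m
  induction m with
  | zero =>
    norm_num [Finset.sum_range_succ, Nat.factorial]
    field_simp
    ring
  | succ k ih =>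
    have hr : k + 1 + 2 = (k + 2) + 1 := rfl
    rw [hr, Finset.sum_range_succ, Finset.sum_range_succ
      (f := fun i => x ^ (2 * i) / (Nat.factorial i : ℝ)), ih]
    set S := ∑ i ∈ Finset.range (k + 2), x ^ (2 * i) / (Nat.factorial i : ℝ) with hS
    have h1 : (Nat.factorial (k + 1) : ℝ) ≠ 0 := by positivity
    have h3 : (Nat.factorial k : ℝ) ≠ 0 := by positivity
    have hf2 : (Nat.factorial (k + 2) : ℝ) = (k + 2) * Nat.factorial (k + 1) := by
      rw [Nat.factorial_succ]; push_cast; ring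
    have hf1 : (Nat.factorial (k + 1) : ℝ) = (k + 1) * Nat.factorial k := by
      rw [Nat.factorial_succ]; push_cast; ring
    rw [hf2, hf1]
    push_cast
    field_simp
    ring

/-- There is `Δ > 0` such that for all large `n` and all `x ∈ [√n − √n/log n, √n]`,
`2Δ² ∑_{i=0}^n (i/x − x)² x^{2i}/i! ≤ ∑_{i=0}^n x^{2i}/i!`, i.e.
`2Δ² E[g_n'(x)²] ≤ E[g_n(x)²]` for `g_n(x) = e^{−x²/2} f_n(x)`. -/
theorem weyl_variance_comparison_left :
    ∃ Δ : ℝ, 0 < Δ ∧ ∀ᶠ n : ℕ in atTop, ∀ x : ℝ,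
      Real.sqrt n - Real.sqrt n / Real.log n ≤ x → x ≤ Real.sqrt n →
      2 * Δ ^ 2 *
          ∑ i ∈ Finset.range (n + 1),
            ((i : ℝ) / x - x) ^ 2 * x ^ (2 * i) / (Nat.factorial i) ≤
        ∑ i ∈ Finset.range (n + 1), x ^ (2 * i) / (Nat.factorial i) := by
  refine ⟨1 / 2, by norm_num, ?_⟩
  filter_upwards [eventually_ge_atTop 3] with n hn x hx1 hx2
  -- x > 0
  have hn1 : (1 : ℝ) ≤ (n : ℝ) := by exact_mod_cast Nat.one_le_of_lt (show 1 < n by omega)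
  have hsq : (0 : ℝ) < Real.sqrt n := Real.sqrt_pos.2 (by positivity)
  have hlog : 1 < Real.log n := by
    have : (3 : ℝ) ≤ (n : ℝ) := by exact_mod_cast hn
    have h3 : Real.exp 1 < 3 := by
      have := Real.exp_one_lt_d9; linarith
    calc 1 < Real.log 3 := (Real.lt_log_iff_exp_lt (by norm_num)).2 (by simpa using h3)
      _ ≤ Real.log n := Real.log_le_log (by norm_num) this
  have hxpos : 0 < x := by
    have : Real.sqrt n / Real.log n < Real.sqrt n :=
      div_lt_self hsq hlog
    linarith
  have hx0 : x ≠ 0 := ne_of_gt hxpos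
  -- x^2 ≤ n
  have hx2n : x ^ 2 ≤ (n : ℝ) := by
    have := pow_le_pow_left₀ (le_of_lt hxpos) hx2 2
    rwa [Real.sq_sqrt (by positivity : (0:ℝ) ≤ (n:ℝ))] at this
  -- write n = m + 1
  obtain ⟨m, rfl⟩ : ∃ m, n = m + 1 := ⟨n - 1, by omega⟩
  have key := weyl_key x hx0 m
  have hcorr : (x ^ 2 - 1) * x ^ (2 * (m + 1)) / (Nat.factorial (m + 1))
      - x ^ 2 * x ^ (2 * m) / (Nat.factorial m) ≤ 0 := by
    have hf1 : (Nat.factorial (m + 1) : ℝ) = (m + 1) * Nat.factorial m := by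
      rw [Nat.factorial_succ]; push_cast; ring
    have hfm : (0 : ℝ) < Nat.factorial m := by positivity
    have hxm : (0 : ℝ) < x ^ (2 * m) := by positivity
    have hle : x ^ 2 - 1 ≤ (m : ℝ) + 1 := by push_cast at hx2n ⊢; linarith
    rw [sub_nonpos, hf1, div_le_div_iff₀ (by positivity) hfm]
    have h2m1 : x ^ (2 * (m + 1)) = x ^ (2 * m) * x ^ 2 := by ring
    rw [h2m1]
    have hP : (0:ℝ) < x ^ (2 * m) * x ^ 2 * Nat.factorial m :=
      by positivity
    nlinarith [mul_le_mul_of_nonneg_right hle hP.le]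
  have hA : ∑ i ∈ Finset.range (m + 1 + 1),
      ((i : ℝ) / x - x) ^ 2 * x ^ (2 * i) / (Nat.factorial i)
      ≤ ∑ i ∈ Finset.range (m + 1 + 1), x ^ (2 * i) / (Nat.factorial i) := by
    rw [show m + 1 + 1 = m + 2 from rfl, key]; linarith
  have hApos : (0 : ℝ) ≤ ∑ i ∈ Finset.range (m + 1 + 1),
      ((i : ℝ) / x - x) ^ 2 * x ^ (2 * i) / (Nat.factorial i) := by
    apply Finset.sum_nonneg
    intro i _
    have : (0:ℝ) ≤ x ^ (2 * i) := by positivity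
    positivity
  nlinarith [hA, hApos]
end

section
/- For all sufficiently large n ∈ ℕ and all real x with √n − α_n ≤ x ≤ √n, setting k = ⌊x²⌋, one has Σ_{i=0}^n x^{2i}/i! ≥ (x^{2k}/k!) · (⌊√k⌋ + 1)/3. -/
open Filter Finset

lemma exp_2120_le : Real.exp (21/20) ≤ 3 := by
  have h20 : Real.exp (21/20) ^ (20:ℕ) = Real.exp 21 := by
    rw [← Real.exp_nat_mul]; norm_num
  have h21 : Real.exp 21 = Real.exp 1 ^ (21:ℕ) := by
    rw [← Real.exp_nat_mul]; norm_num
  have he : Real.exp 1 ≤ 2.7182818286 := le_of_lt Real.exp_one_lt_d9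
  have hpow : Real.exp (21/20) ^ (20:ℕ) ≤ 3 ^ (20:ℕ) := by
    rw [h20, h21]
    calc Real.exp 1 ^ 21 ≤ 2.7182818286 ^ 21 :=
          pow_le_pow_left₀ (Real.exp_pos 1).le he 21
      _ ≤ 3 ^ 20 := by norm_num
  exact le_of_pow_le_pow_left₀ (by norm_num) (by norm_num) hpow

/-- For all large `n` and all `x ∈ [√n − √n/log n, √n]`, with `k = ⌊x²⌋`,
`∑_{i=0}^n x^{2i}/i! ≥ (x^{2k}/k!) (⌊√k⌋ + 1)/3`. -/
theorem weyl_variance_lower_bound_left :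
    ∀ᶠ n : ℕ in atTop, ∀ x : ℝ,
      Real.sqrt n - Real.sqrt n / Real.log n ≤ x → x ≤ Real.sqrt n →
      (x ^ (2 * ⌊x ^ 2⌋₊) / (Nat.factorial ⌊x ^ 2⌋₊)) *
          ((Nat.sqrt ⌊x ^ 2⌋₊ + 1 : ℕ) / 3 : ℝ) ≤
        ∑ i ∈ Finset.range (n + 1), x ^ (2 * i) / (Nat.factorial i) := by
  filter_upwards [eventually_ge_atTop 1764] with n hn
  intro x hlo hhi
  have hn0 : (0:ℝ) < n := by
    have : (1764:ℝ) ≤ n := by exact_mod_cast hn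
    linarith
  have hlog : (2:ℝ) ≤ Real.log n := by
    rw [Real.le_log_iff_exp_le hn0]
    have h2 : Real.exp 2 = Real.exp 1 ^ (2:ℕ) := by
      rw [← Real.exp_nat_mul]; norm_num
    have he : Real.exp 1 ≤ 2.7182818286 := le_of_lt Real.exp_one_lt_d9
    have : (1764:ℝ) ≤ n := by exact_mod_cast hn
    nlinarith [Real.exp_pos 1]
  have hsq : (42:ℝ) ≤ Real.sqrt n := by
    have h1 : Real.sqrt 1764 ≤ Real.sqrt n := Real.sqrt_le_sqrt (by exact_mod_cast hn)
    rwa [show (1764:ℝ) = 42^2 by norm_num, Real.sqrt_sq (by norm_num)] at h1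
  have hx21 : (21:ℝ) ≤ x := by
    have h1 : Real.sqrt n / Real.log n ≤ Real.sqrt n / 2 :=
      div_le_div_of_nonneg_left (Real.sqrt_nonneg n) (by norm_num) hlog
    linarith
  have hx0 : (0:ℝ) < x := by linarith
  set k := ⌊x^2⌋₊ with hkdef
  have hkx : (k:ℝ) ≤ x^2 := Nat.floor_le (by positivity)
  have hxk1 : x^2 < (k:ℝ) + 1 := Nat.lt_floor_add_one _
  have hk441 : 441 ≤ k := by
    apply Nat.le_floor
    push_cast
    nlinarith
  set m := Nat.sqrt k with hmdef
  have hm2 : m * m ≤ k := Nat.sqrt_le k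
  have hm21 : 21 ≤ m := Nat.le_sqrt.mpr (by omega)
  have hmk : m ≤ k := Nat.sqrt_le_self k
  have hkn : k ≤ n := by
    have hxn : x^2 ≤ (n:ℝ) := by
      have h1 : Real.sqrt n ^ 2 = (n:ℝ) := Real.sq_sqrt hn0.le
      nlinarith [Real.sqrt_nonneg n]
    calc k ≤ ⌊(n:ℝ)⌋₊ := Nat.floor_le_floor hxn
      _ = n := Nat.floor_natCast n
  -- key ratio bound
  have hkm1 : (0:ℝ) < (k:ℝ) + 1 - m := by
    have : (m:ℝ) ≤ k := by exact_mod_cast hmk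
    linarith
  have hratio : ((k:ℝ) + 1) ^ m ≤ 3 * ((k:ℝ) + 1 - m) ^ m := by
    have ht0 : (0:ℝ) ≤ (m:ℝ) / ((k:ℝ) + 1 - m) := by positivity
    have hc : ((k:ℝ) + 1) / ((k:ℝ) + 1 - m) = 1 + (m:ℝ) / ((k:ℝ) + 1 - m) := by
      field_simp; ring
    have h1t : 1 + (m:ℝ) / ((k:ℝ) + 1 - m) ≤ Real.exp ((m:ℝ) / ((k:ℝ) + 1 - m)) := by
      have := Real.add_one_le_exp ((m:ℝ) / ((k:ℝ) + 1 - m)); linarith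
    have htm : (m:ℝ) * ((m:ℝ) / ((k:ℝ) + 1 - m)) ≤ 21/20 := by
      rw [← mul_div_assoc, div_le_iff₀ hkm1]
      have h21m : 21 * m ≤ k := le_trans (Nat.mul_le_mul_right m hm21) hm2
      have h21m' : (21:ℝ) * m ≤ k := by exact_mod_cast h21m
      have hm2' : (m:ℝ) * m ≤ k := by exact_mod_cast hm2
      nlinarith
    have hexp : Real.exp ((m:ℝ) / ((k:ℝ) + 1 - m)) ^ m
        = Real.exp ((m:ℝ) * ((m:ℝ) / ((k:ℝ) + 1 - m))) :=
      (Real.exp_nat_mul _ m).symm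
    have h3 : (((k:ℝ) + 1) / ((k:ℝ) + 1 - m)) ^ m ≤ 3 := by
      rw [hc]
      calc (1 + (m:ℝ) / ((k:ℝ) + 1 - m)) ^ m
          ≤ Real.exp ((m:ℝ) / ((k:ℝ) + 1 - m)) ^ m :=
            pow_le_pow_left₀ (by linarith) h1t m
        _ = Real.exp ((m:ℝ) * ((m:ℝ) / ((k:ℝ) + 1 - m))) := hexp
        _ ≤ Real.exp (21/20) := Real.exp_le_exp.mpr htm
        _ ≤ 3 := exp_2120_le
    calc ((k:ℝ) + 1) ^ m
        = (((k:ℝ) + 1) / ((k:ℝ) + 1 - m)) ^ m * ((k:ℝ) + 1 - m) ^ m := by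
          rw [← mul_pow, div_mul_cancel₀ _ (ne_of_gt hkm1)]
      _ ≤ 3 * ((k:ℝ) + 1 - m) ^ m :=
          mul_le_mul_of_nonneg_right h3 (by positivity)
  -- per-term bound
  have key : ∀ i ∈ Finset.Icc (k - m) k,
      x ^ (2*k) / (Nat.factorial k : ℝ) * (1/3) ≤ x ^ (2*i) / (Nat.factorial i : ℝ) := by
    intro i hi
    obtain ⟨hi1, hi2⟩ := Finset.mem_Icc.mp hi
    set d := k - i with hddef
    have hdm : d ≤ m := by omega
    have hid : i + d = k := by omega
    have hfact : (Nat.factorial k : ℝ) =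
        (Nat.factorial i : ℝ) * (Nat.descFactorial k d : ℝ) := by
      have := Nat.factorial_mul_descFactorial (show d ≤ k by omega)
      have h2 : k - d = i := by omega
      rw [h2] at this
      exact_mod_cast (by rw [← this] : (Nat.factorial k) = Nat.factorial i * Nat.descFactorial k d)
    -- descFactorial lower bound
    have hdesc : ((k:ℝ) + 1 - m) ^ d ≤ (Nat.descFactorial k d : ℝ) := by
      have h1 : (k + 1 - m) ^ d ≤ (k + 1 - d) ^ d :=
        Nat.pow_le_pow_left (by omega) d
      have h2 : (k + 1 - d) ^ d ≤ Nat.descFactorial k d := Nat.pow_sub_le_descFactorial k d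
      have h3 : ((k + 1 - m : ℕ) : ℝ) = (k:ℝ) + 1 - m := by
        have : m ≤ k + 1 := by omega
        push_cast [this]; ring
      calc ((k:ℝ) + 1 - m) ^ d = ((k + 1 - m : ℕ) : ℝ) ^ d := by rw [h3]
        _ ≤ ((Nat.descFactorial k d : ℕ) : ℝ) := by exact_mod_cast le_trans h1 h2
    -- d-power ratio
    have hrd : ((k:ℝ) + 1) ^ d ≤ 3 * ((k:ℝ) + 1 - m) ^ d := by
      have hge1 : (1:ℝ) ≤ ((k:ℝ) + 1) / ((k:ℝ) + 1 - m) := by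
        rw [le_div_iff₀ hkm1]
        have : (0:ℝ) ≤ m := by positivity
        linarith
      have hpr : ∀ j : ℕ, ((k:ℝ) + 1) ^ j = (((k:ℝ)+1)/((k:ℝ)+1-m)) ^ j * ((k:ℝ)+1-m) ^ j := by
        intro j
        rw [← mul_pow, div_mul_cancel₀]
        exact ne_of_gt hkm1
      have hmono : (((k:ℝ)+1)/((k:ℝ)+1-m)) ^ d ≤ (((k:ℝ)+1)/((k:ℝ)+1-m)) ^ m :=
        pow_le_pow_right₀ hge1 hdm
      have h3d : (((k:ℝ)+1)/((k:ℝ)+1-m)) ^ m ≤ 3 := by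
        rw [div_pow, div_le_iff₀ (by positivity)]
        calc ((k:ℝ)+1)^m ≤ 3 * ((k:ℝ)+1-m)^m := hratio
          _ = 3 * ((k:ℝ)+1-m)^m := rfl
      have hd1 : (((k:ℝ)+1)/((k:ℝ)+1-m)) ^ d ≤ 3 := le_trans hmono h3d
      calc ((k:ℝ) + 1) ^ d = (((k:ℝ)+1)/((k:ℝ)+1-m)) ^ d * ((k:ℝ)+1-m) ^ d := hpr d
        _ ≤ 3 * ((k:ℝ)+1-m) ^ d :=
            mul_le_mul_of_nonneg_right hd1 (by positivity)
    have hA : (x^2) ^ d ≤ ((k:ℝ) + 1) ^ d := pow_le_pow_left₀ (by positivity) hxk1.le d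
    have hmain : (x^2) ^ d ≤ 3 * (Nat.descFactorial k d : ℝ) := by
      calc (x^2)^d ≤ ((k:ℝ)+1)^d := hA
        _ ≤ 3 * ((k:ℝ)+1-m)^d := hrd
        _ ≤ 3 * (Nat.descFactorial k d : ℝ) := by linarith [hdesc]
    -- combine
    have hxk : x ^ (2*k) = x ^ (2*i) * (x^2) ^ d := by
      rw [← pow_mul, ← pow_add]
      congr 1
      omega
    have hip : (0:ℝ) < (Nat.factorial i : ℝ) := by exact_mod_cast i.factorial_pos
    have hkp : (0:ℝ) < (Nat.factorial k : ℝ) := by exact_mod_cast k.factorial_pos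
    have hxip : (0:ℝ) < x ^ (2*i) := by positivity
    have hDp : (0:ℝ) < (Nat.descFactorial k d : ℝ) := by
      have h0 : (0:ℝ) < ((k:ℝ)+1-m)^d := by positivity
      have h1 : ((k:ℝ)+1-m)^d ≤ (Nat.descFactorial k d : ℝ) := hdesc
      linarith
    rw [hxk, hfact, div_mul_eq_mul_div, div_le_div_iff₀ (mul_pos hip hDp) hip]
    nlinarith [mul_le_mul_of_nonneg_left hmain (mul_nonneg hxip.le hip.le)]
  -- sum over the window
  have hsub : Finset.Icc (k - m) k ⊆ Finset.range (n + 1) := by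
    intro i hi
    rw [Finset.mem_range]
    have := (Finset.mem_Icc.mp hi).2
    omega
  have hcard : (Finset.Icc (k - m) k).card = m + 1 := by
    rw [Nat.card_Icc]; omega
  have hnonneg : ∀ i ∈ Finset.range (n + 1), i ∉ Finset.Icc (k - m) k →
      (0:ℝ) ≤ x ^ (2*i) / (Nat.factorial i : ℝ) := by
    intro i _ _
    positivity
  calc x ^ (2*k) / (Nat.factorial k : ℝ) * (((m + 1 : ℕ) : ℝ) / 3)
      = ∑ _i ∈ Finset.Icc (k - m) k, x ^ (2*k) / (Nat.factorial k : ℝ) * (1/3) := by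
        rw [Finset.sum_const, hcard, nsmul_eq_mul]
        push_cast
        ring
    _ ≤ ∑ i ∈ Finset.Icc (k - m) k, x ^ (2*i) / (Nat.factorial i : ℝ) :=
        Finset.sum_le_sum key
    _ ≤ ∑ i ∈ Finset.range (n + 1), x ^ (2*i) / (Nat.factorial i : ℝ) :=
        Finset.sum_le_sum_of_subset_of_nonneg hsub hnonneg
end

section
/- There exists a constant C > 0 such that for all sufficiently large n ∈ ℕ and all real x with √n − α_n ≤ x ≤ √n, setting k = ⌊x²⌋, one has Σ_{i=0}^n ( (i − x²)/x )² x^{2i}/i! ≤ C · (x^{2k}/k!) · n^{3/2}. -/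
open Filter Finset

/-- step up: if `b+1 ≤ t` then `t^b/b! ≤ t^(b+1)/(b+1)!`. -/
lemma pow_div_fact_step_up (t : ℝ) (ht : 0 ≤ t) (b : ℕ) (h : (b : ℝ) + 1 ≤ t) :
    t ^ b / (Nat.factorial b) ≤ t ^ (b + 1) / (Nat.factorial (b + 1)) := by
  have hb : (0 : ℝ) < (Nat.factorial b : ℝ) := by exact_mod_cast Nat.factorial_pos b
  have heq : t ^ (b + 1) / (Nat.factorial (b + 1) : ℝ)
      = t ^ b / (Nat.factorial b) * (t / ((b : ℝ) + 1)) := by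
    rw [Nat.factorial_succ]
    push_cast
    field_simp
    ring
  rw [heq]
  have h1 : (1 : ℝ) ≤ t / ((b : ℝ) + 1) := by
    rw [le_div_iff₀ (by positivity)]
    linarith
  have h0 : 0 ≤ t ^ b / (Nat.factorial b : ℝ) := by positivity
  nlinarith

/-- step down: if `t ≤ b+1` then `t^(b+1)/(b+1)! ≤ t^b/b!`. -/
lemma pow_div_fact_step_down (t : ℝ) (ht : 0 ≤ t) (b : ℕ) (h : t ≤ (b : ℝ) + 1) :
    t ^ (b + 1) / (Nat.factorial (b + 1)) ≤ t ^ b / (Nat.factorial b) := by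
  have hb : (0 : ℝ) < (Nat.factorial b : ℝ) := by exact_mod_cast Nat.factorial_pos b
  have heq : t ^ (b + 1) / (Nat.factorial (b + 1) : ℝ)
      = t ^ b / (Nat.factorial b) * (t / ((b : ℝ) + 1)) := by
    rw [Nat.factorial_succ]
    push_cast
    field_simp
    ring
  rw [heq]
  have h1 : t / ((b : ℝ) + 1) ≤ 1 := by
    rw [div_le_one (by positivity)]
    linarith
  have h0 : 0 ≤ t ^ b / (Nat.factorial b : ℝ) := by positivity
  nlinarith

lemma pow_div_fact_mono_up (t : ℝ) (ht : 0 ≤ t) :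
    ∀ b a : ℕ, a ≤ b → (b : ℝ) ≤ t →
      t ^ a / (Nat.factorial a) ≤ t ^ b / (Nat.factorial b) := by
  intro b
  induction b with
  | zero => intro a ha _; interval_cases a; simp
  | succ b ih =>
    intro a ha hbt
    rcases Nat.lt_or_ge a (b + 1) with h | h
    · have ha' : a ≤ b := Nat.lt_succ_iff.mp h
      have h1 : (b : ℝ) ≤ t := by
        have : (b : ℝ) ≤ (b : ℝ) + 1 := by linarith
        push_cast at hbt; linarith
      refine (ih a ha' h1).trans ?_
      exact pow_div_fact_step_up t ht b (by push_cast at hbt ⊢; linarith)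
    · have : a = b + 1 := le_antisymm ha h
      subst this; rfl

lemma pow_div_fact_anti (t : ℝ) (ht : 0 ≤ t) :
    ∀ b a : ℕ, a ≤ b → t ≤ (a : ℝ) + 1 →
      t ^ b / (Nat.factorial b) ≤ t ^ a / (Nat.factorial a) := by
  intro b
  induction b with
  | zero => intro a ha _; interval_cases a; simp
  | succ b ih =>
    intro a ha hat
    rcases Nat.lt_or_ge a (b + 1) with h | h
    · have ha' : a ≤ b := Nat.lt_succ_iff.mp h
      refine le_trans ?_ (ih a ha' hat)
      refine pow_div_fact_step_down t ht b ?_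
      have : (a : ℝ) ≤ (b : ℝ) := by exact_mod_cast ha'
      linarith
    · have : a = b + 1 := le_antisymm ha h
      subst this; rfl

/-- unimodality: the max of `t^i/i!` over `i` is at `i = ⌊t⌋₊`. -/
lemma pow_div_fact_le_floor (t : ℝ) (ht : 0 ≤ t) (i : ℕ) :
    t ^ i / (Nat.factorial i) ≤ t ^ ⌊t⌋₊ / (Nat.factorial ⌊t⌋₊) := by
  rcases le_or_gt i ⌊t⌋₊ with h | h
  · exact pow_div_fact_mono_up t ht ⌊t⌋₊ i h (Nat.floor_le ht)
  · exact pow_div_fact_anti t ht i ⌊t⌋₊ h.le (Nat.lt_floor_add_one t).le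

/-- Poisson-type variance identity for partial sums. -/
lemma var_identity (t : ℝ) :
    ∀ n : ℕ, ∑ i ∈ Finset.range (n + 1), ((i : ℝ) - t) ^ 2 * t ^ i / (Nat.factorial i)
      = t * ∑ i ∈ Finset.range n, t ^ i / (Nat.factorial i)
        + t ^ (n + 1) * (t - n) / (Nat.factorial n) := by
  intro n
  induction n with
  | zero => simp; ring
  | succ n ih =>
    rw [Finset.sum_range_succ, ih, Finset.sum_range_succ (f := fun i => t ^ i / (Nat.factorial i))]
    have hn : (0 : ℝ) < (Nat.factorial n : ℝ) := by exact_mod_cast Nat.factorial_pos n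
    have hn1 : (0 : ℝ) < (Nat.factorial (n + 1) : ℝ) := by exact_mod_cast Nat.factorial_pos (n + 1)
    have hfact : (Nat.factorial (n + 1) : ℝ) = ((n : ℝ) + 1) * (Nat.factorial n) := by
      rw [Nat.factorial_succ]; push_cast; ring
    push_cast
    rw [hfact]
    field_simp
    ring

/-- There is `C > 0` such that for all large `n` and all `x ∈ [√n − √n/log n, √n]`,
with `k = ⌊x²⌋`, `∑_{i=0}^n ((i − x²)/x)² x^{2i}/i! ≤ C (x^{2k}/k!) n^{3/2}`. -/
theorem weyl_derivative_variance_upper_bound_left :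
    ∃ C : ℝ, 0 < C ∧ ∀ᶠ n : ℕ in atTop, ∀ x : ℝ,
      Real.sqrt n - Real.sqrt n / Real.log n ≤ x → x ≤ Real.sqrt n →
      ∑ i ∈ Finset.range (n + 1),
          (((i : ℝ) - x ^ 2) / x) ^ 2 * x ^ (2 * i) / (Nat.factorial i) ≤
        C * (x ^ (2 * ⌊x ^ 2⌋₊) / (Nat.factorial ⌊x ^ 2⌋₊)) *
          (n : ℝ) ^ ((3 : ℝ) / 2) := by
  refine ⟨1, one_pos, ?_⟩
  filter_upwards [eventually_ge_atTop 3] with n hn x hx1 hx2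
  have hn3 : (3 : ℝ) ≤ (n : ℝ) := by exact_mod_cast hn
  have hn0 : (0 : ℝ) < (n : ℝ) := by linarith
  have hlog : 1 < Real.log n := by
    rw [show (1 : ℝ) = Real.log (Real.exp 1) by rw [Real.log_exp]]
    apply Real.log_lt_log (Real.exp_pos 1)
    have := Real.exp_one_lt_d9
    linarith
  have hsq : (0 : ℝ) < Real.sqrt n := Real.sqrt_pos.mpr hn0
  have hx0 : 0 < x := by
    have : Real.sqrt n / Real.log n < Real.sqrt n := div_lt_self hsq hlog
    linarith
  set t : ℝ := x ^ 2 with htdef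
  have ht0 : 0 < t := by positivity
  have htn : t ≤ (n : ℝ) := by
    have : x ^ 2 ≤ (Real.sqrt n) ^ 2 := pow_le_pow_left₀ hx0.le hx2 2
    rwa [Real.sq_sqrt hn0.le] at this
  set k : ℕ := ⌊t⌋₊ with hkdef
  -- rewrite the sum
  have hsum : ∑ i ∈ Finset.range (n + 1),
      (((i : ℝ) - x ^ 2) / x) ^ 2 * x ^ (2 * i) / (Nat.factorial i)
      = (∑ i ∈ Finset.range (n + 1), ((i : ℝ) - t) ^ 2 * t ^ i / (Nat.factorial i)) / t := by
    rw [Finset.sum_div]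
    refine Finset.sum_congr rfl fun i _ => ?_
    have hfi : (0 : ℝ) < (Nat.factorial i : ℝ) := by exact_mod_cast Nat.factorial_pos i
    rw [pow_mul, div_pow, ← htdef]
    ring
  rw [hsum]
  have hA : ∑ i ∈ Finset.range (n + 1), ((i : ℝ) - t) ^ 2 * t ^ i / (Nat.factorial i)
      ≤ t * ∑ i ∈ Finset.range n, t ^ i / (Nat.factorial i) := by
    rw [var_identity t n]
    have hfn : (0 : ℝ) < (Nat.factorial n : ℝ) := by exact_mod_cast Nat.factorial_pos n
    have : t ^ (n + 1) * (t - n) / (Nat.factorial n) ≤ 0 := by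
      apply div_nonpos_of_nonpos_of_nonneg
      · exact mul_nonpos_of_nonneg_of_nonpos (by positivity) (by linarith)
      · exact hfn.le
    linarith
  have hE : ∑ i ∈ Finset.range n, t ^ i / (Nat.factorial i)
      ≤ (n : ℝ) * (t ^ k / (Nat.factorial k)) := by
    calc ∑ i ∈ Finset.range n, t ^ i / (Nat.factorial i)
        ≤ ∑ _i ∈ Finset.range n, t ^ k / (Nat.factorial k) :=
          Finset.sum_le_sum fun i _ => pow_div_fact_le_floor t ht0.le i
      _ = (n : ℝ) * (t ^ k / (Nat.factorial k)) := by
          rw [Finset.sum_const, Finset.card_range, nsmul_eq_mul]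
  have huk : (0 : ℝ) ≤ t ^ k / (Nat.factorial k) := by positivity
  have hn32 : (n : ℝ) ≤ (n : ℝ) ^ ((3 : ℝ) / 2) := by
    nth_rewrite 1 [show (n : ℝ) = (n : ℝ) ^ (1 : ℝ) by rw [Real.rpow_one]]
    exact Real.rpow_le_rpow_of_exponent_le (by linarith) (by norm_num)
  have hxk : x ^ (2 * k) = t ^ k := by rw [pow_mul, htdef]
  calc (∑ i ∈ Finset.range (n + 1), ((i : ℝ) - t) ^ 2 * t ^ i / (Nat.factorial i)) / t
      ≤ ∑ i ∈ Finset.range n, t ^ i / (Nat.factorial i) := by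
        rw [div_le_iff₀ ht0]
        calc ∑ i ∈ Finset.range (n + 1), ((i : ℝ) - t) ^ 2 * t ^ i / (Nat.factorial i)
            ≤ t * ∑ i ∈ Finset.range n, t ^ i / (Nat.factorial i) := hA
          _ = (∑ i ∈ Finset.range n, t ^ i / (Nat.factorial i)) * t := mul_comm _ _
    _ ≤ (n : ℝ) * (t ^ k / (Nat.factorial k)) := hE
    _ ≤ (n : ℝ) ^ ((3 : ℝ) / 2) * (t ^ k / (Nat.factorial k)) :=
        mul_le_mul_of_nonneg_right hn32 huk
    _ = 1 * (x ^ (2 * ⌊x ^ 2⌋₊) / (Nat.factorial ⌊x ^ 2⌋₊)) * (n : ℝ) ^ ((3 : ℝ) / 2) := by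
        rw [hxk]; ring
end

section
/- For all sufficiently large n ∈ ℕ and all real x ≥ √n, one has Σ_{i=0}^n x^{2i}/i! ≥ (x^{2n}/(3 · n!)) · Σ_{j=0}^{⌊√n⌋} (n/x²)^j. -/
open Filter Finset

/-- Weierstrass product inequality. -/
lemma weier_aux (n : ℝ) (hn : 0 < n) :
    ∀ j : ℕ, (j : ℝ) ≤ n + 1 →
      1 - (∑ k ∈ Finset.range j, (k : ℝ)) / n ≤ ∏ k ∈ Finset.range j, (1 - (k : ℝ) / n) := by
  intro j
  induction j with
  | zero => simp
  | succ j ih =>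
    intro hj
    have hj' : (j : ℝ) ≤ n + 1 := by push_cast at hj ⊢; linarith
    have hjn : (j : ℝ) / n ≤ 1 := by
      rw [div_le_one hn]
      push_cast at hj; linarith
    have hS : 0 ≤ (∑ k ∈ Finset.range j, (k : ℝ)) := by positivity
    have ihj := ih hj'
    rw [Finset.prod_range_succ, Finset.sum_range_succ]
    have h1 : (1 - (∑ k ∈ Finset.range j, (k : ℝ)) / n) * (1 - (j : ℝ) / n) ≤
        (∏ k ∈ Finset.range j, (1 - (k : ℝ) / n)) * (1 - (j : ℝ) / n) :=
      mul_le_mul_of_nonneg_right ihj (by linarith)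
    have h2 : 1 - ((∑ k ∈ Finset.range j, (k : ℝ)) + j) / n ≤
        (1 - (∑ k ∈ Finset.range j, (k : ℝ)) / n) * (1 - (j : ℝ) / n) := by
      have hjn0 : 0 ≤ (j : ℝ) / n := by positivity
      have hS0 : 0 ≤ (∑ k ∈ Finset.range j, (k : ℝ)) / n := by positivity
      have heq : ((∑ k ∈ Finset.range j, (k : ℝ)) + j) / n =
          (∑ k ∈ Finset.range j, (k : ℝ)) / n + (j : ℝ) / n := by ring
      rw [heq]
      nlinarith [mul_nonneg hS0 hjn0]
    linarith

/-- Key factorial bound: `n^j (n-j)! ≤ 3 n!` for `j² ≤ n`. -/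
lemma key_fact (n j : ℕ) (hn : 1 ≤ n) (hj : j * j ≤ n) :
    (n : ℝ) ^ j * (Nat.factorial (n - j)) ≤ 3 * Nat.factorial n := by
  have hjn : j ≤ n := by nlinarith
  have hn0 : (0 : ℝ) < n := by exact_mod_cast hn
  have hfac : Nat.factorial (n - j) * Nat.descFactorial n j = Nat.factorial n :=
    Nat.factorial_mul_descFactorial hjn
  have hdesc : (Nat.descFactorial n j : ℝ) = ∏ k ∈ Finset.range j, ((n : ℝ) - k) := by
    rw [Nat.descFactorial_eq_prod_range, Nat.cast_prod]
    refine Finset.prod_congr rfl fun k hk => ?_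
    have : k ≤ n := le_trans (le_of_lt (Finset.mem_range.mp hk)) hjn
    exact Nat.cast_sub this
  have hsum2 : (∑ k ∈ Finset.range j, (k : ℝ)) * 2 ≤ n := by
    have h1 : (∑ i ∈ Finset.range j, i) * 2 = j * (j - 1) := Finset.sum_range_id_mul_two j
    have h2 : j * (j - 1) ≤ n := le_trans (Nat.mul_le_mul_left j (Nat.sub_le j 1)) hj
    have h3 : (∑ i ∈ Finset.range j, i) * 2 ≤ n := h1 ▸ h2
    have h4 : (((∑ i ∈ Finset.range j, i) * 2 : ℕ) : ℝ) ≤ (n : ℝ) := Nat.cast_le.mpr h3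
    push_cast at h4
    linarith
  have hw := weier_aux n hn0 j (by exact_mod_cast le_trans (Nat.cast_le.mpr hjn) (by linarith))
  have hhalf : (1 : ℝ) / 2 ≤ ∏ k ∈ Finset.range j, (1 - (k : ℝ) / n) := by
    have : (∑ k ∈ Finset.range j, (k : ℝ)) / n ≤ 1 / 2 := by
      rw [div_le_div_iff₀ hn0 (by norm_num)]; linarith
    linarith
  have hprodeq : ∏ k ∈ Finset.range j, ((n : ℝ) - k) =
      (n : ℝ) ^ j * ∏ k ∈ Finset.range j, (1 - (k : ℝ) / n) := by
    have hpc : (n : ℝ) ^ j = ∏ _k ∈ Finset.range j, (n : ℝ) := by simp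
    rw [hpc, ← Finset.prod_mul_distrib]
    refine Finset.prod_congr rfl fun k _ => ?_
    field_simp
  have hkey : (n : ℝ) ^ j ≤ 2 * (Nat.descFactorial n j : ℝ) := by
    rw [hdesc, hprodeq]
    nlinarith [pow_pos hn0 j]
  have hfacR : (Nat.factorial (n - j) : ℝ) * (Nat.descFactorial n j : ℝ) =
      (Nat.factorial n : ℝ) := by exact_mod_cast congrArg (Nat.cast (R := ℝ)) hfac
  have hF : (1 : ℝ) ≤ (Nat.factorial (n - j) : ℝ) := by
    exact_mod_cast Nat.one_le_iff_ne_zero.mpr (Nat.factorial_ne_zero _)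
  have hN : (0 : ℝ) < (Nat.factorial n : ℝ) := by exact_mod_cast Nat.factorial_pos n
  nlinarith [mul_le_mul_of_nonneg_right hkey (by linarith : (0:ℝ) ≤ (Nat.factorial (n - j) : ℝ))]

/-- For all large `n` and all `x ≥ √n`,
`∑_{i=0}^n x^{2i}/i! ≥ (x^{2n}/(3 n!)) ∑_{j=0}^{⌊√n⌋} (n/x²)ʲ`. -/
theorem weyl_variance_lower_bound_right :
    ∀ᶠ n : ℕ in atTop, ∀ x : ℝ, Real.sqrt n ≤ x →
      (x ^ (2 * n) / (3 * Nat.factorial n)) *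
          ∑ j ∈ Finset.range (Nat.sqrt n + 1), ((n : ℝ) / x ^ 2) ^ j ≤
        ∑ i ∈ Finset.range (n + 1), x ^ (2 * i) / (Nat.factorial i) := by
  filter_upwards [Filter.eventually_ge_atTop 1] with n hn x hx
  have hn0 : (0 : ℝ) < n := by exact_mod_cast hn
  have hx1 : (1 : ℝ) ≤ x := le_trans (Real.one_le_sqrt.mpr (by exact_mod_cast hn)) hx
  have hx0 : (0 : ℝ) < x := lt_of_lt_of_le one_pos hx1
  have hx2 : (n : ℝ) ≤ x ^ 2 := by
    have := Real.sq_sqrt (le_of_lt hn0)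
    nlinarith [Real.sqrt_nonneg (n : ℝ)]
  set m := Nat.sqrt n with hm
  have hmn : m ≤ n := Nat.sqrt_le_self n
  -- termwise bound
  have hterm : ∀ j ∈ Finset.range (m + 1),
      x ^ (2 * n) / (3 * Nat.factorial n) * ((n : ℝ) / x ^ 2) ^ j ≤
        x ^ (2 * (n - j)) / (Nat.factorial (n - j)) := by
    intro j hj
    have hjm : j ≤ m := Nat.lt_succ_iff.mp (Finset.mem_range.mp hj)
    have hjj : j * j ≤ n := Nat.le_sqrt.mp hjm
    have hjn : j ≤ n := le_trans hjm hmn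
    have hkey := key_fact n j hn hjj
    have hxp : x ^ (2 * (n - j)) = x ^ (2 * n) / x ^ (2 * j) := by
      rw [eq_div_iff (by positivity), ← pow_add]
      congr 1
      omega
    rw [hxp, div_pow, ← pow_mul]
    have hF : (0 : ℝ) < (Nat.factorial (n - j) : ℝ) := by
      exact_mod_cast Nat.factorial_pos (n - j)
    have hN : (0 : ℝ) < (Nat.factorial n : ℝ) := by exact_mod_cast Nat.factorial_pos n
    have hxj : (0 : ℝ) < x ^ (2 * j) := by positivity
    have hxn : (0 : ℝ) < x ^ (2 * n) := by positivity
    rw [div_mul_div_comm, div_div, div_le_div_iff₀ (by positivity) (by positivity)]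
    nlinarith [mul_le_mul_of_nonneg_left hkey (le_of_lt (mul_pos hxn hxj))]
  -- sum over the image of j ↦ n - j
  have hinj : ∀ a ∈ Finset.range (m + 1), ∀ b ∈ Finset.range (m + 1),
      n - a = n - b → a = b := by
    intro a ha b hb hab
    simp only [Finset.mem_range] at ha hb
    omega
  have hsub : (Finset.range (m + 1)).image (fun j => n - j) ⊆ Finset.range (n + 1) := by
    intro i hi
    simp only [Finset.mem_image, Finset.mem_range] at hi ⊢
    omega
  calc x ^ (2 * n) / (3 * Nat.factorial n) * ∑ j ∈ Finset.range (m + 1), ((n : ℝ) / x ^ 2) ^ j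
      = ∑ j ∈ Finset.range (m + 1), x ^ (2 * n) / (3 * Nat.factorial n) * ((n : ℝ) / x ^ 2) ^ j :=
        Finset.mul_sum _ _ _
    _ ≤ ∑ j ∈ Finset.range (m + 1), x ^ (2 * (n - j)) / (Nat.factorial (n - j)) :=
        Finset.sum_le_sum hterm
    _ = ∑ i ∈ (Finset.range (m + 1)).image (fun j => n - j), x ^ (2 * i) / (Nat.factorial i) :=
        by rw [Finset.sum_image hinj]
    _ ≤ ∑ i ∈ Finset.range (n + 1), x ^ (2 * i) / (Nat.factorial i) := by
        refine Finset.sum_le_sum_of_subset_of_nonneg hsub fun i _ _ => by positivity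
end

section
/- There exists a constant C > 0 such that for all sufficiently large n ∈ ℕ and all real x ≥ √n, one has Σ_{i=0}^n ( (i − n)/x )² x^{2i}/i! ≤ C · (x^{2n}/n!) · Σ_{j=0}^{⌊√n⌋} (n/x²)^j. -/
open Filter Finset

lemma aux_sum_range_id (k : ℕ) : ∑ i ∈ Finset.range k, (i:ℝ) = k*((k:ℝ)-1)/2 := by
  induction k with
  | zero => simp
  | succ k ih => rw [Finset.sum_range_succ, ih]; push_cast; ring

lemma aux_descFactorial_le (n k : ℕ) (hk : k ≤ n) (hn : 1 ≤ n) :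
    (n.descFactorial k : ℝ) ≤ (n:ℝ)^k * Real.exp (-((k:ℝ)*((k:ℝ)-1))/(2*n)) := by
  have hn0 : (0:ℝ) < n := by exact_mod_cast hn
  rw [Nat.descFactorial_eq_prod_range, Nat.cast_prod]
  calc ∏ i ∈ Finset.range k, ((n - i : ℕ) : ℝ)
      ≤ ∏ i ∈ Finset.range k, ((n:ℝ) * Real.exp (-(i:ℝ)/n)) := by
        apply Finset.prod_le_prod
        · intro i _; positivity
        · intro i hi
          have hin : i ≤ n := le_trans (le_of_lt (Finset.mem_range.mp hi)) hk
          rw [Nat.cast_sub hin]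
          have h := Real.add_one_le_exp (-(i:ℝ)/n)
          have h2 : (n:ℝ) * (-(i:ℝ)/n + 1) ≤ n * Real.exp (-(i:ℝ)/n) :=
            mul_le_mul_of_nonneg_left h (le_of_lt hn0)
          have h3 : (n:ℝ) * (-(i:ℝ)/n + 1) = (n:ℝ) - i := by field_simp; ring
          linarith
    _ = (n:ℝ)^k * Real.exp (-((k:ℝ)*((k:ℝ)-1))/(2*n)) := by
        rw [Finset.prod_mul_distrib, Finset.prod_const, Finset.card_range,
          ← Real.exp_sum]
        congr 1
        rw [← Finset.sum_div, Finset.sum_neg_distrib, aux_sum_range_id]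
        ring

lemma aux_geom_sum_le {σ : ℝ} (h0 : 0 ≤ σ) (h1 : σ < 1) (N : ℕ) :
    ∑ k ∈ Finset.range N, σ^k ≤ 1/(1-σ) := by
  rw [geom_sum_eq (ne_of_lt h1),
    show (σ^N - 1)/(σ - 1) = (1 - σ^N)/(1-σ) by rw [← neg_div_neg_eq]; ring_nf]
  have h2 : (0:ℝ) < 1 - σ := by linarith
  rw [div_le_div_iff₀ h2 h2]
  have : (0:ℝ) ≤ σ^N := by positivity
  nlinarith

set_option maxHeartbeats 2000000 in
/-- There is `C > 0` such that for all large `n` and all `x ≥ √n`,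
`∑_{i=0}^n ((i − n)/x)² x^{2i}/i! ≤ C (x^{2n}/n!) ∑_{j=0}^{⌊√n⌋} (n/x²)ʲ`. -/
theorem weyl_derivative_variance_upper_bound_right :
    ∃ C : ℝ, 0 < C ∧ ∀ᶠ n : ℕ in atTop, ∀ x : ℝ, Real.sqrt n ≤ x →
      ∑ i ∈ Finset.range (n + 1),
          (((i : ℝ) - n) / x) ^ 2 * x ^ (2 * i) / (Nat.factorial i) ≤
        C * (x ^ (2 * n) / (Nat.factorial n)) *
          ∑ j ∈ Finset.range (Nat.sqrt n + 1), ((n : ℝ) / x ^ 2) ^ j := by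
  refine ⟨6145, by norm_num, ?_⟩
  filter_upwards [eventually_ge_atTop 1] with n hn x hx
  have hn0 : (0:ℝ) < n := by exact_mod_cast hn
  have hsn : Real.sqrt n * Real.sqrt n = (n:ℝ) := Real.mul_self_sqrt (le_of_lt hn0)
  have hsn1 : (1:ℝ) ≤ Real.sqrt n := by
    rw [show (1:ℝ) = Real.sqrt 1 by simp]
    exact Real.sqrt_le_sqrt (by exact_mod_cast hn)
  have hsnne : Real.sqrt n ≠ 0 := by positivity
  have hx0 : (0:ℝ) < x := lt_of_lt_of_le (by linarith) hx
  have hx2 : (n:ℝ) ≤ x^2 := by nlinarith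
  set m := Nat.sqrt n with hmdef
  have hmn : m ≤ n := Nat.sqrt_le_self n
  have hm1 : 1 ≤ m := Nat.le_sqrt.mpr (by omega)
  have hmreal : Real.sqrt n < (m:ℝ) + 1 := by
    rw [Real.sqrt_lt' (by positivity)]
    have := Nat.lt_succ_sqrt' n
    push_cast
    exact_mod_cast this
  set q : ℝ := (n:ℝ)/x^2 with hqdef
  have hq0 : 0 < q := by positivity
  have hq1 : q ≤ 1 := by rw [hqdef, div_le_one (by positivity)]; exact hx2
  set s : ℝ := 1/(4*Real.sqrt n) with hsdef
  have hs0 : 0 < s := by positivity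
  have hs1 : s ≤ 1/4 := by
    rw [hsdef, div_le_div_iff₀ (by positivity) (by norm_num)]
    nlinarith
  set E : ℕ → ℝ := fun k => Real.exp (-((k:ℝ)*((k:ℝ)-1))/(2*n)) with hEdef
  set B : ℕ → ℝ := fun k => (k:ℝ)^2/n * E k * q^k with hBdef
  -- Step 1: termwise bound after reflection
  have key : ∑ i ∈ Finset.range (n+1), (((i:ℝ) - n)/x)^2 * x^(2*i)/(Nat.factorial i) ≤
      (x^(2*n)/(Nat.factorial n)) * ∑ k ∈ Finset.range (n+1), B k := by
    rw [← Finset.sum_range_reflect, Finset.mul_sum]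
    apply Finset.sum_le_sum
    intro k hk
    have hkn : k ≤ n := Nat.lt_succ_iff.mp (Finset.mem_range.mp hk)
    simp only [Nat.add_sub_cancel]
    have hD : (n.descFactorial k : ℝ) ≤ (n:ℝ)^k * E k := aux_descFactorial_le n k hkn hn
    have hD0 : (0:ℝ) < (n.descFactorial k : ℝ) := by
      have : n.descFactorial k ≠ 0 := fun h => absurd hkn (Nat.descFactorial_eq_zero_iff_lt.mp h).not_ge
      exact_mod_cast Nat.pos_of_ne_zero this
    have hF0 : (0:ℝ) < ((Nat.factorial (n-k)) : ℝ) := by exact_mod_cast (n-k).factorial_pos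
    have hE0 : 0 < E k := Real.exp_pos _
    have hfact : ((Nat.factorial n) : ℝ) = ((Nat.factorial (n-k)) : ℝ) * (n.descFactorial k : ℝ) := by
      exact_mod_cast (Nat.factorial_mul_descFactorial hkn).symm
    have hxpow : x^(2*n) = x^(2*(n-k)) * x^(2*k) := by
      rw [← pow_add]; congr 1; omega
    have hcast : ((n - k : ℕ) : ℝ) = (n:ℝ) - k := Nat.cast_sub hkn
    have h2 : ((((n:ℝ) - k) - n)/x)^2 = (k:ℝ)^2/x^2 := by
      rw [show ((n:ℝ) - k) - n = -(k:ℝ) by ring, neg_div, neg_sq, div_pow]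
    have hq : q^k = (n:ℝ)^k / x^(2*k) := by
      rw [hqdef, div_pow, ← pow_mul]
    have hrhs : x^(2*n)/((Nat.factorial n):ℝ) * ((k:ℝ)^2/n * E k * q^k)
        = x^(2*(n-k))/((Nat.factorial (n-k)):ℝ) *
          (((k:ℝ)^2/n * E k * (n:ℝ)^k) / (n.descFactorial k : ℝ)) := by
      rw [hfact, hxpow, hq]
      field_simp
    have hstep : (k:ℝ)^2/x^2 ≤ ((k:ℝ)^2/n * E k * (n:ℝ)^k) / (n.descFactorial k : ℝ) := by
      rw [le_div_iff₀ hD0]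
      calc (k:ℝ)^2/x^2 * (n.descFactorial k : ℝ)
          ≤ (k:ℝ)^2/n * (n.descFactorial k : ℝ) := by gcongr
        _ ≤ (k:ℝ)^2/n * ((n:ℝ)^k * E k) := by gcongr
        _ = (k:ℝ)^2/n * E k * (n:ℝ)^k := by ring
    calc ((((n - k : ℕ):ℝ) - n)/x)^2 * x^(2*(n-k)) / ((Nat.factorial (n-k)):ℝ)
        = x^(2*(n-k))/((Nat.factorial (n-k)):ℝ) * ((k:ℝ)^2/x^2) := by
          rw [hcast, h2]; ring
      _ ≤ x^(2*(n-k))/((Nat.factorial (n-k)):ℝ) *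
          (((k:ℝ)^2/n * E k * (n:ℝ)^k) / (n.descFactorial k : ℝ)) := by
          exact mul_le_mul_of_nonneg_left hstep (by positivity)
      _ = x^(2*n)/((Nat.factorial n):ℝ) * ((k:ℝ)^2/n * E k * q^k) := hrhs.symm
  -- Step 2: bound the B sum
  set S : ℝ := ∑ j ∈ Finset.range (m+1), q^j with hSdef
  have hS_lb : ((m:ℝ)+1) * q^m ≤ S := by
    rw [hSdef]
    calc ((m:ℝ)+1) * q^m = ∑ _j ∈ Finset.range (m+1), q^m := by
          rw [Finset.sum_const, Finset.card_range]; push_cast; ring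
      _ ≤ ∑ j ∈ Finset.range (m+1), q^j := by
          apply Finset.sum_le_sum
          intro j hj
          exact pow_le_pow_of_le_one (le_of_lt hq0) hq1
            (Nat.lt_succ_iff.mp (Finset.mem_range.mp hj))
  have hS0 : 0 < S := by
    have : (0:ℝ) < ((m:ℝ)+1) * q^m := by positivity
    linarith
  have hsplit : ∑ k ∈ Finset.range (n+1), B k
      = ∑ k ∈ Finset.range (m+1), B k + ∑ k ∈ Finset.Ico (m+1) (n+1), B k := by
    rw [Finset.range_eq_Ico, Finset.range_eq_Ico]
    exact (Finset.sum_Ico_consecutive _ (Nat.zero_le _) (by omega : m+1 ≤ n+1)).symm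
  have hhead : ∑ k ∈ Finset.range (m+1), B k ≤ S := by
    rw [hSdef]
    apply Finset.sum_le_sum
    intro k hk
    have hkm : k ≤ m := Nat.lt_succ_iff.mp (Finset.mem_range.mp hk)
    have h1 : (k:ℝ)^2/n ≤ 1 := by
      rw [div_le_one hn0]
      have hkk : k*k ≤ n := Nat.le_sqrt.mp hkm
      calc (k:ℝ)^2 = ((k*k : ℕ):ℝ) := by push_cast; ring
        _ ≤ n := by exact_mod_cast hkk
    have h2 : E k ≤ 1 := by
      rw [hEdef]
      apply Real.exp_le_one_iff.mpr
      have h4 : (0:ℝ) ≤ (k:ℝ)*((k:ℝ)-1) := by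
        rcases Nat.eq_zero_or_pos k with h | h
        · simp [h]
        · have : (1:ℝ) ≤ (k:ℝ) := by exact_mod_cast h
          nlinarith
      rw [neg_div]
      exact neg_nonpos.mpr (div_nonneg h4 (by positivity))
    calc B k = (k:ℝ)^2/n * E k * q^k := rfl
      _ ≤ 1 * 1 * q^k := by
          apply mul_le_mul (mul_le_mul h1 h2 (le_of_lt (Real.exp_pos _)) (by norm_num)) le_rfl
            (by positivity) (by norm_num)
      _ = q^k := by ring
  -- tail
  have htail : ∑ k ∈ Finset.Ico (m+1) (n+1), B k ≤ 6144 * (((m:ℝ)+1) * q^m) := by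
    set σ : ℝ := Real.exp (-(s/2)) with hσdef
    have hσ0 : 0 < σ := Real.exp_pos _
    have hσ1 : σ < 1 := Real.exp_lt_one_iff.mpr (by linarith)
    have hker : ∀ k : ℕ, (k:ℝ)^2 * Real.exp (-s)^k ≤ 16/s^2 * σ^k := by
      intro k
      have hu := Real.add_one_le_exp ((k:ℝ)*s/4)
      have hprod : Real.exp (-((k:ℝ)*s/4)) * Real.exp ((k:ℝ)*s/4) = 1 := by
        rw [← Real.exp_add]; simp
      have h1 : (k:ℝ) * Real.exp (-((k:ℝ)*s/4)) ≤ 4/s := by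
        rw [le_div_iff₀ hs0]
        nlinarith [Real.exp_pos (-((k:ℝ)*s/4)), Nat.cast_nonneg (α := ℝ) k]
      have h2 : Real.exp (-s)^k = Real.exp (-((k:ℝ)*s/4))^2 * σ^k := by
        rw [hσdef, ← Real.exp_nat_mul, ← Real.exp_nat_mul, ← Real.exp_nat_mul,
          ← Real.exp_add]
        congr 1
        push_cast
        ring
      calc (k:ℝ)^2 * Real.exp (-s)^k
          = ((k:ℝ) * Real.exp (-((k:ℝ)*s/4)))^2 * σ^k := by rw [h2]; ring
        _ ≤ (4/s)^2 * σ^k := by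
            apply mul_le_mul_of_nonneg_right _ (by positivity)
            exact pow_le_pow_left₀ (by positivity) h1 2
        _ = 16/s^2 * σ^k := by rw [div_pow]; norm_num
    have hterm : ∀ k ∈ Finset.Ico (m+1) (n+1), B k ≤ (16/s^2)/n * q^m * σ^k := by
      intro k hk
      obtain ⟨hk1, hk2⟩ := Finset.mem_Ico.mp hk
      have hkr : Real.sqrt n ≤ (k:ℝ) := by
        have h5 : ((m:ℝ)+1) ≤ k := by exact_mod_cast hk1
        linarith
      have hk2r : (2:ℝ) ≤ (k:ℝ) := by
        have h6 : 2 ≤ k := by omega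
        exact_mod_cast h6
      have hks : (k:ℝ) * s ≤ (k:ℝ)*((k:ℝ)-1)/(2*n) := by
        rw [hsdef, mul_one_div, div_le_div_iff₀ (by positivity) (by positivity)]
        have hfac : (0:ℝ) ≤ 2*(k:ℝ)*Real.sqrt n * (2*((k:ℝ)-1) - Real.sqrt n) := by
          apply mul_nonneg (by positivity)
          linarith
        have heq : 2*(k:ℝ)*Real.sqrt n * (2*((k:ℝ)-1) - Real.sqrt n)
            = (k:ℝ)*((k:ℝ)-1)*(4*Real.sqrt n) - (k:ℝ)*(2*(n:ℝ)) := by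
          linear_combination (-2*(k:ℝ)) * hsn
        linarith [hfac, heq]
      have hE : E k ≤ Real.exp (-s)^k := by
        rw [hEdef, ← Real.exp_nat_mul]
        apply Real.exp_le_exp.mpr
        have : (k:ℝ) * (-s) = -((k:ℝ)*s) := by ring
        rw [this, neg_div]
        linarith
      have hqk : q^k ≤ q^m :=
        pow_le_pow_of_le_one (le_of_lt hq0) hq1 (by omega)
      calc B k = (k:ℝ)^2/n * E k * q^k := rfl
        _ ≤ (k:ℝ)^2/n * Real.exp (-s)^k * q^m := by
            apply mul_le_mul (mul_le_mul le_rfl hE (le_of_lt (Real.exp_pos _)) (by positivity))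
              hqk (by positivity) (by positivity)
        _ = (k:ℝ)^2 * Real.exp (-s)^k * (q^m / n) := by ring
        _ ≤ 16/s^2 * σ^k * (q^m / n) :=
            mul_le_mul_of_nonneg_right (hker k) (by positivity)
        _ = (16/s^2)/n * q^m * σ^k := by ring
    have hinv : 1/s = 4*Real.sqrt n := by rw [hsdef, one_div_one_div]
    have hcalc : (16/s^2)/(n:ℝ) * (6/s) = 6144 * Real.sqrt n := by
      calc (16/s^2)/(n:ℝ)*(6/s) = 96*(1/s)^3/n := by field_simp; ring
        _ = 96*(4*Real.sqrt n)^3/n := by rw [hinv]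
        _ = 6144*(Real.sqrt n*Real.sqrt n*Real.sqrt n)/n := by ring
        _ = 6144*((n:ℝ)*Real.sqrt n)/n := by rw [hsn]
        _ = 6144*Real.sqrt n := by field_simp
    calc ∑ k ∈ Finset.Ico (m+1) (n+1), B k
        ≤ ∑ k ∈ Finset.Ico (m+1) (n+1), ((16/s^2)/n * q^m * σ^k) :=
          Finset.sum_le_sum hterm
      _ = (16/s^2)/n * q^m * ∑ k ∈ Finset.Ico (m+1) (n+1), σ^k := by
          rw [← Finset.mul_sum]
      _ ≤ (16/s^2)/n * q^m * (6/s) := by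
          apply mul_le_mul_of_nonneg_left _ (by positivity)
          have hsub : ∑ k ∈ Finset.Ico (m+1) (n+1), σ^k ≤ ∑ k ∈ Finset.range (n+1), σ^k := by
            apply Finset.sum_le_sum_of_subset_of_nonneg
            · rw [Finset.range_eq_Ico]
              exact Finset.Ico_subset_Ico (Nat.zero_le _) le_rfl
            · intro i _ _; positivity
          have hgeo := aux_geom_sum_le (le_of_lt hσ0) hσ1 (n+1)
          have h16 : 1/(1-σ) ≤ 6/s := by
            have h3 : 1 - s/2 ≤ σ := by
              have := Real.add_one_le_exp (-(s/2)); linarith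
            have hu2 := Real.add_one_le_exp (s/2)
            have hprod : σ * Real.exp (s/2) = 1 := by rw [hσdef, ← Real.exp_add]; simp
            have h9 : σ*(s/2+1) ≤ 1 := by
              have := mul_le_mul_of_nonneg_left hu2 (le_of_lt hσ0)
              linarith [hprod ▸ this]
            have hintA : (1 - s/2)*s ≤ σ*s := mul_le_mul_of_nonneg_right h3 (le_of_lt hs0)
            have hintB : s*s ≤ (1/4)*s := mul_le_mul_of_nonneg_right hs1 (le_of_lt hs0)
            rw [div_le_div_iff₀ (by linarith) hs0]
            nlinarith [h9, hintA, hintB]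
          linarith
      _ = ((16/s^2)/(n:ℝ) * (6/s)) * q^m := by ring
      _ = 6144 * Real.sqrt n * q^m := by rw [hcalc]
      _ ≤ 6144 * ((m:ℝ)+1) * q^m := by
          apply mul_le_mul_of_nonneg_right _ (by positivity)
          nlinarith [hmreal]
      _ = 6144 * (((m:ℝ)+1) * q^m) := by ring
  have hBsum : ∑ k ∈ Finset.range (n+1), B k ≤ 6145 * S := by
    rw [hsplit]
    have := htail.trans (by nlinarith : 6144 * (((m:ℝ)+1) * q^m) ≤ 6144 * S)
    linarith
  calc ∑ i ∈ Finset.range (n+1), (((i:ℝ) - n)/x)^2 * x^(2*i)/(Nat.factorial i)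
      ≤ (x^(2*n)/(Nat.factorial n)) * ∑ k ∈ Finset.range (n+1), B k := key
    _ ≤ (x^(2*n)/(Nat.factorial n)) * (6145 * S) := by
        apply mul_le_mul_of_nonneg_left hBsum (by positivity)
    _ = 6145 * (x^(2*n)/(Nat.factorial n)) * S := by ring
end

section
/- Let (β_n) be a sequence of positive reals with β_n → ∞ and β_n/√n → 0. Then for all sufficiently large even n ∈ ℕ and all real x with 0 ≤ x ≤ n − √n · β_n, one has 1 − e^{2x} · x^{n+1}/(n+1)! ≤ e^{x} · Σ_{i=0}^n (−x)^i/i! ≤ 1 + e^{2x} · e^{−β_n²/4}/√(2πn). -/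
open Filter Finset Topology

private lemma nonneg_of_deriv_nonneg {g g' : ℝ → ℝ}
    (hd : ∀ x : ℝ, HasDerivAt g (g' x) x)
    (hg' : ∀ x : ℝ, 0 ≤ x → 0 ≤ g' x) (hg0 : g 0 = 0) :
    ∀ x : ℝ, 0 ≤ x → 0 ≤ g x := by
  intro x hx
  have hmono : MonotoneOn g (Set.Ici (0 : ℝ)) := by
    apply monotoneOn_of_deriv_nonneg (convex_Ici 0)
      (fun y _ => (hd y).continuousAt.continuousWithinAt)
      (fun y _ => (hd y).differentiableAt.differentiableWithinAt)
    intro y hy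
    rw [(hd y).deriv]
    rw [interior_Ici] at hy
    exact hg' y (le_of_lt hy)
  have := hmono Set.self_mem_Ici hx hx
  rwa [hg0] at this

private lemma sum_hasDerivAt (n : ℕ) (x : ℝ) :
    HasDerivAt (fun y : ℝ => ∑ i ∈ range (n + 2), (-y) ^ i / (Nat.factorial i))
      (-(∑ i ∈ range (n + 1), (-x) ^ i / (Nat.factorial i))) x := by
  have h : ∀ i ∈ range (n + 2),
      HasDerivAt (fun y : ℝ => (-y) ^ i / (Nat.factorial i))
        ((i : ℝ) * (-x) ^ (i - 1) * (-1) / (Nat.factorial i)) x := by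
    intro i _
    exact (((hasDerivAt_id x).neg.pow i)).div_const _
  have hsum := HasDerivAt.fun_sum h
  refine hsum.congr_deriv (Eq.symm ?_)
  rw [Finset.sum_range_succ' (fun i => (i : ℝ) * (-x) ^ (i - 1) * (-1) / (Nat.factorial i)) (n+1)]
  simp only [Nat.cast_zero, zero_mul, zero_div, add_zero, Nat.add_sub_cancel]
  rw [neg_eq_iff_eq_neg, ← Finset.sum_neg_distrib]
  apply Finset.sum_congr rfl
  intro i _
  have hfac : ((Nat.factorial i : ℝ)) ≠ 0 := by positivity
  rw [Nat.factorial_succ]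
  push_cast
  field_simp

private lemma alt_bound (n : ℕ) : ∀ x : ℝ, 0 ≤ x →
    0 ≤ (-1:ℝ)^n * ((∑ i ∈ range (n+1), (-x)^i / (Nat.factorial i)) - Real.exp (-x)) ∧
    (-1:ℝ)^n * ((∑ i ∈ range (n+1), (-x)^i / (Nat.factorial i)) - Real.exp (-x))
      ≤ x^(n+1) / (Nat.factorial (n+1)) := by
  induction n with
  | zero =>
    intro x hx
    norm_num [Finset.sum_range_one]
    constructor
    · have h1 : Real.exp (-x) ≤ 1 := Real.exp_le_one_iff.mpr (by linarith)
      linarith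
    · nlinarith [Real.add_one_le_exp (-x)]
  | succ n ih =>
    have hderiv : ∀ y : ℝ, HasDerivAt
        (fun z : ℝ => (-1:ℝ)^(n+1) *
          ((∑ i ∈ range (n+2), (-z)^i / (Nat.factorial i)) - Real.exp (-z)))
        ((-1:ℝ)^n * ((∑ i ∈ range (n+1), (-y)^i / (Nat.factorial i)) - Real.exp (-y))) y := by
      intro y
      have h1 := ((sum_hasDerivAt n y).sub ((hasDerivAt_neg y).exp)).const_mul ((-1:ℝ)^(n+1))
      refine h1.congr_deriv (Eq.symm ?_)
      rw [pow_succ]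
      ring
    have hg0 : (-1:ℝ)^(n+1) *
        ((∑ i ∈ range (n+2), (-(0:ℝ))^i / (Nat.factorial i)) - Real.exp (-0)) = 0 := by
      rw [Finset.sum_range_succ' (fun i => (-(0:ℝ))^i / (Nat.factorial i)) (n+1)]
      simp [zero_pow]
    intro x hx
    have hlow := nonneg_of_deriv_nonneg hderiv (fun y hy => (ih y hy).1) hg0 x hx
    refine ⟨hlow, ?_⟩
    have hderiv2 : ∀ y : ℝ, HasDerivAt
        (fun z : ℝ => z^(n+2) / (Nat.factorial (n+2)) - (-1:ℝ)^(n+1) *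
          ((∑ i ∈ range (n+2), (-z)^i / (Nat.factorial i)) - Real.exp (-z)))
        (y^(n+1) / (Nat.factorial (n+1)) -
          (-1:ℝ)^n * ((∑ i ∈ range (n+1), (-y)^i / (Nat.factorial i)) - Real.exp (-y))) y := by
      intro y
      have h1 := ((hasDerivAt_pow (n+2) y).div_const ((Nat.factorial (n+2) : ℝ))).sub (hderiv y)
      refine h1.congr_deriv (Eq.symm ?_)
      congr 1
      rw [show n + 2 - 1 = n + 1 from rfl, Nat.factorial_succ (n+1)]
      have hfac : ((Nat.factorial (n+1) : ℝ)) ≠ 0 := by positivity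
      push_cast
      field_simp
      ring
    have hup := nonneg_of_deriv_nonneg hderiv2
      (fun y hy => by linarith [(ih y hy).2]) (by rw [hg0]; simp) x hx
    linarith


private lemma nonneg_of_deriv_nonneg' {g g' : ℝ → ℝ}
    (hd : ∀ x : ℝ, HasDerivAt g (g' x) x)
    (hg' : ∀ x : ℝ, 0 ≤ x → 0 ≤ g' x) (hg0 : g 0 = 0) :
    ∀ x : ℝ, 0 ≤ x → 0 ≤ g x := by
  intro x hx
  have hmono : MonotoneOn g (Set.Ici (0 : ℝ)) := by
    apply monotoneOn_of_deriv_nonneg (convex_Ici 0)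
      (fun y _ => (hd y).continuousAt.continuousWithinAt)
      (fun y _ => (hd y).differentiableAt.differentiableWithinAt)
    intro y hy
    rw [(hd y).deriv]
    rw [interior_Ici] at hy
    exact hg' y (le_of_lt hy)
  have := hmono Set.self_mem_Ici hx hx
  rwa [hg0] at this

private lemma one_sub_le_exp_aux (u : ℝ) (hu : 0 ≤ u) : 1 - u ≤ Real.exp (-u - u^2/2) := by
  have key := nonneg_of_deriv_nonneg' (g := fun u : ℝ => Real.exp (-u - u^2/2) - (1 - u))
    (g' := fun u => 1 - Real.exp (-u - u^2/2) * (1 + u)) ?_ ?_ ?_ u hu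
  · linarith
  · intro y
    have h1 : HasDerivAt (fun u : ℝ => -u - u^2/2) (-1 - y) y := by
      have h := ((hasDerivAt_id y).neg.sub ((hasDerivAt_pow 2 y).div_const 2))
      refine h.congr_deriv (Eq.symm ?_)
      norm_num
    have h2 := h1.exp.sub ((hasDerivAt_const y (1:ℝ)).sub (hasDerivAt_id y))
    refine h2.congr_deriv (Eq.symm ?_)
    ring
  · intro y hy
    have h2 : 1 + y ≤ Real.exp (y + y^2/2) := by
      nlinarith [Real.add_one_le_exp (y + y^2/2), sq_nonneg y]
    have h3 : Real.exp (-y - y^2/2) * (1+y) ≤ Real.exp (-y - y^2/2) * Real.exp (y + y^2/2) :=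
      mul_le_mul_of_nonneg_left h2 (Real.exp_pos _).le
    rw [← Real.exp_add] at h3
    have : -y - y^2/2 + (y + y^2/2) = 0 := by ring
    rw [this, Real.exp_zero] at h3
    linarith
  · norm_num

private lemma pow_mul_exp_mono (n : ℕ) {a b : ℝ} (ha : 0 ≤ a) (hab : a ≤ b)
    (hb : b ≤ (n:ℝ) + 1) : a^(n+1) * Real.exp (-a) ≤ b^(n+1) * Real.exp (-b) := by
  have hn : (0:ℝ) < (n:ℝ) + 1 := by positivity
  have hb0 : 0 ≤ b := ha.trans hab
  have hu : (b - a) = ((b-a)/((n:ℝ)+1)) * ((n:ℝ)+1) := by field_simp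
  have key : a ≤ b * Real.exp (-((b-a)/((n:ℝ)+1))) := by
    have h1 : 1 - (b-a)/((n:ℝ)+1) ≤ Real.exp (-((b-a)/((n:ℝ)+1))) := by
      have := Real.add_one_le_exp (-((b-a)/((n:ℝ)+1)))
      linarith
    have h2 : a ≤ b * (1 - (b-a)/((n:ℝ)+1)) := by
      rw [mul_sub, mul_one]
      have hd : 0 ≤ (b-a)/((n:ℝ)+1) := div_nonneg (by linarith) hn.le
      nlinarith
    calc a ≤ b * (1 - (b-a)/((n:ℝ)+1)) := h2
      _ ≤ b * Real.exp (-((b-a)/((n:ℝ)+1))) := mul_le_mul_of_nonneg_left h1 hb0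
  have hpow : a^(n+1) ≤ (b * Real.exp (-((b-a)/((n:ℝ)+1))))^(n+1) := pow_le_pow_left₀ ha key _
  have hE : (Real.exp (-((b-a)/((n:ℝ)+1))))^(n+1) = Real.exp (-(b-a)) := by
    rw [← Real.exp_nat_mul]
    congr 1
    push_cast
    field_simp
  rw [mul_pow, hE] at hpow
  calc a^(n+1) * Real.exp (-a) ≤ b^(n+1) * Real.exp (-(b-a)) * Real.exp (-a) := by
        exact mul_le_mul_of_nonneg_right hpow (Real.exp_pos _).le
    _ = b^(n+1) * Real.exp (-b) := by rw [mul_assoc, ← Real.exp_add]; ring_nf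

private lemma factorial_stirling (n : ℕ) (hn : 1 ≤ n) :
    Real.sqrt (2 * Real.pi * n) * ((n : ℝ) / Real.exp 1)^n ≤ (Nat.factorial n : ℝ) := by
  obtain ⟨m, rfl⟩ : ∃ m, n = m + 1 := ⟨n - 1, (Nat.succ_pred_eq_of_pos hn).symm⟩
  have hlim : Tendsto (Stirling.stirlingSeq ∘ Nat.succ) atTop (𝓝 (Real.sqrt Real.pi)) :=
    Stirling.tendsto_stirlingSeq_sqrt_pi.comp (tendsto_add_atTop_nat 1)
  have h1 : Real.sqrt Real.pi ≤ Stirling.stirlingSeq (m + 1) :=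
    Stirling.stirlingSeq'_antitone.le_of_tendsto hlim m
  have hnpos : (0:ℝ) < ((m:ℝ) + 1) := by positivity
  have hden : (0:ℝ) < Real.sqrt (2 * ((m:ℝ)+1)) * (((m:ℝ)+1) / Real.exp 1)^(m+1) := by
    positivity
  have hfact : (Nat.factorial (m+1) : ℝ) =
      Stirling.stirlingSeq (m+1) * (Real.sqrt (2*((m:ℝ)+1)) * (((m:ℝ)+1)/Real.exp 1)^(m+1)) := by
    rw [Stirling.stirlingSeq]
    push_cast
    rw [div_mul_cancel₀ _ (ne_of_gt hden)]
  have h2 : Real.sqrt Real.pi * (Real.sqrt (2 * ((m:ℝ)+1)) * (((m:ℝ)+1) / Real.exp 1)^(m+1))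
      ≤ (Nat.factorial (m+1) : ℝ) := by
    rw [hfact]
    exact mul_le_mul_of_nonneg_right h1 hden.le
  calc Real.sqrt (2 * Real.pi * ((m:ℕ)+1:ℕ)) * (((m+1:ℕ) : ℝ) / Real.exp 1)^(m+1)
      = Real.sqrt Real.pi * (Real.sqrt (2 * ((m:ℝ)+1)) * (((m:ℝ)+1) / Real.exp 1)^(m+1)) := by
        rw [← mul_assoc, ← Real.sqrt_mul Real.pi_pos.le]
        push_cast
        ring_nf
    _ ≤ _ := h2


/-- If `β_n > 0`, `β_n → ∞`, `β_n/√n → 0`, then for all large even `n` and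
`0 ≤ x ≤ n − √n β_n`,
`1 − e^{2x} x^{n+1}/(n+1)! ≤ eˣ ∑_{i=0}^n (−x)ⁱ/i! ≤ 1 + e^{2x} e^{−β_n²/4}/√(2πn)`. -/
theorem exp_partial_sum_alternating_estimate
    (β : ℕ → ℝ) (hpos : ∀ n, 0 < β n)
    (hto : Tendsto β atTop atTop)
    (hsmall : Tendsto (fun n : ℕ => β n / Real.sqrt n) atTop (nhds 0)) :
    ∀ᶠ n : ℕ in atTop, Even n → ∀ x : ℝ,
      0 ≤ x → x ≤ (n : ℝ) - Real.sqrt n * β n →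
      1 - Real.exp (2 * x) * x ^ (n + 1) / (Nat.factorial (n + 1)) ≤
          Real.exp x * ∑ i ∈ Finset.range (n + 1), (-x) ^ i / (Nat.factorial i) ∧
        Real.exp x * ∑ i ∈ Finset.range (n + 1), (-x) ^ i / (Nat.factorial i) ≤
          1 + Real.exp (2 * x) * Real.exp (-(β n) ^ 2 / 4) /
            Real.sqrt (2 * Real.pi * n) := by
  filter_upwards [eventually_ge_atTop 1] with n hn heven x hx hxb
  have hnR : (1:ℝ) ≤ (n:ℝ) := by exact_mod_cast hn
  set S := ∑ i ∈ Finset.range (n + 1), (-x) ^ i / (Nat.factorial i) with hS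
  set F := ((Nat.factorial (n+1) : ℕ) : ℝ) with hF
  have hFpos : (0:ℝ) < F := by rw [hF]; positivity
  clear_value S F
  obtain ⟨h1, h2⟩ := alt_bound n x hx
  rw [heven.neg_one_pow, one_mul] at h1 h2
  rw [← hS] at h1 h2
  rw [← hF] at h2
  have hxinv : Real.exp x * Real.exp (-x) = 1 := by
    rw [← Real.exp_add]; simp
  have hxpow : (0:ℝ) ≤ x ^ (n+1) := pow_nonneg hx _
  constructor
  · -- lower bound
    have hA : (0:ℝ) ≤ Real.exp (2*x) * x^(n+1) / F :=
      div_nonneg (mul_nonneg (Real.exp_pos _).le hxpow) hFpos.le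
    have hB : 1 ≤ Real.exp x * S := by
      have := mul_le_mul_of_nonneg_left (by linarith : Real.exp (-x) ≤ S) (Real.exp_pos x).le
      rw [hxinv] at this
      exact this
    linarith
  · -- upper bound
    set b : ℝ := (n:ℝ) - Real.sqrt n * β n with hb
    have hsb : 0 ≤ Real.sqrt n * β n := mul_nonneg (Real.sqrt_nonneg _) (hpos n).le
    have hb0 : 0 ≤ b := hx.trans hxb
    have hble : b ≤ (n:ℝ) + 1 := by rw [hb]; linarith
    -- Step 1
    have c1 : x^(n+1) * Real.exp (-x) ≤ b^(n+1) * Real.exp (-b) :=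
      pow_mul_exp_mono n hx hxb hble
    -- Step 2
    clear_value b
    set t : ℝ := 1 + Real.sqrt n * β n with ht
    clear_value t
    have ht1 : (1:ℝ) ≤ t := by rw [ht]; linarith
    have ht0 : (0:ℝ) < t := by linarith
    have hbt : b = ((n:ℝ)+1) - t := by rw [hb, ht]; ring
    have hn1pos : (0:ℝ) < (n:ℝ)+1 := by linarith
    set u : ℝ := t / ((n:ℝ)+1) with hu
    clear_value u
    have hu0 : 0 ≤ u := by rw [hu]; exact le_of_lt (div_pos ht0 hn1pos)
    have h1u : 1 - u = b / ((n:ℝ)+1) := by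
      rw [hu, hbt]; field_simp
    have h1u0 : 0 ≤ 1 - u := by rw [h1u]; exact div_nonneg hb0 hn1pos.le
    have hbu : b = ((n:ℝ)+1) * (1 - u) := by
      rw [h1u]; field_simp
    have hp : (1-u)^(n+1) ≤ Real.exp (-t - t^2/(2*((n:ℝ)+1))) := by
      calc (1-u)^(n+1) ≤ (Real.exp (-u - u^2/2))^(n+1) :=
            pow_le_pow_left₀ h1u0 (one_sub_le_exp_aux u hu0) _
        _ = Real.exp (((n:ℕ)+1 : ℕ) * (-u - u^2/2)) := (Real.exp_nat_mul _ _).symm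
        _ = Real.exp (-t - t^2/(2*((n:ℝ)+1))) := by
            congr 1
            rw [hu]
            push_cast
            field_simp
    have htsq : (n:ℝ) * (β n)^2 ≤ t^2 := by
      have hs : (Real.sqrt n * β n)^2 = (n:ℝ) * (β n)^2 := by
        rw [mul_pow, Real.sq_sqrt (by positivity : (0:ℝ) ≤ (n:ℝ))]
      have hle : Real.sqrt n * β n ≤ t := by rw [ht]; linarith
      nlinarith [hsb]
    have hexp2 : Real.exp (-t^2/(2*((n:ℝ)+1))) ≤ Real.exp (-(β n)^2/4) := by
      apply Real.exp_le_exp.mpr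
      rw [div_le_div_iff₀ (by positivity) (by norm_num : (0:ℝ) < 4)]
      nlinarith [sq_nonneg (β n), htsq]
    set A : ℝ := ((n:ℝ)+1)^(n+1) * Real.exp (-((n:ℝ)+1)) with hA
    clear_value A
    have c2 : b^(n+1) * Real.exp (-b) ≤ A * Real.exp (-(β n)^2/4) := by
      have e1 : b^(n+1) * Real.exp (-b) =
          ((n:ℝ)+1)^(n+1) * ((1-u)^(n+1) * Real.exp (t - ((n:ℝ)+1))) := by
        rw [show (-b) = t - ((n:ℝ)+1) by rw [hbt]; ring, hbu, mul_pow]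
        ring
      rw [e1, hA]
      have e2 : (1-u)^(n+1) * Real.exp (t - ((n:ℝ)+1)) ≤
          Real.exp (-((n:ℝ)+1)) * Real.exp (-(β n)^2/4) := by
        calc (1-u)^(n+1) * Real.exp (t - ((n:ℝ)+1))
            ≤ Real.exp (-t - t^2/(2*((n:ℝ)+1))) * Real.exp (t - ((n:ℝ)+1)) :=
              mul_le_mul_of_nonneg_right hp (Real.exp_pos _).le
          _ = Real.exp (-((n:ℝ)+1)) * Real.exp (-t^2/(2*((n:ℝ)+1))) := by
              rw [← Real.exp_add, ← Real.exp_add]; congr 1; ring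
          _ ≤ Real.exp (-((n:ℝ)+1)) * Real.exp (-(β n)^2/4) :=
              mul_le_mul_of_nonneg_left hexp2 (Real.exp_pos _).le
      calc ((n:ℝ)+1)^(n+1) * ((1-u)^(n+1) * Real.exp (t - ((n:ℝ)+1)))
          ≤ ((n:ℝ)+1)^(n+1) * (Real.exp (-((n:ℝ)+1)) * Real.exp (-(β n)^2/4)) :=
            mul_le_mul_of_nonneg_left e2 (by positivity)
        _ = ((n:ℝ)+1)^(n+1) * Real.exp (-((n:ℝ)+1)) * Real.exp (-(β n)^2/4) := by ring
    -- Step 3 : A * sqrt(2 pi n) ≤ F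
    have hn0 : (0:ℝ) < (n:ℝ) := by linarith
    have hsqpos : (0:ℝ) < Real.sqrt (2*Real.pi*n) := by
      apply Real.sqrt_pos.mpr
      have h := Real.pi_pos
      positivity
    have c3 : A * Real.sqrt (2*Real.pi*(n:ℝ)) ≤ F := by
      have hst := factorial_stirling n hn
      have he : ((n:ℝ)+1)^n ≤ Real.exp 1 * (n:ℝ)^n := by
        have h := Real.add_one_le_exp (1/(n:ℝ))
        have h2 := pow_le_pow_left₀ (by positivity) h n
        rw [← Real.exp_nat_mul, mul_one_div, div_self (by positivity : (n:ℝ) ≠ 0)] at h2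
        have e3 : ((n:ℝ)+1)^n = (1/(n:ℝ)+1)^n * (n:ℝ)^n := by
          rw [← mul_pow]
          congr 1
          field_simp
          ring
        rw [e3]
        exact mul_le_mul_of_nonneg_right h2 (by positivity)
      have hexpn : ((n:ℝ)/Real.exp 1)^n = (n:ℝ)^n * Real.exp (-(n:ℝ)) := by
        rw [div_pow, ← Real.exp_nat_mul, mul_one, Real.exp_neg, div_eq_mul_inv]
      have hee : Real.exp 1 * Real.exp (-((n:ℝ)+1)) = Real.exp (-(n:ℝ)) := by
        rw [← Real.exp_add]; congr 1; ring
      have hfsucc : F = ((n:ℝ)+1) * (Nat.factorial n : ℝ) := by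
        rw [hF, Nat.factorial_succ]; push_cast; ring
      have step : A ≤ ((n:ℝ)+1) * ((n:ℝ)^n * Real.exp (-(n:ℝ))) := by
        have e4 : A = ((n:ℝ)+1)^n * (((n:ℝ)+1) * Real.exp (-((n:ℝ)+1))) := by
          rw [hA, pow_succ]; ring
        rw [e4]
        calc ((n:ℝ)+1)^n * (((n:ℝ)+1) * Real.exp (-((n:ℝ)+1)))
            ≤ (Real.exp 1 * (n:ℝ)^n) * (((n:ℝ)+1) * Real.exp (-((n:ℝ)+1))) := by
              apply mul_le_mul_of_nonneg_right he
              positivity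
          _ = ((n:ℝ)+1) * ((n:ℝ)^n * (Real.exp 1 * Real.exp (-((n:ℝ)+1)))) := by ring
          _ = ((n:ℝ)+1) * ((n:ℝ)^n * Real.exp (-(n:ℝ))) := by rw [hee]
      calc A * Real.sqrt (2*Real.pi*(n:ℝ))
          ≤ (((n:ℝ)+1) * ((n:ℝ)^n * Real.exp (-(n:ℝ)))) * Real.sqrt (2*Real.pi*(n:ℝ)) :=
            mul_le_mul_of_nonneg_right step hsqpos.le
        _ = ((n:ℝ)+1) * (Real.sqrt (2*Real.pi*(n:ℝ)) * ((n:ℝ)/Real.exp 1)^n) := by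
            rw [hexpn]; ring
        _ ≤ ((n:ℝ)+1) * (Nat.factorial n : ℝ) :=
            mul_le_mul_of_nonneg_left hst (by positivity)
        _ = F := hfsucc.symm
    -- combine
    have key : x^(n+1) * Real.exp (-x) * Real.sqrt (2*Real.pi*(n:ℝ)) ≤
        F * Real.exp (-(β n)^2/4) := by
      calc x^(n+1) * Real.exp (-x) * Real.sqrt (2*Real.pi*(n:ℝ))
          ≤ (A * Real.exp (-(β n)^2/4)) * Real.sqrt (2*Real.pi*(n:ℝ)) :=
            mul_le_mul_of_nonneg_right (c1.trans c2) hsqpos.le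
        _ = (A * Real.sqrt (2*Real.pi*(n:ℝ))) * Real.exp (-(β n)^2/4) := by ring
        _ ≤ F * Real.exp (-(β n)^2/4) :=
            mul_le_mul_of_nonneg_right c3 (Real.exp_pos _).le
    have main2 : Real.exp x * (x^(n+1)/F) ≤
        Real.exp (2*x) * Real.exp (-(β n)^2/4) / Real.sqrt (2*Real.pi*(n:ℝ)) := by
      rw [mul_div_assoc' (Real.exp x), div_le_div_iff₀ hFpos hsqpos]
      have e6 : Real.exp (2*x) * Real.exp (-x) = Real.exp x := by
        rw [← Real.exp_add]; congr 1; ring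
      have e5 : Real.exp x * x^(n+1) = Real.exp (2*x) * (x^(n+1) * Real.exp (-x)) := by
        rw [← e6]; ring
      rw [e5]
      calc Real.exp (2*x) * (x^(n+1) * Real.exp (-x)) * Real.sqrt (2*Real.pi*(n:ℝ))
          = Real.exp (2*x) * (x^(n+1) * Real.exp (-x) * Real.sqrt (2*Real.pi*(n:ℝ))) := by ring
        _ ≤ Real.exp (2*x) * (F * Real.exp (-(β n)^2/4)) :=
            mul_le_mul_of_nonneg_left key (Real.exp_pos _).le
        _ = Real.exp (2*x) * Real.exp (-(β n)^2/4) * F := by ring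
    have hS2 : Real.exp x * S ≤ 1 + Real.exp x * (x^(n+1)/F) := by
      have := mul_le_mul_of_nonneg_left
        (by linarith : S ≤ Real.exp (-x) + x^(n+1)/F) (Real.exp_pos x).le
      rw [mul_add, hxinv] at this
      linarith
    linarith
end

section
/- There exist N ∈ ℕ and T > 0 such that for every even n ≥ N, every τ ≥ T, and every real s satisfying s(s+τ) < 0 and 0 < |s| < √n − α_n and 0 < |s+τ| < √n − α_n, one has A_n(s, s+τ) ≤ τ^{−2}. -/
open Filter Finset

/-- Autocorrelation function of the Weyl random polynomial of degree `n`: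
`A_n(x,y) = (∑_{i=0}^n (xy)ⁱ/i!) / (√(∑ x^{2i}/i!) · √(∑ y^{2i}/i!))`. -/
noncomputable def weylCorr (n : ℕ) (x y : ℝ) : ℝ :=
  (∑ i ∈ Finset.range (n + 1), (x * y) ^ i / (Nat.factorial i)) /
    (Real.sqrt (∑ i ∈ Finset.range (n + 1), x ^ (2 * i) / (Nat.factorial i)) *
     Real.sqrt (∑ i ∈ Finset.range (n + 1), y ^ (2 * i) / (Nat.factorial i)))

lemma myExpTsum (u : ℝ) : Real.exp u = ∑' i : ℕ, u ^ i / (Nat.factorial i) := by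
  rw [Real.exp_eq_exp_ℝ, NormedSpace.exp_eq_tsum_div]

set_option maxHeartbeats 1000000 in
lemma myTailEq (n : ℕ) (u : ℝ) :
    Real.exp u - ∑ i ∈ Finset.range (n+1), u ^ i / (Nat.factorial i)
      = ∑' i : ℕ, u ^ (i + (n+1)) / (Nat.factorial (i + (n+1))) := by
  have hs := Real.summable_pow_div_factorial u
  have h := Summable.sum_add_tsum_nat_add (f := fun i => u ^ i / (Nat.factorial i)) (n+1) hs
  rw [myExpTsum u, ← h]
  ring

set_option maxHeartbeats 1000000 in
lemma mySummableTail (n : ℕ) (u : ℝ) :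
    Summable (fun i : ℕ => u ^ (i + (n+1)) / (Nat.factorial (i + (n+1)))) := by
  exact_mod_cast (_root_.summable_nat_add_iff (f := fun i : ℕ => u ^ i / (Nat.factorial i)) (n+1)).2
    (Real.summable_pow_div_factorial u)

/-- termwise geometric comparison -/
lemma myTermGeom (n : ℕ) (u : ℝ) (h0 : 0 ≤ u) (i : ℕ) :
    u ^ (i + (n+1)) / (Nat.factorial (i + (n+1)))
      ≤ u ^ (n+1) / (Nat.factorial (n+1)) * (u / (n+2)) ^ i := by
  induction i with
  | zero => simp
  | succ i ih =>
    have h1 : u ^ (i + 1 + (n+1)) / (Nat.factorial (i + 1 + (n+1)))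
        = u ^ (i + (n+1)) / (Nat.factorial (i + (n+1))) * (u / (i + (n+1) + 1)) := by
      have : i + 1 + (n+1) = (i + (n+1)) + 1 := by ring
      rw [this, pow_succ, Nat.factorial_succ]
      rw [div_mul_div_comm]
      congr 1
      push_cast
      ring
    rw [h1, pow_succ (u / ((n:ℝ)+2)) i]
    have hfac : (0:ℝ) < i + (n+1) + 1 := by positivity
    have h2 : u / (i + (n+1) + 1) ≤ u / (n+2) := by
      apply div_le_div_of_nonneg_left h0 (by positivity)
      push_cast; linarith
    have h3 : (0:ℝ) ≤ u ^ (i + (n+1)) / (Nat.factorial (i + (n+1))) := by positivity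
    calc u ^ (i + (n+1)) / (Nat.factorial (i + (n+1))) * (u / (i + (n+1) + 1))
        ≤ u ^ (i + (n+1)) / (Nat.factorial (i + (n+1))) * (u / (n+2)) :=
          mul_le_mul_of_nonneg_left h2 h3
      _ ≤ u ^ (n+1) / (Nat.factorial (n+1)) * (u / (n+2)) ^ i * (u / (n+2)) := by
          apply mul_le_mul_of_nonneg_right ih (by positivity)
      _ = u ^ (n+1) / (Nat.factorial (n+1)) * ((u / (n+2)) ^ i * (u / (n+2))) := by ring

/-- Geometric tail bound -/
lemma myTailLe (n : ℕ) (u : ℝ) (h0 : 0 ≤ u) (hu : u < (n:ℝ) + 2) :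
    Real.exp u - ∑ i ∈ Finset.range (n+1), u ^ i / (Nat.factorial i)
      ≤ u ^ (n+1) / (Nat.factorial (n+1)) * (((n:ℝ)+2) / ((n:ℝ)+2-u)) := by
  rw [myTailEq]
  have hq0 : (0:ℝ) ≤ u / (n+2) := by positivity
  have hq1 : u / ((n:ℝ)+2) < 1 := by
    rw [div_lt_one (by positivity)]; exact hu
  have hgeo : Summable (fun i : ℕ => u ^ (n+1) / (Nat.factorial (n+1)) * (u / (n+2)) ^ i) :=
    (summable_geometric_of_lt_one hq0 hq1).mul_left _
  calc ∑' i : ℕ, u ^ (i + (n+1)) / (Nat.factorial (i + (n+1)))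
      ≤ ∑' i : ℕ, u ^ (n+1) / (Nat.factorial (n+1)) * (u / (n+2)) ^ i :=
        Summable.tsum_le_tsum (myTermGeom n u h0) (mySummableTail n u) hgeo
    _ = u ^ (n+1) / (Nat.factorial (n+1)) * (1 - u/(n+2))⁻¹ := by
        rw [tsum_mul_left, tsum_geometric_of_lt_one hq0 hq1]
    _ = u ^ (n+1) / (Nat.factorial (n+1)) * (((n:ℝ)+2) / ((n:ℝ)+2-u)) := by
        congr 1
        rw [inv_eq_one_div]
        rw [div_eq_div_iff (by linarith) (by linarith)]
        field_simp

/-- partial sum at any real t bounded using abs tail -/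
lemma myPartialLe (n : ℕ) (t : ℝ) :
    ∑ i ∈ Finset.range (n+1), t ^ i / (Nat.factorial i)
      ≤ Real.exp t + (Real.exp |t| - ∑ i ∈ Finset.range (n+1), |t| ^ i / (Nat.factorial i)) := by
  have h1 := myTailEq n t
  have h2 := myTailEq n |t|
  have habs : |∑' i : ℕ, t ^ (i + (n+1)) / (Nat.factorial (i + (n+1)))|
      ≤ ∑' i : ℕ, |t| ^ (i + (n+1)) / (Nat.factorial (i + (n+1))) := by
    have := norm_tsum_le_tsum_norm (f := fun i : ℕ => t ^ (i + (n+1)) / (Nat.factorial (i + (n+1))))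
      (by simpa [Real.norm_eq_abs, abs_div, abs_pow] using mySummableTail n |t|)
    simpa [Real.norm_eq_abs, abs_div, abs_pow] using this
  have := abs_le.1 habs
  linarith [this.1, this.2, h1, h2]

/-- Chernoff bound for Poisson-type terms. -/
lemma myChernoff (u : ℝ) (h0 : 0 ≤ u) (t : ℝ) (m : ℕ) :
    u ^ m / (Nat.factorial m) ≤ Real.exp (u * Real.exp t - t * m) := by
  have h1 : (u * Real.exp t) ^ m / (Nat.factorial m) ≤ Real.exp (u * Real.exp t) :=
    Real.pow_div_factorial_le_exp _ (show (0:ℝ) ≤ u * Real.exp t by positivity) m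
  have h2 : (u * Real.exp t) ^ m = u ^ m * Real.exp (t * m) := by
    rw [mul_pow, ← Real.exp_nat_mul]
    ring_nf
  rw [Real.exp_sub, le_div_iff₀ (Real.exp_pos _)]
  calc u ^ m / (Nat.factorial m) * Real.exp (t * m)
      = (u * Real.exp t) ^ m / (Nat.factorial m) := by rw [h2]; ring
    _ ≤ Real.exp (u * Real.exp t) := h1

/-- exp t ≤ 1 + t + t^2 on [0,1] -/
lemma myExpQuad {t : ℝ} (h0 : 0 ≤ t) (h1 : t ≤ 1) : Real.exp t ≤ 1 + t + t ^ 2 := by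
  have := Real.exp_bound' h0 h1 (n := 2) (by norm_num)
  simp only [Finset.sum_range_succ, Finset.sum_range_zero] at this
  norm_num at this
  nlinarith [sq_nonneg t]

/-- log n ≥ 2 for n ≥ 8 -/
lemma myLogGe {x : ℝ} (hx : 8 ≤ x) : 2 ≤ Real.log x := by
  have h8 : Real.log 8 ≤ Real.log x := Real.log_le_log (by norm_num) hx
  have : Real.log 8 = 3 * Real.log 2 := by
    rw [show (8:ℝ) = 2 ^ 3 by norm_num, Real.log_pow]; push_cast; ring
  nlinarith [Real.log_two_gt_d9]

/-- The eventual inequality E. -/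
lemma myE {x : ℝ} (hx : (1536:ℝ) ^ 4 ≤ x) :
    Real.log (32 * x * Real.log x) ≤ x / (8 * (Real.log x) ^ 2) := by
  have hx1 : (1:ℝ) < x := by nlinarith
  have hx0 : (0:ℝ) < x := by linarith
  set w := Real.sqrt (Real.sqrt x) with hw
  have hw0 : 0 < w := Real.sqrt_pos.2 (Real.sqrt_pos.2 hx0)
  have hwx : w ^ 2 = Real.sqrt x := Real.sq_sqrt (Real.sqrt_nonneg x)
  have hx4 : w ^ 4 = x := by
    have : (w ^ 2) ^ 2 = x := by rw [hwx]; exact Real.sq_sqrt hx0.le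
    nlinarith [this]
  have hw1536 : (1536:ℝ) ≤ w := by
    have h1 : Real.sqrt ((1536:ℝ)^4) ≤ Real.sqrt x := Real.sqrt_le_sqrt hx
    have e1 : Real.sqrt ((1536:ℝ)^4) = 1536 ^ 2 := by
      rw [show ((1536:ℝ)^4) = (1536 ^ 2) ^ 2 by ring]
      exact Real.sqrt_sq (by positivity)
    have h2 : Real.sqrt (Real.sqrt ((1536:ℝ)^4)) ≤ w := Real.sqrt_le_sqrt h1
    have e2 : Real.sqrt (Real.sqrt ((1536:ℝ)^4)) = 1536 := by
      rw [e1, show ((1536:ℝ)^2) = 1536 ^ 2 by ring]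
      exact Real.sqrt_sq (by norm_num)
    linarith
  have hlogx : Real.log x ≤ 4 * w := by
    have h1 : Real.log x = 4 * Real.log w := by
      rw [hw, Real.log_sqrt (Real.sqrt_nonneg x), Real.log_sqrt hx0.le]; ring
    have h2 : Real.log w ≤ w := by
      linarith [Real.log_le_sub_one_of_pos hw0]
    linarith
  have hlogpos : 0 < Real.log x := Real.log_pos hx1
  -- step 1 : log (32 x log x) ≤ 3 log x
  have hlogxle : Real.log x ≤ x := by linarith [Real.log_le_sub_one_of_pos hx0]
  have step1 : Real.log (32 * x * Real.log x) ≤ 3 * Real.log x := by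
    have h32 : (32:ℝ) ≤ x := by nlinarith
    have harg : 32 * x * Real.log x ≤ x ^ 3 := by
      nlinarith [mul_le_mul_of_nonneg_left hlogxle (show (0:ℝ) ≤ 32*x by positivity),
        sq_nonneg x]
    have hpos : 0 < 32 * x * Real.log x := by positivity
    calc Real.log (32 * x * Real.log x) ≤ Real.log (x ^ 3) :=
          Real.log_le_log hpos harg
      _ = 3 * Real.log x := by rw [Real.log_pow]; push_cast; ring
  -- step 2 : 3 log x ≤ x / (8 log^2 x)
  have step2 : 3 * Real.log x ≤ x / (8 * (Real.log x) ^ 2) := by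
    rw [le_div_iff₀ (by positivity)]
    have : 24 * (Real.log x) ^ 3 ≤ x := by
      calc 24 * (Real.log x) ^ 3 ≤ 24 * (4 * w) ^ 3 := by
            have : (Real.log x) ^ 3 ≤ (4 * w) ^ 3 := by
              apply pow_le_pow_left₀ hlogpos.le hlogx
            linarith
        _ = 1536 * w ^ 3 := by ring
        _ ≤ w * w ^ 3 := by nlinarith
        _ = x := by rw [← hx4]; ring
    nlinarith [sq_nonneg (Real.log x)]
  linarith

/-- Key single-term decay. -/
lemma myKey (n : ℕ) (hn : 1536 ^ 4 ≤ n) (u : ℝ) (h0 : 0 ≤ u)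
    (hu : u ≤ (n:ℝ) - n / Real.log n) :
    u ^ (n+1) / (Nat.factorial (n+1)) ≤ Real.exp u / (32 * n * Real.log n) := by
  have hn8 : (8:ℝ) ≤ (n:ℝ) := by
    have : (8:ℕ) ≤ n := le_trans (by norm_num) hn
    exact_mod_cast this
  have hnpos : (0:ℝ) < n := by linarith
  have hlog : 2 ≤ Real.log n := myLogGe hn8
  have hlogpos : 0 < Real.log n := by linarith
  have hE : Real.log (32 * n * Real.log n) ≤ (n:ℝ) / (8 * (Real.log n) ^ 2) := by
    apply myE
    have : ((1536:ℕ) ^ 4 : ℝ) ≤ (n:ℝ) := by exact_mod_cast hn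
    push_cast at this
    linarith
  set L := Real.log (32 * n * Real.log n) with hL
  have hD : (0:ℝ) < 32 * n * Real.log n := by positivity
  have hgap : (0:ℝ) < (n:ℝ) / Real.log n := by positivity
  have hun1 : u < (n:ℝ) + 1 := by linarith
  have hexpL : Real.exp u / (32 * n * Real.log n) = Real.exp (u - L) := by
    rw [Real.exp_sub, hL, Real.exp_log hD]
  rw [hexpL]
  have hL32 : L ≤ (n:ℝ) / 32 := by
    have h1 : (n:ℝ) / (8 * (Real.log n) ^ 2) ≤ (n:ℝ) / 32 := by
      apply div_le_div_of_nonneg_left hnpos.le (by norm_num)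
      nlinarith
    linarith
  by_cases hcase : u ≤ ((n:ℝ) + 1) / 2
  · -- Case A : t = 1
    have hch := myChernoff u h0 1 (n+1)
    have he : Real.exp 1 < 2.7182818286 := Real.exp_one_lt_d9
    have he1 : (1:ℝ) ≤ Real.exp 1 := Real.one_le_exp (by norm_num)
    have hmono : u * Real.exp 1 - 1 * ((n:ℕ)+1 : ℝ) ≤ u - L := by
      have hprod : u * (Real.exp 1 - 1) ≤ ((n:ℝ)+1)/2 * (Real.exp 1 - 1) :=
        mul_le_mul_of_nonneg_right hcase (by linarith)
      nlinarith
    calc u ^ (n+1) / (Nat.factorial (n+1)) ≤ Real.exp (u * Real.exp 1 - 1 * ((n:ℕ)+1 : ℝ)) := by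
          have := myChernoff u h0 1 (n+1)
          push_cast at this ⊢
          convert this using 3
      _ ≤ Real.exp (u - L) := Real.exp_le_exp.2 hmono
  · -- Case B
    push_neg at hcase
    have hu0 : 0 < u := by linarith
    set g : ℝ := (n:ℝ) + 1 - u with hg
    have hgpos : 0 < g := by simp only [hg]; linarith
    set t : ℝ := g / (2 * u) with ht
    have ht0 : 0 < t := by positivity
    have ht1 : t ≤ 1 := by
      rw [ht, div_le_one (by positivity)]
      simp only [hg]; linarith
    have hexpt : Real.exp t ≤ 1 + t + t ^ 2 := myExpQuad ht0.le ht1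
    have hch := myChernoff u h0 t (n+1)
    have hexpr : u * (1 + t + t ^ 2) - t * ((n:ℝ)+1) = u - g ^ 2 / (4 * u) := by
      rw [ht]
      field_simp
      ring
    have hgL : L ≤ g ^ 2 / (4 * u) := by
      have hgge : (n:ℝ) / Real.log n ≤ g := by
        simp only [hg]; linarith
      have h4u : 4 * u ≤ 8 * (n:ℝ) := by linarith
      have h1 : ((n:ℝ) / Real.log n) ^ 2 / (8 * (n:ℝ)) ≤ g ^ 2 / (4 * u) := by
        apply div_le_div₀ (by positivity) _ (by positivity) h4u
        apply pow_le_pow_left₀ (by positivity) hgge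
      have h2 : ((n:ℝ) / Real.log n) ^ 2 / (8 * (n:ℝ)) = (n:ℝ) / (8 * (Real.log n) ^ 2) := by
        field_simp
      rw [h2] at h1
      linarith
    have hmono : u * Real.exp t - t * ((n:ℕ)+1 : ℝ) ≤ u - L := by
      have h3 : u * Real.exp t ≤ u * (1 + t + t ^ 2) :=
        mul_le_mul_of_nonneg_left hexpt hu0.le
      push_cast
      nlinarith [hexpr]
    calc u ^ (n+1) / (Nat.factorial (n+1)) ≤ Real.exp (u * Real.exp t - t * ((n:ℕ)+1 : ℝ)) := by
          have := myChernoff u h0 t (n+1)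
          push_cast at this ⊢
          convert this using 3
      _ ≤ Real.exp (u - L) := Real.exp_le_exp.2 hmono

/-- Tail of the exponential series is small for `u ≤ n - n / log n`. -/
lemma myTailC (n : ℕ) (hn : 1536 ^ 4 ≤ n) (u : ℝ) (h0 : 0 ≤ u)
    (hu : u ≤ (n:ℝ) - n / Real.log n) :
    Real.exp u - ∑ i ∈ Finset.range (n+1), u ^ i / (Nat.factorial i)
      ≤ Real.exp u / (16 * n) := by
  have hn8 : (8:ℝ) ≤ (n:ℝ) := by
    have : (8:ℕ) ≤ n := le_trans (by norm_num) hn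
    exact_mod_cast this
  have hnpos : (0:ℝ) < n := by linarith
  have hlog : 2 ≤ Real.log n := myLogGe hn8
  have hlogpos : 0 < Real.log n := by linarith
  have hgap : (0:ℝ) < (n:ℝ) / Real.log n := by positivity
  have hun2 : u < (n:ℝ) + 2 := by linarith
  have htail := myTailLe n u h0 hun2
  have hkey := myKey n hn u h0 hu
  have hgapu : (n:ℝ) / Real.log n ≤ (n:ℝ) + 2 - u := by linarith
  have hid : (n:ℝ) / Real.log n * Real.log n = n := div_mul_cancel₀ _ (ne_of_gt hlogpos)
  have hfactor : ((n:ℝ)+2) / ((n:ℝ)+2-u) ≤ 2 * Real.log n := by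
    rw [div_le_iff₀ (by linarith)]
    have hmul : 2 * Real.log n * ((n:ℝ) / Real.log n) ≤ 2 * Real.log n * ((n:ℝ)+2-u) :=
      mul_le_mul_of_nonneg_left hgapu (by linarith)
    nlinarith
  have hterm0 : (0:ℝ) ≤ u ^ (n+1) / (Nat.factorial (n+1)) := by positivity
  have hfac0 : (0:ℝ) ≤ ((n:ℝ)+2) / ((n:ℝ)+2-u) := by
    apply div_nonneg (by linarith) (by linarith)
  calc Real.exp u - ∑ i ∈ Finset.range (n+1), u ^ i / (Nat.factorial i)
      ≤ u ^ (n+1) / (Nat.factorial (n+1)) * (((n:ℝ)+2) / ((n:ℝ)+2-u)) := htail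
    _ ≤ Real.exp u / (32 * n * Real.log n) * (2 * Real.log n) :=
        mul_le_mul hkey hfactor hfac0 (by positivity)
    _ = Real.exp u / (16 * n) := by
        field_simp
        ring


lemma myAux1 (x y : ℝ) : (x + y) ^ 2 / 4 ≤ (x ^ 2 + y ^ 2) / 2 := by
  nlinarith [sq_nonneg (x - y)]

lemma myAux2 (x y : ℝ) : x * y ≤ (x ^ 2 + y ^ 2) / 2 := by
  nlinarith [sq_nonneg (x - y)]

lemma myAux3 (τ σ : ℝ) (hτ : 12 ≤ τ) (h : τ ^ 2 / 4 ≤ σ) : 4 * τ ^ 2 ≤ Real.exp σ := by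
  have h1 : Real.exp (τ ^ 2 / 4) ≤ Real.exp σ := Real.exp_le_exp.2 h
  have h2 : 1 + τ ^ 2 / 4 + (τ ^ 2 / 4) ^ 2 / 2 ≤ Real.exp (τ ^ 2 / 4) :=
    Real.quadratic_le_exp_of_nonneg (by positivity)
  have h144 : 144 ≤ τ ^ 2 := by nlinarith
  nlinarith [h144, sq_nonneg τ, h1, h2]

set_option maxHeartbeats 1000000 in
/-- With `α_n = √n / log n`: there are `N` and `T > 0` such that for all even `n ≥ N`,
`τ ≥ T`, and `s` with `s(s+τ) < 0`, `0 < |s| < √n − α_n`, `0 < |s+τ| < √n − α_n`,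
one has `A_n(s, s+τ) ≤ τ⁻²`. -/
theorem weylCorr_decay_opposite_signs :
    ∃ (N : ℕ) (T : ℝ), 0 < T ∧
      ∀ n : ℕ, N ≤ n → Even n → ∀ τ : ℝ, T ≤ τ → ∀ s : ℝ,
        s * (s + τ) < 0 →
        0 < |s| → |s| < Real.sqrt n - Real.sqrt n / Real.log n →
        0 < |s + τ| → |s + τ| < Real.sqrt n - Real.sqrt n / Real.log n →
        weylCorr n s (s + τ) ≤ 1 / τ ^ 2 := by
  refine ⟨1536 ^ 4, 12, by norm_num, ?_⟩
  intro n hn _heven τ hτ s hmul habs0 habsb ht0 htb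
  have hn8 : (8:ℝ) ≤ (n:ℝ) := by
    have : (8:ℕ) ≤ n := le_trans (by norm_num) hn
    exact_mod_cast this
  have hnpos : (0:ℝ) < n := by linarith
  have hlog : 2 ≤ Real.log n := myLogGe hn8
  have hlogpos : 0 < Real.log n := by linarith
  have hτ0 : (0:ℝ) < τ := lt_of_lt_of_le (by norm_num) hτ
  have hsneg : s < 0 := by
    by_contra h
    push_neg at h
    nlinarith
  have hypos : 0 < s + τ := by
    by_contra h
    push_neg at h
    nlinarith
  set x : ℝ := -s with hxdef
  set y : ℝ := s + τ with hydef
  have hxabs : |s| = x := abs_of_neg hsneg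
  have hyabs : |s + τ| = y := abs_of_pos hypos
  rw [hxabs] at habs0 habsb
  rw [hyabs] at ht0 htb
  have hτxy : τ = x + y := by simp only [hxdef, hydef]; ring
  clear_value x y
  set β : ℝ := Real.sqrt n - Real.sqrt n / Real.log n with hβdef
  clear_value β
  have hβpos : 0 < β := lt_trans habs0 habsb
  have hr2 : (Real.sqrt n) ^ 2 = (n:ℝ) := Real.sq_sqrt (by positivity)
  have hrnn : 0 ≤ Real.sqrt n := Real.sqrt_nonneg _
  have hβle : β ≤ Real.sqrt n := by
    have : 0 ≤ Real.sqrt n / Real.log n := by positivity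
    simp only [hβdef]; linarith
  -- β² ≤ n - n / log n
  have hβexp : β ^ 2 = (n:ℝ) - 2 * ((n:ℝ) / Real.log n) + (n:ℝ) / (Real.log n) ^ 2 := by
    have h1 : β ^ 2 = (Real.sqrt n) ^ 2 - 2 * ((Real.sqrt n) ^ 2 / Real.log n)
        + (Real.sqrt n) ^ 2 / (Real.log n) ^ 2 := by
      rw [hβdef]; ring
    rw [h1, hr2]
  have hdivle : (n:ℝ) / (Real.log n) ^ 2 ≤ (n:ℝ) / Real.log n := by
    apply div_le_div_of_nonneg_left hnpos.le hlogpos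
    nlinarith [hlog, sq_nonneg (Real.log n - 1)]
  have hβ2 : β ^ 2 ≤ (n:ℝ) - (n:ℝ) / Real.log n := by
    rw [hβexp]; linarith
  have hx2 : x ^ 2 ≤ (n:ℝ) - (n:ℝ) / Real.log n := by
    have : x ^ 2 ≤ β ^ 2 := pow_le_pow_left₀ habs0.le habsb.le 2
    linarith
  have hy2 : y ^ 2 ≤ (n:ℝ) - (n:ℝ) / Real.log n := by
    have : y ^ 2 ≤ β ^ 2 := pow_le_pow_left₀ ht0.le htb.le 2
    linarith
  set u : ℝ := x * y with hudef
  clear_value u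
  have hu0 : 0 < u := by rw [hudef]; exact mul_pos habs0 ht0
  have hu2 : u ≤ (n:ℝ) - (n:ℝ) / Real.log n := by
    have h1 : u ≤ β * β := by
      rw [hudef]; exact mul_le_mul habsb.le htb.le ht0.le hβpos.le
    have h2 : β * β = β ^ 2 := (sq β).symm
    linarith only [h1, h2, hβ2]
  -- sums
  have hTx := myTailC n hn (x ^ 2) (by positivity) hx2
  have hTy := myTailC n hn (y ^ 2) (by positivity) hy2
  have hTu := myTailC n hn u hu0.le hu2
  set Sx : ℝ := ∑ i ∈ Finset.range (n+1), (x ^ 2) ^ i / (Nat.factorial i) with hSxdef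
  set Sy : ℝ := ∑ i ∈ Finset.range (n+1), (y ^ 2) ^ i / (Nat.factorial i) with hSydef
  set P : ℝ := ∑ i ∈ Finset.range (n+1), (-u) ^ i / (Nat.factorial i) with hPdef
  clear_value Sx Sy P
  have h16 : Real.exp (x ^ 2) / (16 * n) ≤ Real.exp (x ^ 2) / 2 := by
    apply div_le_div_of_nonneg_left (Real.exp_pos _).le (by norm_num)
    linarith
  have h16y : Real.exp (y ^ 2) / (16 * n) ≤ Real.exp (y ^ 2) / 2 := by
    apply div_le_div_of_nonneg_left (Real.exp_pos _).le (by norm_num)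
    linarith
  have hSx : Real.exp (x ^ 2) / 2 ≤ Sx := by linarith
  have hSy : Real.exp (y ^ 2) / 2 ≤ Sy := by linarith
  have hP : P ≤ Real.exp (-u) + Real.exp u / (16 * n) := by
    have h1 := myPartialLe n (-u)
    have h2 : |(-u)| = u := by rw [abs_neg, abs_of_pos hu0]
    rw [h2] at h1
    linarith
  -- rewrite goal
  have hgoalrw : weylCorr n s y = P / (Real.sqrt Sx * Real.sqrt Sy) := by
    rw [hPdef, hSxdef, hSydef, hudef, hxdef, hydef]
    unfold weylCorr
    congr 1
    · apply Finset.sum_congr rfl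
      intro i _
      congr 1
      rw [show s * (s + τ) = -(-s * (s + τ)) by ring]
    · congr 2
      · apply Finset.sum_congr rfl
        intro i _
        rw [pow_mul, neg_sq]
      · apply Finset.sum_congr rfl
        intro i _
        rw [pow_mul]
  rw [hgoalrw]
  -- denominator positivity and lower bound
  have hSxpos : 0 < Sx := lt_of_lt_of_le (by positivity) hSx
  have hSypos : 0 < Sy := lt_of_lt_of_le (by positivity) hSy
  have hden : 0 < Real.sqrt Sx * Real.sqrt Sy := by positivity
  set σ : ℝ := (x ^ 2 + y ^ 2) / 2 with hσdef
  clear_value σ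
  have hDge : Real.exp σ / 2 ≤ Real.sqrt Sx * Real.sqrt Sy := by
    rw [← Real.sqrt_mul hSxpos.le]
    rw [Real.le_sqrt (by positivity) (by positivity)]
    have hsq : (Real.exp σ / 2) ^ 2 = (Real.exp (x ^ 2) / 2) * (Real.exp (y ^ 2) / 2) := by
      rw [div_pow, ← Real.exp_nat_mul]
      push_cast
      rw [show (2:ℝ) * σ = x ^ 2 + y ^ 2 by rw [hσdef]; ring, Real.exp_add]
      ring
    rw [hsq]
    apply mul_le_mul hSx hSy (by positivity) (by positivity)
  -- scalar facts
  have hτn : τ ^ 2 ≤ 4 * n := by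
    have hxr : x < Real.sqrt n := lt_of_lt_of_le habsb hβle
    have hyr : y < Real.sqrt n := lt_of_lt_of_le htb hβle
    have h2 : τ ≤ 2 * Real.sqrt n := by rw [hτxy]; linarith
    have h3 : τ ^ 2 ≤ (2 * Real.sqrt n) ^ 2 := pow_le_pow_left₀ hτ0.le h2 2
    have h4 : (2 * Real.sqrt n) ^ 2 = 4 * (n:ℝ) := by rw [mul_pow, hr2]; norm_num
    linarith only [h3, h4]
  have hσget : τ ^ 2 / 4 ≤ σ := by
    rw [hσdef, hτxy]; exact myAux1 x y
  have huσ : u ≤ σ := by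
    rw [hσdef, hudef]; exact myAux2 x y
  have hexpσ : 4 * τ ^ 2 ≤ Real.exp σ := myAux3 τ σ hτ hσget
  have hbound1 : Real.exp (-u) ≤ Real.exp σ / (4 * τ ^ 2) := by
    have h1 : Real.exp (-u) ≤ 1 := Real.exp_le_one_iff.2 (by linarith only [hu0])
    rw [le_div_iff₀ (by positivity)]
    calc Real.exp (-u) * (4 * τ ^ 2) ≤ 1 * (4 * τ ^ 2) :=
          mul_le_mul_of_nonneg_right h1 (by positivity)
      _ ≤ Real.exp σ := by rw [one_mul]; exact hexpσ
  have hbound2 : Real.exp u / (16 * n) ≤ Real.exp σ / (4 * τ ^ 2) := by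
    rw [div_le_div_iff₀ (by positivity) (by positivity)]
    apply mul_le_mul (Real.exp_le_exp.2 huσ) (by linarith) (by positivity) (Real.exp_pos _).le
  rw [div_le_iff₀ hden]
  calc P ≤ Real.exp (-u) + Real.exp u / (16 * n) := hP
    _ ≤ Real.exp σ / (4 * τ ^ 2) + Real.exp σ / (4 * τ ^ 2) := by
        linarith only [hbound1, hbound2]
    _ = (1 / τ ^ 2) * (Real.exp σ / 2) := by ring
    _ ≤ (1 / τ ^ 2) * (Real.sqrt Sx * Real.sqrt Sy) := by
        apply mul_le_mul_of_nonneg_left hDge (by positivity)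
end

section
/- There exists u₀ ∈ (0,1) such that for every u ∈ (0, u₀], every even n ∈ ℕ, and all real s, t with s·t < 0 and 0 ≤ t − s ≤ u, one has A_n(s,t) ≥ 1 − u². -/
set_option maxHeartbeats 1000000

open Filter Finset

lemma weyl_aux_even_sum (r : ℝ) (h1 : -1 ≤ r) (h0 : r ≤ 0) (m : ℕ) :
    1 + r ≤ ∑ i ∈ Finset.range (2 * m + 1), r ^ i / (Nat.factorial i) := by
  cases m with
  | zero => simp; linarith
  | succ m =>
    have key : ∀ k : ℕ, 1 + r ≤ ∑ i ∈ Finset.range (2 * (k + 1)), r ^ i / (Nat.factorial i) := by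
      intro k
      induction k with
      | zero =>
        norm_num [Finset.sum_range_succ]
      | succ k ih =>
        have h2 : 2 * (k + 1 + 1) = (2 * (k + 1)) + 1 + 1 := by ring
        rw [h2, Finset.sum_range_succ, Finset.sum_range_succ]
        set N := 2 * (k + 1) with hN
        have hpow : (0 : ℝ) ≤ r ^ N := by
          have : Even N := even_two_mul _
          exact this.pow_nonneg r
        have hfac : (0 : ℝ) < (Nat.factorial N : ℝ) := by positivity
        have hfacp : (0 : ℝ) < (Nat.factorial (N + 1) : ℝ) := by positivity
        have hfac2 : (Nat.factorial N : ℝ) ≤ (Nat.factorial (N + 1) : ℝ) := by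
          exact_mod_cast Nat.factorial_le (Nat.le_succ N)
        have hterm : 0 ≤ r ^ N / (Nat.factorial N : ℝ) + r ^ (N + 1) / (Nat.factorial (N + 1) : ℝ) := by
          have h3 : r ^ (N + 1) = r ^ N * r := by ring
          have h5 : -(r ^ N / (Nat.factorial N : ℝ)) ≤ r ^ (N + 1) / (Nat.factorial (N + 1) : ℝ) := by
            rw [h3, ← neg_div, div_le_div_iff₀ hfac hfacp]
            have e1 : -(r ^ N) * (Nat.factorial (N + 1) : ℝ) ≤ -(r ^ N) * (Nat.factorial N : ℝ) :=
              mul_le_mul_of_nonpos_left hfac2 (neg_nonpos.mpr hpow)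
            have e2 : -(r ^ N) * (Nat.factorial N : ℝ) ≤ (r ^ N * r) * (Nat.factorial N : ℝ) := by
              apply mul_le_mul_of_nonneg_right ?_ hfac.le
              nlinarith
            linarith
          linarith
        linarith [ih]
    rw [Finset.sum_range_succ]
    have hpow : (0 : ℝ) ≤ r ^ (2 * (m + 1)) / (Nat.factorial (2 * (m + 1)) : ℝ) := by
      have he : Even (2 * (m + 1)) := even_two_mul _
      have := he.pow_nonneg r
      positivity
    linarith [key m]

lemma weyl_denom_bound (n : ℕ) (x : ℝ) :
    1 ≤ ∑ i ∈ Finset.range (n + 1), x ^ (2 * i) / (Nat.factorial i) ∧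
    ∑ i ∈ Finset.range (n + 1), x ^ (2 * i) / (Nat.factorial i) ≤ Real.exp (x ^ 2) := by
  have hrw : ∀ i, x ^ (2 * i) = (x ^ 2) ^ i := fun i => by rw [pow_mul]
  constructor
  · rw [Finset.sum_range_succ']
    simp only [hrw]
    have h0 : (0:ℝ) ≤ ∑ i ∈ Finset.range n, (x ^ 2) ^ (i + 1) / (Nat.factorial (i + 1)) := by
      apply Finset.sum_nonneg
      intro i _
      positivity
    simp only [pow_zero, Nat.factorial_zero, Nat.cast_one, div_one] at *
    linarith
  · simp only [hrw]
    exact Real.sum_le_exp_of_nonneg (sq_nonneg x) (n + 1)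

/-- There is `u₀ ∈ (0,1)` such that for every `u ∈ (0, u₀]`, every even `n`, and all
`s, t` with `st < 0` and `0 ≤ t − s ≤ u`, one has `A_n(s,t) ≥ 1 − u²`. -/
theorem weylCorr_near_one_opposite_signs :
    ∃ u₀ : ℝ, 0 < u₀ ∧ u₀ < 1 ∧
      ∀ u : ℝ, 0 < u → u ≤ u₀ → ∀ n : ℕ, Even n → ∀ s t : ℝ,
        s * t < 0 → 0 ≤ t - s → t - s ≤ u →
        1 - u ^ 2 ≤ weylCorr n s t := by
  refine ⟨1/2, by norm_num, by norm_num, ?_⟩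
  intro u hu hu2 n hn s t hst hts1 hts2
  obtain ⟨m, hm⟩ := hn
  have hn1 : n + 1 = 2 * m + 1 := by omega
  have hs : s < 0 := by
    by_contra h
    push_neg at h
    nlinarith
  have ht : 0 < t := by
    by_contra h
    push_neg at h
    nlinarith
  set r := s * t with hrdef
  have hr4 : -(u ^ 2) / 4 ≤ r := by nlinarith [sq_nonneg (t + s)]
  have hr1 : -1 ≤ r := by nlinarith
  have hr0 : r ≤ 0 := le_of_lt hst
  have hQ : 1 + r ≤ ∑ i ∈ Finset.range (n + 1), r ^ i / (Nat.factorial i) := by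
    rw [hn1]; exact weyl_aux_even_sum r hr1 hr0 m
  obtain ⟨hPs1, hPs2⟩ := weyl_denom_bound n s
  obtain ⟨hPt1, hPt2⟩ := weyl_denom_bound n t
  set Ps := ∑ i ∈ Finset.range (n + 1), s ^ (2 * i) / (Nat.factorial i) with hPs
  set Pt := ∑ i ∈ Finset.range (n + 1), t ^ (2 * i) / (Nat.factorial i) with hPt
  have hsqs : Real.sqrt Ps ≤ Real.exp (s ^ 2 / 2) := by
    rw [Real.exp_half]
    exact Real.sqrt_le_sqrt hPs2
  have hsqt : Real.sqrt Pt ≤ Real.exp (t ^ 2 / 2) := by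
    rw [Real.exp_half]
    exact Real.sqrt_le_sqrt hPt2
  have hsqs1 : 1 ≤ Real.sqrt Ps := Real.one_le_sqrt.mpr hPs1
  have hsqt1 : 1 ≤ Real.sqrt Pt := Real.one_le_sqrt.mpr hPt1
  have hDpos : 0 < Real.sqrt Ps * Real.sqrt Pt := by nlinarith
  have hDle : Real.sqrt Ps * Real.sqrt Pt ≤ Real.exp ((s ^ 2 + t ^ 2) / 2) := by
    calc Real.sqrt Ps * Real.sqrt Pt ≤ Real.exp (s ^ 2 / 2) * Real.exp (t ^ 2 / 2) := by
          apply mul_le_mul hsqs hsqt (Real.sqrt_nonneg _) (Real.exp_nonneg _)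
      _ = Real.exp ((s ^ 2 + t ^ 2) / 2) := by rw [← Real.exp_add]; ring_nf
  have hst2 : s ^ 2 + t ^ 2 ≤ u ^ 2 := by nlinarith
  have hDle2 : Real.sqrt Ps * Real.sqrt Pt ≤ Real.exp (u ^ 2 / 2) :=
    hDle.trans (Real.exp_le_exp.mpr (by linarith))
  -- exp(u²/2) ≤ 1/(1 - u²/2)
  have hu21 : u ^ 2 / 2 < 1 := by nlinarith
  have hexp : Real.exp (u ^ 2 / 2) ≤ 1 / (1 - u ^ 2 / 2) := by
    have h1 : 1 - u ^ 2 / 2 ≤ Real.exp (-(u ^ 2 / 2)) := by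
      have := Real.add_one_le_exp (-(u ^ 2 / 2))
      linarith
    have h2 : 0 < 1 - u ^ 2 / 2 := by linarith
    rw [le_div_iff₀ h2]
    calc Real.exp (u ^ 2 / 2) * (1 - u ^ 2 / 2)
        ≤ Real.exp (u ^ 2 / 2) * Real.exp (-(u ^ 2 / 2)) := by
          apply mul_le_mul_of_nonneg_left h1 (Real.exp_nonneg _)
      _ = 1 := by rw [← Real.exp_add]; simp
  -- final chain
  rw [weylCorr, ← hPs, ← hPt]
  rw [le_div_iff₀ hDpos]
  have hkey : (1 - u ^ 2) * (Real.sqrt Ps * Real.sqrt Pt) ≤ 1 - u ^ 2 / 4 := by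
    have hnn : 0 ≤ 1 - u ^ 2 := by nlinarith
    have h2 : 0 < 1 - u ^ 2 / 2 := by linarith
    calc (1 - u ^ 2) * (Real.sqrt Ps * Real.sqrt Pt)
        ≤ (1 - u ^ 2) * (1 / (1 - u ^ 2 / 2)) := by
          apply mul_le_mul_of_nonneg_left (hDle2.trans hexp) hnn
      _ ≤ 1 - u ^ 2 / 4 := by
          rw [mul_one_div, div_le_iff₀ h2]
          nlinarith
  calc (1 - u ^ 2) * (Real.sqrt Ps * Real.sqrt Pt) ≤ 1 - u ^ 2 / 4 := hkey
    _ ≤ 1 + r := by linarith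
    _ ≤ ∑ i ∈ Finset.range (n + 1), r ^ i / (Nat.factorial i) := hQ
end

section
/- There exists u₀ ∈ (0,1) such that for every u ∈ (0, u₀], every n ∈ ℕ with 1 ≤ n ≤ √(|log u|), and all real s, t with 0 ≤ t − s ≤ u and 0 ≤ s ≤ √n − α_n and 0 ≤ t ≤ √n − α_n, one has A_n(s,t) ≥ 1 − u. -/
open Filter Finset

private lemma pow_diff_le {s t : ℝ} (hs : 0 ≤ s) (hst : s ≤ t) :
    ∀ m : ℕ, t ^ m - s ^ m ≤ (m : ℝ) * t ^ (m - 1) * (t - s) := by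
  intro m
  induction m with
  | zero => simp
  | succ k ih =>
    have ht : 0 ≤ t := hs.trans hst
    have h3 : (t - s) * s ^ k ≤ (t - s) * t ^ k :=
      mul_le_mul_of_nonneg_left (pow_le_pow_left₀ hs hst k) (by linarith)
    have h2 : t * (t ^ k - s ^ k) ≤ t * ((k : ℝ) * t ^ (k - 1) * (t - s)) :=
      mul_le_mul_of_nonneg_left ih ht
    have h4 : t * ((k : ℝ) * t ^ (k - 1) * (t - s)) ≤ (k : ℝ) * t ^ k * (t - s) := by
      rcases Nat.eq_zero_or_pos k with hk | hk
      · subst hk; simp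
      · have htk : t * t ^ (k - 1) = t ^ k := by
          rw [← pow_succ']
          congr 1
          omega
        refine le_of_eq ?_
        rw [← htk]; ring
    have hid : t ^ (k + 1) - s ^ (k + 1) = t * (t ^ k - s ^ k) + (t - s) * s ^ k := by ring
    have hfin : ((k : ℝ) + 1) * t ^ k * (t - s) = (k : ℝ) * t ^ k * (t - s) + (t - s) * t ^ k := by
      ring
    have : t ^ (k + 1) - s ^ (k + 1) ≤ ((k : ℝ) + 1) * t ^ k * (t - s) := by
      rw [hid, hfin]; linarith
    simpa using this

private lemma sum_shift_le (g : ℕ → ℝ) (hg : ∀ m, 0 ≤ g m) (hg0 : g 0 = 0) (N i : ℕ) :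
    ∑ j ∈ range N, g (j - i) ≤ ∑ m ∈ range N, g m := by
  rcases le_or_gt N i with hNi | hiN
  · have hz : ∑ j ∈ range N, g (j - i) = 0 :=
      Finset.sum_eq_zero fun j hj => by
        rw [Nat.sub_eq_zero_of_le (le_of_lt (lt_of_lt_of_le (Finset.mem_range.mp hj) hNi))]
        exact hg0
    rw [hz]
    exact Finset.sum_nonneg fun m _ => hg m
  · rw [Finset.range_eq_Ico, ← Finset.sum_Ico_consecutive _ (Nat.zero_le i) hiN.le]
    have h1 : ∑ j ∈ Finset.Ico 0 i, g (j - i) = 0 :=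
      Finset.sum_eq_zero fun j hj => by
        rw [Nat.sub_eq_zero_of_le (Finset.mem_Ico.mp hj).2.le]
        exact hg0
    rw [h1, zero_add, Finset.sum_Ico_eq_sum_range]
    simp only [Nat.add_sub_cancel_left]
    rw [← Finset.range_eq_Ico]
    exact Finset.sum_le_sum_of_subset_of_nonneg
      (Finset.range_subset_range.mpr (Nat.sub_le N i)) (fun m _ _ => hg m)

/-- With `α_n = √n / log n`: there is `u₀ ∈ (0,1)` such that for every `u ∈ (0, u₀]`,
every `n` with `1 ≤ n ≤ √|log u|`, and all `s, t ∈ [0, √n − α_n]` with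
`0 ≤ t − s ≤ u`, one has `A_n(s,t) ≥ 1 − u`. -/
theorem weylCorr_near_one_small_n :
    ∃ u₀ : ℝ, 0 < u₀ ∧ u₀ < 1 ∧
      ∀ u : ℝ, 0 < u → u ≤ u₀ → ∀ n : ℕ, 1 ≤ n →
        (n : ℝ) ≤ Real.sqrt |Real.log u| → ∀ s t : ℝ,
        0 ≤ t - s → t - s ≤ u →
        0 ≤ s → s ≤ Real.sqrt n - Real.sqrt n / Real.log n →
        0 ≤ t → t ≤ Real.sqrt n - Real.sqrt n / Real.log n →
        1 - u ≤ weylCorr n s t := by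
  have hu₀1 : Real.exp (-2) < 1 := by
    rw [show (1:ℝ) = Real.exp 0 from (Real.exp_zero).symm]
    exact Real.exp_lt_exp.mpr (by norm_num)
  refine ⟨Real.exp (-2), Real.exp_pos _, hu₀1, ?_⟩
  intro u hu hu0 n hn hnu s t hts htsu hs hsn ht htn
  -- basic facts
  have hu1 : u < 1 := lt_of_le_of_lt hu0 hu₀1
  have hst : s ≤ t := by linarith
  have ht0 : 0 ≤ t := ht
  have hlogn : 0 ≤ Real.log n := Real.log_nonneg (by exact_mod_cast hn)
  have htn' : t ≤ Real.sqrt n :=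
    htn.trans (sub_le_self _ (div_nonneg (Real.sqrt_nonneg _) hlogn))
  have ht2 : t ^ 2 ≤ (n : ℝ) := by
    calc t ^ 2 ≤ Real.sqrt n ^ 2 := pow_le_pow_left₀ ht0 htn' 2
      _ = (n : ℝ) := Real.sq_sqrt (by positivity)
  -- numeric fact : u * exp (2 n) ≤ 1
  have hlogu : Real.log u ≤ -2 := by
    have h := Real.log_le_log hu hu0
    rwa [Real.log_exp] at h
  have habs : |Real.log u| = -Real.log u := abs_of_neg (by linarith)
  have hn2 : (n : ℝ) ^ 2 ≤ -Real.log u := by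
    rw [habs] at hnu
    have h0 : (0 : ℝ) ≤ -Real.log u := by linarith
    calc ((n : ℝ)) ^ 2 ≤ Real.sqrt (-Real.log u) ^ 2 :=
          pow_le_pow_left₀ (by positivity) hnu 2
      _ = -Real.log u := Real.sq_sqrt h0
  have h2n : 2 * (n : ℝ) ≤ -Real.log u := by
    rcases eq_or_lt_of_le hn with h1 | h2
    · have : (n : ℝ) = 1 := by exact_mod_cast h1.symm
      rw [this]; linarith
    · have hn2' : (2 : ℝ) ≤ (n : ℝ) := by exact_mod_cast h2
      nlinarith
  have hnum : u * Real.exp (2 * (n : ℝ)) ≤ 1 := by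
    rw [show u = Real.exp (Real.log u) from (Real.exp_log hu).symm, ← Real.exp_add]
    rw [show (1 : ℝ) = Real.exp 0 from (Real.exp_zero).symm]
    exact Real.exp_le_exp.mpr (by linarith)
  -- notation
  set N := n + 1 with hN
  have fact_pos : ∀ k : ℕ, (0 : ℝ) < (Nat.factorial k : ℝ) := fun k => by
    exact_mod_cast Nat.factorial_pos k
  set A : ℕ → ℕ → ℝ := fun i j =>
    s ^ (2 * i) * t ^ (2 * j) / ((Nat.factorial i : ℝ) * (Nat.factorial j : ℝ)) with hA
  set B : ℕ → ℕ → ℝ := fun i j =>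
    (s * t) ^ (i + j) / ((Nat.factorial i : ℝ) * (Nat.factorial j : ℝ)) with hB
  set e : ℕ → ℕ → ℝ := fun i j =>
    (s ^ i * t ^ j - s ^ j * t ^ i) ^ 2 / ((Nat.factorial i : ℝ) * (Nat.factorial j : ℝ)) with he
  set h : ℕ → ℝ := fun c => (s * t) ^ (2 * c) / ((Nat.factorial c : ℝ)) ^ 2 with hh
  set g : ℕ → ℝ := fun m => (m : ℝ) ^ 2 * t ^ (2 * m - 2) / (Nat.factorial m : ℝ) with hg
  set Ps := ∑ i ∈ Finset.range N, s ^ (2 * i) / (Nat.factorial i : ℝ) with hPs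
  set Pt := ∑ i ∈ Finset.range N, t ^ (2 * i) / (Nat.factorial i : ℝ) with hPt
  set Q := ∑ i ∈ Finset.range N, (s * t) ^ i / (Nat.factorial i : ℝ) with hQdef
  set H := ∑ c ∈ Finset.range N, h c with hH
  set G := ∑ m ∈ Finset.range N, g m with hG
  clear_value A B e h g Ps Pt Q H G
  have hA0 : ∀ i j, 0 ≤ A i j := fun i j => by
    simp only [hA]
    exact div_nonneg (mul_nonneg (pow_nonneg hs _) (pow_nonneg ht0 _))
      (mul_nonneg (fact_pos i).le (fact_pos j).le)
  have hst0 : 0 ≤ s * t := mul_nonneg hs ht0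
  have hgnn : ∀ m, 0 ≤ g m := fun m => by
    simp only [hg]
    exact div_nonneg (mul_nonneg (by positivity) (pow_nonneg ht0 _)) (fact_pos m).le
  have hg0 : g 0 = 0 := by simp [hg]
  have hhnn : ∀ c, 0 ≤ h c := fun c => by
    simp only [hh]
    exact div_nonneg (pow_nonneg hst0 _) (by positivity)
  -- double sum expressions
  have hPsPt : Ps * Pt = ∑ i ∈ Finset.range N, ∑ j ∈ Finset.range N, A i j := by
    rw [hPs, hPt, Finset.sum_mul_sum]
    simp only [hA]
    exact Finset.sum_congr rfl fun i _ => Finset.sum_congr rfl fun j _ => (div_mul_div_comm _ _ _ _)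
  have hQQ : Q * Q = ∑ i ∈ Finset.range N, ∑ j ∈ Finset.range N, B i j := by
    rw [hQdef, Finset.sum_mul_sum]
    simp only [hB]
    refine Finset.sum_congr rfl fun i _ => Finset.sum_congr rfl fun j _ => ?_
    rw [div_mul_div_comm, ← pow_add]
  have hswap : (∑ i ∈ Finset.range N, ∑ j ∈ Finset.range N, A i j)
      = ∑ i ∈ Finset.range N, ∑ j ∈ Finset.range N, A j i := Finset.sum_comm
  have hident : 2 * (Ps * Pt - Q * Q) = ∑ i ∈ Finset.range N, ∑ j ∈ Finset.range N, e i j := by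
    have hterm : ∀ i j : ℕ, A i j + A j i - 2 * B i j = e i j := by
      intro i j
      have hi := (fact_pos i).ne'
      have hj := (fact_pos j).ne'
      simp only [hA, hB, he]
      field_simp
      ring
    calc 2 * (Ps * Pt - Q * Q)
        = (∑ i ∈ Finset.range N, ∑ j ∈ Finset.range N, A i j)
            + (∑ i ∈ Finset.range N, ∑ j ∈ Finset.range N, A j i)
            - 2 * (∑ i ∈ Finset.range N, ∑ j ∈ Finset.range N, B i j) := by
          rw [hPsPt, hQQ, ← hswap]; ring
      _ = ∑ i ∈ Finset.range N, ∑ j ∈ Finset.range N, (A i j + A j i - 2 * B i j) := by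
          rw [Finset.mul_sum, ← Finset.sum_add_distrib, ← Finset.sum_sub_distrib]
          refine Finset.sum_congr rfl fun i _ => ?_
          rw [Finset.mul_sum, ← Finset.sum_add_distrib, ← Finset.sum_sub_distrib]
      _ = ∑ i ∈ Finset.range N, ∑ j ∈ Finset.range N, e i j :=
          Finset.sum_congr rfl fun i _ => Finset.sum_congr rfl fun j _ => hterm i j
  -- core per-term bound
  have hcore : ∀ i m : ℕ, e i (i + m) ≤ (t - s) ^ 2 * (h i * g m) := by
    intro i m
    simp only [he, hh, hg]
    have hnum1 : s ^ i * t ^ (i + m) - s ^ (i + m) * t ^ i = (s * t) ^ i * (t ^ m - s ^ m) := by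
      rw [pow_add, pow_add, mul_pow]; ring
    have hd : t ^ m - s ^ m ≤ (m : ℝ) * t ^ (m - 1) * (t - s) := pow_diff_le hs hst m
    have hd0 : 0 ≤ t ^ m - s ^ m := sub_nonneg.mpr (pow_le_pow_left₀ hs hst m)
    have hsq : (t ^ m - s ^ m) ^ 2 ≤ (m : ℝ) ^ 2 * t ^ (2 * m - 2) * (t - s) ^ 2 := by
      have h1 : (t ^ m - s ^ m) ^ 2 ≤ ((m : ℝ) * t ^ (m - 1) * (t - s)) ^ 2 :=
        pow_le_pow_left₀ hd0 hd 2
      have h2 : ((m : ℝ) * t ^ (m - 1) * (t - s)) ^ 2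
          = (m : ℝ) ^ 2 * t ^ (2 * m - 2) * (t - s) ^ 2 := by
        rw [mul_pow, mul_pow, ← pow_mul, show (m - 1) * 2 = 2 * m - 2 from by omega]
      rw [h2] at h1; exact h1
    have hnumineq : (s ^ i * t ^ (i + m) - s ^ (i + m) * t ^ i) ^ 2
        ≤ (s * t) ^ (2 * i) * ((m : ℝ) ^ 2 * t ^ (2 * m - 2) * (t - s) ^ 2) := by
      rw [hnum1, mul_pow, ← pow_mul, mul_comm i 2]
      exact mul_le_mul_of_nonneg_left hsq (pow_nonneg hst0 _)
    have hdenineq : ((Nat.factorial i : ℝ)) ^ 2 * (Nat.factorial m : ℝ)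
        ≤ (Nat.factorial i : ℝ) * (Nat.factorial (i + m) : ℝ) := by
      have hfa : Nat.factorial i * Nat.factorial m ≤ Nat.factorial (i + m) :=
        Nat.le_of_dvd (Nat.factorial_pos _) (Nat.factorial_mul_factorial_dvd_factorial_add i m)
      have hfa' : (Nat.factorial i * Nat.factorial m : ℝ) ≤ (Nat.factorial (i + m) : ℝ) := by
        exact_mod_cast hfa
      have := mul_le_mul_of_nonneg_left hfa' (fact_pos i).le
      calc ((Nat.factorial i : ℝ)) ^ 2 * (Nat.factorial m : ℝ)
          = (Nat.factorial i : ℝ) * ((Nat.factorial i : ℝ) * (Nat.factorial m : ℝ)) := by ring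
        _ ≤ (Nat.factorial i : ℝ) * (Nat.factorial (i + m) : ℝ) := by push_cast at this ⊢; linarith
    have hstep : (s ^ i * t ^ (i + m) - s ^ (i + m) * t ^ i) ^ 2
          / ((Nat.factorial i : ℝ) * (Nat.factorial (i + m) : ℝ))
        ≤ ((s * t) ^ (2 * i) * ((m : ℝ) ^ 2 * t ^ (2 * m - 2) * (t - s) ^ 2))
          / (((Nat.factorial i : ℝ)) ^ 2 * (Nat.factorial m : ℝ)) :=
      div_le_div₀ (by positivity) hnumineq (by positivity) hdenineq
    refine hstep.trans (le_of_eq ?_)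
    field_simp
  have hesymm : ∀ i j, e i j = e j i := by
    intro i j
    simp only [he]
    rw [show (s ^ i * t ^ j - s ^ j * t ^ i) ^ 2 = (s ^ j * t ^ i - s ^ i * t ^ j) ^ 2 from by ring,
      mul_comm ((Nat.factorial i : ℝ)) _]
  have hF2 : ∀ i j, e i j ≤ (t - s) ^ 2 * (h i * g (j - i)) + (t - s) ^ 2 * (h j * g (i - j)) := by
    intro i j
    rcases le_total i j with hij | hij
    · obtain ⟨m, rfl⟩ := Nat.exists_eq_add_of_le hij
      rw [show i + m - i = m from by omega, show i - (i + m) = 0 from by omega, hg0]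
      simpa using hcore i m
    · obtain ⟨m, rfl⟩ := Nat.exists_eq_add_of_le hij
      rw [hesymm, show j + m - j = m from by omega, show j - (j + m) = 0 from by omega, hg0]
      simpa using hcore j m
  -- sum the bound
  have hS1 : (∑ i ∈ Finset.range N, ∑ j ∈ Finset.range N, h i * g (j - i)) ≤ H * G := by
    calc (∑ i ∈ Finset.range N, ∑ j ∈ Finset.range N, h i * g (j - i))
        ≤ ∑ i ∈ Finset.range N, h i * G := by
          refine Finset.sum_le_sum fun i _ => ?_
          rw [← Finset.mul_sum, hG]
          exact mul_le_mul_of_nonneg_left (sum_shift_le g hgnn hg0 N i) (hhnn i)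
      _ = H * G := by rw [hH, Finset.sum_mul]
  have hswap2 : (∑ i ∈ Finset.range N, ∑ j ∈ Finset.range N, h j * g (i - j))
      = ∑ i ∈ Finset.range N, ∑ j ∈ Finset.range N, h i * g (j - i) := Finset.sum_comm
  have hsumbound : (∑ i ∈ Finset.range N, ∑ j ∈ Finset.range N, e i j)
      ≤ 2 * ((t - s) ^ 2 * (H * G)) := by
    calc (∑ i ∈ Finset.range N, ∑ j ∈ Finset.range N, e i j)
        ≤ ∑ i ∈ Finset.range N, ∑ j ∈ Finset.range N,
            ((t - s) ^ 2 * (h i * g (j - i)) + (t - s) ^ 2 * (h j * g (i - j))) :=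
          Finset.sum_le_sum fun i _ => Finset.sum_le_sum fun j _ => hF2 i j
      _ = (t - s) ^ 2 * (∑ i ∈ Finset.range N, ∑ j ∈ Finset.range N, h i * g (j - i))
          + (t - s) ^ 2 * (∑ i ∈ Finset.range N, ∑ j ∈ Finset.range N, h j * g (i - j)) := by
          rw [Finset.mul_sum, Finset.mul_sum, ← Finset.sum_add_distrib]
          refine Finset.sum_congr rfl fun i _ => ?_
          rw [Finset.mul_sum, Finset.mul_sum, ← Finset.sum_add_distrib]
      _ ≤ 2 * ((t - s) ^ 2 * (H * G)) := by
          rw [hswap2]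
          have hHGnn : 0 ≤ (t - s) ^ 2 * (H * G) - (t - s) ^ 2 *
            (∑ i ∈ Finset.range N, ∑ j ∈ Finset.range N, h i * g (j - i)) := by
            have := mul_le_mul_of_nonneg_left hS1 (sq_nonneg (t - s))
            linarith
          linarith
  -- bound G
  have hGbound : G ≤ Real.exp (2 * t ^ 2) := by
    have hg' : ∀ k : ℕ, g (k + 1) ≤ (2 * t ^ 2) ^ k / (Nat.factorial k : ℝ) := by
      intro k
      simp only [hg]
      have hfs : (Nat.factorial (k + 1) : ℝ) = ((k : ℝ) + 1) * (Nat.factorial k : ℝ) := by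
        rw [Nat.factorial_succ]; push_cast; ring
      rw [show 2 * (k + 1) - 2 = 2 * k from by omega, hfs]
      have h2k : ((k : ℝ) + 1) ≤ 2 ^ k := by
        have hlt := Nat.lt_two_pow_self (n := k)
        have : (k : ℝ) + 1 ≤ ((2 ^ k : ℕ) : ℝ) := by exact_mod_cast hlt
        simpa using this
      have htk : (0 : ℝ) ≤ t ^ (2 * k) := pow_nonneg ht0 _
      have hfk : (0 : ℝ) < (Nat.factorial k : ℝ) := fact_pos k
      have heq : ((k + 1 : ℕ) : ℝ) ^ 2 * t ^ (2 * k) / (((k : ℝ) + 1) * (Nat.factorial k : ℝ))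
          = ((k : ℝ) + 1) * (t ^ (2 * k) / (Nat.factorial k : ℝ)) := by
        have hk1 : ((k : ℝ) + 1) ≠ 0 := by positivity
        push_cast
        field_simp
      rw [heq, show (2 * t ^ 2) ^ k / (Nat.factorial k : ℝ)
          = 2 ^ k * (t ^ (2 * k) / (Nat.factorial k : ℝ)) from by
        rw [mul_pow, pow_mul, mul_div_assoc]]
      exact mul_le_mul_of_nonneg_right h2k (div_nonneg htk hfk.le)
    calc G = (∑ k ∈ Finset.range n, g (k + 1)) + g 0 := by rw [hG, Finset.sum_range_succ']
      _ = ∑ k ∈ Finset.range n, g (k + 1) := by rw [hg0, add_zero]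
      _ ≤ ∑ k ∈ Finset.range n, (2 * t ^ 2) ^ k / (Nat.factorial k : ℝ) :=
          Finset.sum_le_sum fun k _ => hg' k
      _ ≤ Real.exp (2 * t ^ 2) := Real.sum_le_exp_of_nonneg (by positivity) n
  -- bound H
  have hHbound : H ≤ Ps * Pt := by
    rw [hPsPt, hH]
    refine Finset.sum_le_sum fun c hc => ?_
    have h1 : h c = A c c := by
      simp only [hh, hA]
      rw [mul_pow, sq ((Nat.factorial c : ℝ)), pow_mul, pow_mul]
    rw [h1]
    exact Finset.single_le_sum (fun j _ => hA0 c j) hc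
  -- positivity of the sums
  have hPs1 : (1 : ℝ) ≤ Ps := by
    have h00 : s ^ (2 * 0) / (Nat.factorial 0 : ℝ) = 1 := by norm_num
    calc (1 : ℝ) = s ^ (2 * 0) / (Nat.factorial 0 : ℝ) := h00.symm
      _ ≤ Ps := by
          rw [hPs]
          exact Finset.single_le_sum
            (f := fun i => s ^ (2 * i) / (Nat.factorial i : ℝ))
            (fun i _ => div_nonneg (pow_nonneg hs _) (fact_pos i).le)
            (Finset.mem_range.mpr (Nat.succ_pos n))
  have hPt1 : (1 : ℝ) ≤ Pt := by
    have h00 : t ^ (2 * 0) / (Nat.factorial 0 : ℝ) = 1 := by norm_num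
    calc (1 : ℝ) = t ^ (2 * 0) / (Nat.factorial 0 : ℝ) := h00.symm
      _ ≤ Pt := by
          rw [hPt]
          exact Finset.single_le_sum
            (f := fun i => t ^ (2 * i) / (Nat.factorial i : ℝ))
            (fun i _ => div_nonneg (pow_nonneg ht0 _) (fact_pos i).le)
            (Finset.mem_range.mpr (Nat.succ_pos n))
  have hP0 : (0 : ℝ) < Ps * Pt :=
    mul_pos (lt_of_lt_of_le one_pos hPs1) (lt_of_lt_of_le one_pos hPt1)
  have hQ0 : 0 ≤ Q := by
    rw [hQdef]
    exact Finset.sum_nonneg fun i _ => div_nonneg (pow_nonneg hst0 _) (fact_pos i).le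
  have hH0 : 0 ≤ H := by rw [hH]; exact Finset.sum_nonneg fun c _ => hhnn c
  have hG0 : 0 ≤ G := by rw [hG]; exact Finset.sum_nonneg fun m _ => hgnn m
  -- main estimate
  have hGE : G ≤ Real.exp (2 * (n : ℝ)) :=
    hGbound.trans (Real.exp_le_exp.mpr (by linarith))
  have hd2 : (t - s) ^ 2 ≤ u ^ 2 := pow_le_pow_left₀ hts htsu 2
  have hkey : Ps * Pt - Q * Q ≤ u * (Ps * Pt) := by
    have hchain : (t - s) ^ 2 * (H * G) ≤ u ^ 2 * ((Ps * Pt) * Real.exp (2 * (n : ℝ))) := by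
      have hHG : H * G ≤ (Ps * Pt) * Real.exp (2 * (n : ℝ)) :=
        mul_le_mul hHbound hGE hG0 (by linarith)
      exact mul_le_mul hd2 hHG (mul_nonneg hH0 hG0) (by positivity)
    have hlast : u ^ 2 * ((Ps * Pt) * Real.exp (2 * (n : ℝ))) ≤ u * (Ps * Pt) := by
      have h1 : u ^ 2 * ((Ps * Pt) * Real.exp (2 * (n : ℝ)))
          = (u * Real.exp (2 * (n : ℝ))) * (u * (Ps * Pt)) := by ring
      rw [h1]
      have h2 : 0 ≤ u * (Ps * Pt) := by positivity
      calc (u * Real.exp (2 * (n : ℝ))) * (u * (Ps * Pt)) ≤ 1 * (u * (Ps * Pt)) :=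
            mul_le_mul_of_nonneg_right hnum h2
        _ = u * (Ps * Pt) := one_mul _
    have hid2 : Ps * Pt - Q * Q ≤ (t - s) ^ 2 * (H * G) := by
      have := hsumbound
      rw [← hident] at this
      linarith
    linarith
  have hQsq : (1 - u) * (Ps * Pt) ≤ Q * Q := by
    rw [sub_mul, one_mul]
    linarith [hkey]
  -- conclude
  have h1u : 0 ≤ 1 - u := by linarith
  have hPsnn : (0 : ℝ) ≤ Ps := by linarith
  have hPtnn : (0 : ℝ) ≤ Pt := by linarith
  show 1 - u ≤ weylCorr n s t
  unfold weylCorr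
  rw [← hN, ← hPs, ← hPt, ← hQdef]
  have hden : 0 < Real.sqrt Ps * Real.sqrt Pt := by
    apply mul_pos <;> [exact Real.sqrt_pos.mpr (by linarith); exact Real.sqrt_pos.mpr (by linarith)]
  rw [le_div_iff₀ hden]
  have hfold : (1 - u) * (Real.sqrt Ps * Real.sqrt Pt)
      = Real.sqrt ((1 - u) ^ 2 * (Ps * Pt)) := by
    rw [Real.sqrt_mul (by positivity), Real.sqrt_sq h1u, Real.sqrt_mul hPsnn]
  rw [hfold, ← Real.sqrt_sq hQ0]
  apply Real.sqrt_le_sqrt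
  have hsq1 : (1 - u) ^ 2 ≤ 1 - u := by
    have hle : 1 - u ≤ 1 := by linarith
    calc (1 - u) ^ 2 = (1 - u) * (1 - u) := by ring
      _ ≤ (1 - u) * 1 := mul_le_mul_of_nonneg_left hle h1u
      _ = 1 - u := mul_one _
  have := mul_le_mul_of_nonneg_right hsq1 hP0.le
  calc (1 - u) ^ 2 * (Ps * Pt) ≤ (1 - u) * (Ps * Pt) := this
    _ ≤ Q * Q := hQsq
    _ = Q ^ 2 := by ring
end

section
/- There exists u₀ ∈ (0,1) such that for every u ∈ (0, u₀], every n ∈ ℕ with n ≥ √(|log u|), and all real s, t with 0 ≤ t − s ≤ u and 0 ≤ s ≤ √n − α_n and 0 ≤ t ≤ √n − α_n, one has A_n(s,t) ≥ 1 − 1/(log u)². -/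
set_option maxHeartbeats 1000000

open Filter Finset

-- e^z ≤ 1 + z + z² on [0,1]
lemma aux_exp_le_quad {z : ℝ} (h0 : 0 ≤ z) (h1 : z ≤ 1) :
    Real.exp z ≤ 1 + z + z ^ 2 := by
  have h := Real.exp_bound' h0 h1 (n := 3) (by norm_num)
  have hs : (∑ m ∈ Finset.range 3, z ^ m / (Nat.factorial m)) = 1 + z + z ^ 2 / 2 := by
    norm_num [Finset.sum_range_succ, Nat.factorial]
  rw [hs] at h
  have hz3 : z ^ 3 ≤ z ^ 2 := by nlinarith
  have h2 : z ^ 3 * ((3:ℕ) + 1 : ℝ) / (((Nat.factorial 3 : ℕ)) * (3:ℕ) : ℝ) = z ^ 3 * (2/9) := by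
    norm_num [Nat.factorial]
    ring
  rw [h2] at h
  nlinarith [h]

lemma aux_one_sub_mul_exp {w : ℝ} (h0 : 0 ≤ w) (h1 : w ≤ 1) :
    (1 - w) * Real.exp w ≤ 1 - w ^ 3 := by
  have h := aux_exp_le_quad h0 h1
  have hw : 0 ≤ 1 - w := by linarith
  nlinarith [Real.exp_pos w]

lemma aux_pow_div_factorial_le_exp (m : ℕ) :
    ((m : ℝ)) ^ m / (Nat.factorial m) ≤ Real.exp m := by
  calc ((m : ℝ)) ^ m / (Nat.factorial m)
      ≤ ∑ i ∈ Finset.range (m + 1), (m : ℝ) ^ i / (Nat.factorial i) := by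
        exact Finset.single_le_sum (f := fun i => (m : ℝ) ^ i / (Nat.factorial i))
          (fun i _ => by positivity) (Finset.self_mem_range_succ m)
    _ ≤ Real.exp m := Real.sum_le_exp_of_nonneg (by positivity) _

-- main tail bound
lemma aux_tail_bound {x z : ℝ} {n : ℕ} (hx : 0 ≤ x) (hz : 0 < z) (hz1 : z ≤ 1)
    (hxn : x ≤ ((n : ℝ) + 1) * (1 - z)) :
    Real.exp x - ∑ i ∈ Finset.range (n + 1), x ^ i / (Nat.factorial i) ≤
      (1 / z) * Real.exp (-((n : ℝ) * z ^ 3)) * Real.exp x := by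
  set m : ℕ := n + 1 with hm
  have hm0 : (0 : ℝ) < (m : ℝ) := by positivity
  have hzsub : 0 ≤ 1 - z := by linarith
  have hsum : Summable (fun i : ℕ => x ^ i / (Nat.factorial i : ℝ)) :=
    Real.summable_pow_div_factorial x
  have hexp : Real.exp x = ∑' i : ℕ, x ^ i / (Nat.factorial i : ℝ) := by
    rw [Real.exp_eq_exp_ℝ, NormedSpace.exp_eq_tsum_div]
  have hsplit : ∑ i ∈ Finset.range m, x ^ i / (Nat.factorial i : ℝ) +
      ∑' i : ℕ, x ^ (i + m) / (Nat.factorial (i + m) : ℝ) =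
      ∑' i : ℕ, x ^ i / (Nat.factorial i : ℝ) :=
    Summable.sum_add_tsum_nat_add m hsum
  have htail : Real.exp x - ∑ i ∈ Finset.range m, x ^ i / (Nat.factorial i : ℝ) =
      ∑' i : ℕ, x ^ (i + m) / (Nat.factorial (i + m) : ℝ) := by
    rw [hexp, ← hsplit]; ring
  -- geometric ratio
  set r : ℝ := x / m with hr
  have hr0 : 0 ≤ r := by positivity
  have hr1 : r ≤ 1 - z := by
    rw [hr, div_le_iff₀ hm0]
    calc x ≤ ((n : ℝ) + 1) * (1 - z) := hxn
      _ = (1 - z) * m := by push_cast [hm]; ring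
  have hrlt : r < 1 := lt_of_le_of_lt hr1 (by linarith)
  -- termwise bound
  have hterm : ∀ i : ℕ, x ^ (i + m) / (Nat.factorial (i + m) : ℝ) ≤
      (x ^ m / (Nat.factorial m : ℝ)) * r ^ i := by
    intro i
    have hfac : (Nat.factorial m : ℝ) * (m : ℝ) ^ i ≤ (Nat.factorial (i + m) : ℝ) := by
      have h := Nat.factorial_mul_pow_le_factorial (m := n) (n := i)
      have h2 : (n.factorial * (n + 1) ^ i : ℕ) ≤ ((n + i).factorial : ℕ) := h
      have h3 : Nat.factorial m * m ^ i ≤ Nat.factorial (i + m) := by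
        rw [hm]
        calc Nat.factorial (n + 1) * (n + 1) ^ i ≤ Nat.factorial (n + 1) * (n + 2) ^ i :=
              Nat.mul_le_mul_left _ (Nat.pow_le_pow_left (by omega) i)
          _ ≤ Nat.factorial (n + 1 + i) := Nat.factorial_mul_pow_le_factorial
          _ = Nat.factorial (i + (n + 1)) := by rw [Nat.add_comm]
      exact_mod_cast h3
    have hkey : x ^ (i + m) = x ^ m * x ^ i := by rw [pow_add, mul_comm]
    rw [hkey]
    rw [div_le_iff₀ (by positivity), hr]
    have hfacpos : (0 : ℝ) < (Nat.factorial m : ℝ) * (m : ℝ) ^ i := by positivity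
    calc x ^ m * x ^ i = (x ^ m * x ^ i) / ((Nat.factorial m : ℝ) * (m : ℝ) ^ i) *
          ((Nat.factorial m : ℝ) * (m : ℝ) ^ i) := by field_simp
      _ ≤ (x ^ m * x ^ i) / ((Nat.factorial m : ℝ) * (m : ℝ) ^ i) *
          (Nat.factorial (i + m) : ℝ) := by
          apply mul_le_mul_of_nonneg_left hfac (by positivity)
      _ = x ^ m / (Nat.factorial m : ℝ) * (x / m) ^ i * (Nat.factorial (i + m) : ℝ) := by
          rw [div_pow]; ring
  have hgeo : Summable (fun i : ℕ => (x ^ m / (Nat.factorial m : ℝ)) * r ^ i) :=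
    (summable_geometric_of_lt_one hr0 hrlt).mul_left _
  have htsum_le : ∑' i : ℕ, x ^ (i + m) / (Nat.factorial (i + m) : ℝ) ≤
      (x ^ m / (Nat.factorial m : ℝ)) * (1 - r)⁻¹ := by
    have hsumm : Summable (fun i : ℕ => x ^ (i + m) / (Nat.factorial (i + m) : ℝ)) :=
      (summable_nat_add_iff m).2 hsum
    calc ∑' i : ℕ, x ^ (i + m) / (Nat.factorial (i + m) : ℝ)
        ≤ ∑' i : ℕ, (x ^ m / (Nat.factorial m : ℝ)) * r ^ i :=
          Summable.tsum_le_tsum hterm hsumm hgeo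
      _ = (x ^ m / (Nat.factorial m : ℝ)) * ∑' i : ℕ, r ^ i := tsum_mul_left
      _ = (x ^ m / (Nat.factorial m : ℝ)) * (1 - r)⁻¹ := by
          rw [tsum_geometric_of_lt_one hr0 hrlt]
  have hinv : (1 - r)⁻¹ ≤ 1 / z := by
    rw [one_div]
    exact inv_anti₀ hz (by linarith)
  -- bound x^m/m!
  have hxm : x ^ m / (Nat.factorial m : ℝ) ≤ r ^ m * Real.exp m := by
    have : x ^ m / (Nat.factorial m : ℝ) = r ^ m * ((m : ℝ) ^ m / (Nat.factorial m : ℝ)) := by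
      rw [hr, div_pow]
      field_simp
    rw [this]
    exact mul_le_mul_of_nonneg_left (aux_pow_div_factorial_le_exp m) (by positivity)
  -- key exponential estimate
  have hkey : r ^ m * Real.exp ((m : ℝ) - x) ≤ Real.exp (-((n : ℝ) * z ^ 3)) := by
    have hform : r ^ m * Real.exp ((m : ℝ) - x) = (r * Real.exp (1 - r)) ^ m := by
      rw [mul_pow, ← Real.exp_nat_mul]
      congr 1
      have hmne : (m : ℝ) ≠ 0 := ne_of_gt hm0
      rw [hr]
      field_simp
    rw [hform]
    have hw0 : 0 ≤ 1 - r := by linarith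
    have hw1 : 1 - r ≤ 1 := by linarith
    have h1 : r * Real.exp (1 - r) ≤ 1 - (1 - r) ^ 3 := by
      have := aux_one_sub_mul_exp hw0 hw1
      calc r * Real.exp (1 - r) = (1 - (1 - r)) * Real.exp (1 - r) := by ring_nf
        _ ≤ 1 - (1 - r) ^ 3 := this
    have h2 : 1 - (1 - r) ^ 3 ≤ 1 - z ^ 3 := by
      have : z ^ 3 ≤ (1 - r) ^ 3 := pow_le_pow_left₀ hz.le (by linarith) 3
      linarith
    have h3 : (1 : ℝ) - z ^ 3 ≤ Real.exp (-z ^ 3) := by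
      have := Real.add_one_le_exp (-z ^ 3)
      linarith
    have hbase : 0 ≤ r * Real.exp (1 - r) := by positivity
    calc (r * Real.exp (1 - r)) ^ m ≤ (Real.exp (-z ^ 3)) ^ m :=
          pow_le_pow_left₀ hbase (h1.trans (h2.trans h3)) m
      _ = Real.exp ((m : ℝ) * (-z ^ 3)) := by rw [← Real.exp_nat_mul]
      _ ≤ Real.exp (-((n : ℝ) * z ^ 3)) := by
          apply Real.exp_le_exp.2
          have : (n : ℝ) ≤ (m : ℝ) := by push_cast [hm]; linarith
          nlinarith [pow_pos hz 3]
  -- assemble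
  have final : x ^ m / (Nat.factorial m : ℝ) * (1 - r)⁻¹ ≤
      (1 / z) * Real.exp (-((n : ℝ) * z ^ 3)) * Real.exp x := by
    have e1 : x ^ m / (Nat.factorial m : ℝ) ≤ Real.exp (-((n : ℝ) * z ^ 3)) * Real.exp x := by
      have := mul_le_mul_of_nonneg_right hxm (le_of_lt (Real.exp_pos ((x : ℝ) - m)))
      calc x ^ m / (Nat.factorial m : ℝ)
          = x ^ m / (Nat.factorial m : ℝ) * (Real.exp ((m : ℝ) - x) * Real.exp (x - m)) := by
            rw [← Real.exp_add]; simp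
        _ ≤ (r ^ m * Real.exp m) * (Real.exp ((m : ℝ) - x) * Real.exp (x - m)) := by
            apply mul_le_mul_of_nonneg_right hxm (by positivity)
        _ = (r ^ m * Real.exp ((m : ℝ) - x)) * (Real.exp m * Real.exp (x - m)) := by ring
        _ ≤ Real.exp (-((n : ℝ) * z ^ 3)) * (Real.exp m * Real.exp (x - m)) := by
            apply mul_le_mul_of_nonneg_right hkey (by positivity)
        _ = Real.exp (-((n : ℝ) * z ^ 3)) * Real.exp x := by
            rw [← Real.exp_add]; ring_nf
    calc x ^ m / (Nat.factorial m : ℝ) * (1 - r)⁻¹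
        ≤ (Real.exp (-((n : ℝ) * z ^ 3)) * Real.exp x) * (1 / z) := by
          exact mul_le_mul e1 hinv (inv_nonneg.2 (by linarith)) (by positivity)
      _ = (1 / z) * Real.exp (-((n : ℝ) * z ^ 3)) * Real.exp x := by ring
  calc Real.exp x - ∑ i ∈ Finset.range (n + 1), x ^ i / (Nat.factorial i : ℝ)
      = ∑' i : ℕ, x ^ (i + m) / (Nat.factorial (i + m) : ℝ) := htail
    _ ≤ x ^ m / (Nat.factorial m : ℝ) * (1 - r)⁻¹ := htsum_le
    _ ≤ _ := final

lemma aux_numeric {N L : ℝ} (hN : (20992 : ℝ) ^ 2 ≤ N) (hL1 : 1 ≤ L) (hLN : L ≤ N ^ 2) :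
    Real.log N * Real.exp (-(N * (1 / Real.log N) ^ 3)) ≤ 1 / (2 * L ^ 2) := by
  have hN0 : (0 : ℝ) < N := by nlinarith
  set c : ℝ := Real.log N with hc
  have hc1 : 1 ≤ c := by
    rw [hc, Real.le_log_iff_exp_le hN0]
    calc Real.exp 1 ≤ 2.7182818286 := Real.exp_one_lt_d9.le
      _ ≤ N := by nlinarith
  have hc0 : (0 : ℝ) < c := by linarith
  set g : ℝ := N ^ (8⁻¹ : ℝ) with hg
  have hg0 : (0 : ℝ) < g := Real.rpow_pos_of_pos hN0 _
  have hg1 : (1 : ℝ) ≤ g := Real.one_le_rpow (by nlinarith) (by norm_num)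
  have hcg : c ≤ 8 * g := by
    have h := Real.log_le_rpow_div hN0.le (by norm_num : (0 : ℝ) < 8⁻¹)
    rw [div_eq_mul_inv, inv_inv] at h
    rw [hc, hg]; linarith
  have hg8 : g ^ (8 : ℕ) = N := by
    rw [hg, ← Real.rpow_natCast (N ^ (8⁻¹ : ℝ)) 8, ← Real.rpow_mul hN0.le]
    norm_num
  have hg4 : (20992 : ℝ) ≤ g ^ (4 : ℕ) := by
    by_contra hcon
    push_neg at hcon
    have hq : g ^ (8 : ℕ) = g ^ (4 : ℕ) * g ^ (4 : ℕ) := by ring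
    nlinarith [pow_nonneg hg0.le 4]
  have hD : N * (1 / c) ^ 3 = N / c ^ 3 := by
    rw [one_div, inv_pow, ← div_eq_mul_inv]
  have hc3 : c ^ 3 ≤ 512 * g ^ 3 := by
    calc c ^ 3 ≤ (8 * g) ^ 3 := pow_le_pow_left₀ hc0.le hcg 3
      _ = 512 * g ^ 3 := by ring
  have hdiv1 : N / (512 * g ^ 3) ≤ N / c ^ 3 := by
    apply div_le_div_of_nonneg_left hN0.le (by positivity) hc3
  have hdiv2 : N / (512 * g ^ 3) = g ^ (5 : ℕ) / 512 := by
    rw [← hg8]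
    field_simp
  have h37 : 37 * g ≤ N * (1 / c) ^ 3 := by
    rw [hD]
    have : 37 * g ≤ g ^ (5 : ℕ) / 512 := by nlinarith [hg4, hg1, hg0.le]
    linarith [hdiv1, hdiv2 ▸ hdiv1]
  have h16 : (16 : ℝ) ≤ Real.exp (4 * g) := by
    have h2 : (2 : ℝ) ≤ Real.exp 1 := by linarith [Real.exp_one_gt_d9]
    calc (16 : ℝ) = 2 ^ (4 : ℕ) := by norm_num
      _ ≤ Real.exp 1 ^ (4 : ℕ) := pow_le_pow_left₀ (by norm_num) h2 4
      _ = Real.exp 4 := Real.exp_one_pow 4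
      _ ≤ Real.exp (4 * g) := Real.exp_le_exp.2 (by linarith)
  have h33 : g ^ (33 : ℕ) ≤ Real.exp (33 * g) := by
    have hlog : Real.log g ≤ g := (Real.log_le_sub_one_of_pos hg0).trans (by linarith)
    calc g ^ (33 : ℕ) = Real.exp (Real.log g) ^ (33 : ℕ) := by rw [Real.exp_log hg0]
      _ = Real.exp ((33 : ℕ) * Real.log g) := by rw [← Real.exp_nat_mul]
      _ ≤ Real.exp (33 * g) := Real.exp_le_exp.2 (by push_cast; linarith)
  have hL2 : L ^ 2 ≤ N ^ 4 := by nlinarith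
  have hN4 : N ^ 4 = g ^ (32 : ℕ) := by rw [← hg8]; ring
  have hmain : 2 * L ^ 2 * c ≤ Real.exp (N * (1 / c) ^ 3) := by
    calc 2 * L ^ 2 * c ≤ 2 * N ^ 4 * (8 * g) := by nlinarith
      _ = 16 * g ^ (33 : ℕ) := by rw [hN4]; ring
      _ ≤ Real.exp (4 * g) * Real.exp (33 * g) :=
          mul_le_mul h16 h33 (by positivity) (by positivity)
      _ = Real.exp (37 * g) := by rw [← Real.exp_add]; ring_nf
      _ ≤ Real.exp (N * (1 / c) ^ 3) := Real.exp_le_exp.2 h37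
  rw [Real.exp_neg, ← div_eq_mul_inv, div_le_div_iff₀ (Real.exp_pos _) (by positivity)]
  linarith [hmain]

/-- With `α_n = √n / log n`: there is `u₀ ∈ (0,1)` such that for every `u ∈ (0, u₀]`,
every `n ≥ √|log u|`, and all `s, t ∈ [0, √n − α_n]` with `0 ≤ t − s ≤ u`,
one has `A_n(s,t) ≥ 1 − 1/(log u)²`. -/
theorem weylCorr_near_one_large_n :
    ∃ u₀ : ℝ, 0 < u₀ ∧ u₀ < 1 ∧
      ∀ u : ℝ, 0 < u → u ≤ u₀ → ∀ n : ℕ,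
        Real.sqrt |Real.log u| ≤ (n : ℝ) → ∀ s t : ℝ,
        0 ≤ t - s → t - s ≤ u →
        0 ≤ s → s ≤ Real.sqrt n - Real.sqrt n / Real.log n →
        0 ≤ t → t ≤ Real.sqrt n - Real.sqrt n / Real.log n →
        1 - 1 / (Real.log u) ^ 2 ≤ weylCorr n s t := by
  refine ⟨Real.exp (-(20992 : ℝ) ^ 4), Real.exp_pos _, ?_, ?_⟩
  · rw [Real.exp_lt_one_iff]
    norm_num
  intro u hu0 hu1 n hnL s t hts0 htsu hs0 hsub ht0 htub
  have hlogu : Real.log u ≤ -(20992 : ℝ) ^ 4 := by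
    calc Real.log u ≤ Real.log (Real.exp (-(20992 : ℝ) ^ 4)) := Real.log_le_log hu0 hu1
      _ = -(20992 : ℝ) ^ 4 := Real.log_exp _
  set L : ℝ := -Real.log u with hLdef
  have hLbig : (20992 : ℝ) ^ 4 ≤ L := by rw [hLdef]; linarith
  have hL1 : (1 : ℝ) ≤ L := by
    have h : (1 : ℝ) ≤ (20992 : ℝ) ^ 4 := by norm_num
    linarith
  have hL0 : (0 : ℝ) < L := by linarith
  have habs : |Real.log u| = L := by
    have h : (0 : ℝ) < (20992 : ℝ) ^ 4 := by norm_num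
    rw [abs_of_neg (by linarith : Real.log u < 0)]
  rw [habs] at hnL
  set N : ℝ := (n : ℝ) with hNdef
  have hsqL : (20992 : ℝ) ^ 2 ≤ Real.sqrt L := by
    calc (20992 : ℝ) ^ 2 = Real.sqrt (((20992 : ℝ) ^ 2) ^ 2) :=
          (Real.sqrt_sq (by positivity)).symm
      _ ≤ Real.sqrt L := Real.sqrt_le_sqrt (by
          have h : ((20992 : ℝ) ^ 2) ^ 2 = (20992 : ℝ) ^ 4 := by norm_num
          linarith)
  have hNbig : (20992 : ℝ) ^ 2 ≤ N := le_trans hsqL hnL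
  have hN0 : (0 : ℝ) < N := by
    have h : (0 : ℝ) < (20992 : ℝ) ^ 2 := by norm_num
    linarith
  have hLN2 : L ≤ N ^ 2 := by
    have h := mul_self_le_mul_self (Real.sqrt_nonneg L) hnL
    rw [Real.mul_self_sqrt hL0.le] at h
    have h2 : N * N = N ^ 2 := by ring
    linarith
  set c : ℝ := Real.log N with hc
  have hc1 : (1 : ℝ) ≤ c := by
    rw [hc, Real.le_log_iff_exp_le hN0]
    calc Real.exp 1 ≤ 2.7182818286 := Real.exp_one_lt_d9.le
      _ ≤ N := by
        have h : (2.7182818286 : ℝ) ≤ (20992 : ℝ) ^ 2 := by norm_num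
        linarith
  have hc0 : (0 : ℝ) < c := by linarith
  set z : ℝ := 1 / c with hz
  have hz0 : (0 : ℝ) < z := by positivity
  have hz1 : z ≤ 1 := by rw [hz]; rw [div_le_one hc0]; exact hc1
  have hst : s ≤ t := by linarith
  set x : ℝ := s * t with hxdef
  have hx0 : 0 ≤ x := mul_nonneg hs0 ht0
  have hsN : Real.sqrt N * Real.sqrt N = N := Real.mul_self_sqrt hN0.le
  have htb : t ≤ Real.sqrt N * (1 - z) := by
    have heq : Real.sqrt N - Real.sqrt N / c = Real.sqrt N * (1 - z) := by
      rw [hz]; ring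
    calc t ≤ Real.sqrt N - Real.sqrt N / c := htub
      _ = Real.sqrt N * (1 - z) := heq
  have hzsub : 0 ≤ 1 - z := by linarith
  have hxn : x ≤ (N + 1) * (1 - z) := by
    have h1 : x ≤ t * t := by
      rw [hxdef]; exact mul_le_mul_of_nonneg_right hst ht0
    have h2 : t * t ≤ (Real.sqrt N * (1 - z)) * (Real.sqrt N * (1 - z)) :=
      mul_self_le_mul_self ht0 htb
    have h3 : (Real.sqrt N * (1 - z)) * (Real.sqrt N * (1 - z)) = N * (1 - z) ^ 2 := by
      rw [show (Real.sqrt N * (1 - z)) * (Real.sqrt N * (1 - z)) =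
        (Real.sqrt N * Real.sqrt N) * ((1 - z) * (1 - z)) from by ring, hsN]; ring
    have h5 : (N + 1) * (1 - z) - N * (1 - z) ^ 2 = (1 - z) * (1 + N * z) := by ring
    have h6 : 0 ≤ (1 - z) * (1 + N * z) := mul_nonneg hzsub (by positivity)
    linarith
  -- the three sums
  set P : ℝ := ∑ i ∈ Finset.range (n + 1), (s * t) ^ i / (Nat.factorial i) with hP
  set Q : ℝ := ∑ i ∈ Finset.range (n + 1), s ^ (2 * i) / (Nat.factorial i) with hQ
  set R : ℝ := ∑ i ∈ Finset.range (n + 1), t ^ (2 * i) / (Nat.factorial i) with hR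
  have hP0 : 0 ≤ P := Finset.sum_nonneg (fun i _ => by positivity)
  have hQexp : Q ≤ Real.exp (s ^ 2) := by
    rw [hQ]
    calc ∑ i ∈ Finset.range (n + 1), s ^ (2 * i) / (Nat.factorial i)
        = ∑ i ∈ Finset.range (n + 1), (s ^ 2) ^ i / (Nat.factorial i) := by
          apply Finset.sum_congr rfl; intro i _; rw [pow_mul]
      _ ≤ Real.exp (s ^ 2) := Real.sum_le_exp_of_nonneg (sq_nonneg s) _
  have hRexp : R ≤ Real.exp (t ^ 2) := by
    rw [hR]
    calc ∑ i ∈ Finset.range (n + 1), t ^ (2 * i) / (Nat.factorial i)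
        = ∑ i ∈ Finset.range (n + 1), (t ^ 2) ^ i / (Nat.factorial i) := by
          apply Finset.sum_congr rfl; intro i _; rw [pow_mul]
      _ ≤ Real.exp (t ^ 2) := Real.sum_le_exp_of_nonneg (sq_nonneg t) _
  have hQ1 : (1 : ℝ) ≤ Q := by
    rw [hQ]
    calc (1 : ℝ) = s ^ (2 * 0) / (Nat.factorial 0) := by norm_num
      _ ≤ ∑ i ∈ Finset.range (n + 1), s ^ (2 * i) / (Nat.factorial i) :=
        Finset.single_le_sum (f := fun i => s ^ (2 * i) / (Nat.factorial i : ℝ))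
          (fun i _ => by positivity) (Finset.mem_range.2 (Nat.succ_pos n))
  have hR1 : (1 : ℝ) ≤ R := by
    rw [hR]
    calc (1 : ℝ) = t ^ (2 * 0) / (Nat.factorial 0) := by norm_num
      _ ≤ ∑ i ∈ Finset.range (n + 1), t ^ (2 * i) / (Nat.factorial i) :=
        Finset.single_le_sum (f := fun i => t ^ (2 * i) / (Nat.factorial i : ℝ))
          (fun i _ => by positivity) (Finset.mem_range.2 (Nat.succ_pos n))
  have hsqQpos : (0 : ℝ) < Real.sqrt Q := Real.sqrt_pos.2 (by linarith)
  have hsqRpos : (0 : ℝ) < Real.sqrt R := Real.sqrt_pos.2 (by linarith)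
  have hsqQ : Real.sqrt Q ≤ Real.exp (s ^ 2 / 2) := by
    calc Real.sqrt Q ≤ Real.sqrt (Real.exp (s ^ 2)) := Real.sqrt_le_sqrt hQexp
      _ = Real.exp (s ^ 2 / 2) := by
          rw [show Real.exp (s ^ 2) = Real.exp (s ^ 2 / 2) ^ 2 from by
            rw [← Real.exp_nat_mul]; push_cast; ring_nf, Real.sqrt_sq (Real.exp_pos _).le]
  have hsqR : Real.sqrt R ≤ Real.exp (t ^ 2 / 2) := by
    calc Real.sqrt R ≤ Real.sqrt (Real.exp (t ^ 2)) := Real.sqrt_le_sqrt hRexp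
      _ = Real.exp (t ^ 2 / 2) := by
          rw [show Real.exp (t ^ 2) = Real.exp (t ^ 2 / 2) ^ 2 from by
            rw [← Real.exp_nat_mul]; push_cast; ring_nf, Real.sqrt_sq (Real.exp_pos _).le]
  -- step 1 : A ≥ P * exp(-(s²+t²)/2)
  have hstep1 : P * Real.exp (-((s ^ 2 + t ^ 2) / 2)) ≤ weylCorr n s t := by
    rw [weylCorr]
    have hden : Real.sqrt Q * Real.sqrt R ≤ Real.exp (s ^ 2 / 2) * Real.exp (t ^ 2 / 2) :=
      mul_le_mul hsqQ hsqR hsqRpos.le (Real.exp_pos _).le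
    have h1 : P / (Real.exp (s ^ 2 / 2) * Real.exp (t ^ 2 / 2)) ≤
        P / (Real.sqrt Q * Real.sqrt R) :=
      div_le_div_of_nonneg_left hP0 (by positivity) hden
    have h2 : P / (Real.exp (s ^ 2 / 2) * Real.exp (t ^ 2 / 2)) =
        P * Real.exp (-((s ^ 2 + t ^ 2) / 2)) := by
      rw [← Real.exp_add, Real.exp_neg, div_eq_mul_inv]
      ring_nf
    rw [← h2]
    exact h1
  -- tail bound
  set E : ℝ := c * Real.exp (-(N * (1 / c) ^ 3)) with hE
  have htail : Real.exp x - P ≤ E * Real.exp x := by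
    have hxn' : x ≤ ((n : ℝ) + 1) * (1 - z) := by rw [← hNdef]; exact hxn
    have h := aux_tail_bound (n := n) hx0 hz0 hz1 hxn'
    rw [hP, hxdef]
    calc Real.exp (s * t) - ∑ i ∈ Finset.range (n + 1), (s * t) ^ i / (Nat.factorial i)
        ≤ (1 / z) * Real.exp (-((n : ℝ) * z ^ 3)) * Real.exp (s * t) := h
      _ = E * Real.exp (s * t) := by
          rw [hE, hz, one_div_one_div, ← hNdef]
  have hEnum : E ≤ 1 / (2 * L ^ 2) := by
    rw [hE, hc]
    exact aux_numeric hNbig hL1 hLN2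
  have hE0 : 0 ≤ E := by positivity
  have hLsq1 : (1 : ℝ) ≤ L ^ 2 := by
    have h := mul_le_mul hL1 hL1 zero_le_one (by linarith : (0:ℝ) ≤ L)
    calc (1 : ℝ) = 1 * 1 := by ring
      _ ≤ L * L := h
      _ = L ^ 2 := by ring
  have hEhalf : E ≤ 1 / 2 := by
    have h : 1 / (2 * L ^ 2) ≤ 1 / 2 := by
      apply div_le_div_of_nonneg_left (by norm_num) (by norm_num) (by linarith)
    linarith
  have hPlow : (1 - E) * Real.exp x ≤ P := by
    have hr : (1 - E) * Real.exp x = Real.exp x - E * Real.exp x := by ring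
    linarith
  -- step 2
  have hstep2 : (1 - E) * Real.exp (-((t - s) ^ 2 / 2)) ≤ weylCorr n s t := by
    have h1 : (1 - E) * Real.exp x * Real.exp (-((s ^ 2 + t ^ 2) / 2)) ≤
        P * Real.exp (-((s ^ 2 + t ^ 2) / 2)) :=
      mul_le_mul_of_nonneg_right hPlow (Real.exp_pos _).le
    have h2 : (1 - E) * Real.exp x * Real.exp (-((s ^ 2 + t ^ 2) / 2)) =
        (1 - E) * Real.exp (-((t - s) ^ 2 / 2)) := by
      rw [mul_assoc, ← Real.exp_add]
      congr 2
      rw [hxdef]; ring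
    linarith [hstep1]
  -- final numeric assembly
  have hdelta : (t - s) ^ 2 ≤ u ^ 2 := pow_le_pow_left₀ hts0 htsu 2
  have huL : u * L ≤ 1 := by
    have h := Real.log_le_sub_one_of_pos (inv_pos.2 hu0)
    rw [Real.log_inv] at h
    have h2 : L ≤ u⁻¹ := by rw [hLdef]; linarith [inv_pos.2 hu0]
    calc u * L ≤ u * u⁻¹ := mul_le_mul_of_nonneg_left h2 hu0.le
      _ = 1 := mul_inv_cancel₀ (ne_of_gt hu0)
  have hu2 : u ^ 2 ≤ 1 / L ^ 2 := by
    rw [le_div_iff₀ (by positivity : (0:ℝ) < L ^ 2)]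
    have h := mul_self_le_mul_self (mul_nonneg hu0.le hL0.le) huL
    calc u ^ 2 * L ^ 2 = (u * L) * (u * L) := by ring
      _ ≤ 1 * 1 := h
      _ = 1 := by ring
  have hexpdel : 1 - (t - s) ^ 2 / 2 ≤ Real.exp (-((t - s) ^ 2 / 2)) := by
    have := Real.add_one_le_exp (-((t - s) ^ 2 / 2))
    linarith
  have hfinal : 1 - 1 / L ^ 2 ≤ (1 - E) * Real.exp (-((t - s) ^ 2 / 2)) := by
    have h1 : (1 - E) * (1 - (t - s) ^ 2 / 2) ≤ (1 - E) * Real.exp (-((t - s) ^ 2 / 2)) :=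
      mul_le_mul_of_nonneg_left hexpdel (by linarith)
    have h2 : 1 - E - (t - s) ^ 2 / 2 ≤ (1 - E) * (1 - (t - s) ^ 2 / 2) := by
      have hd0 : 0 ≤ (t - s) ^ 2 / 2 := by positivity
      have hid : (1 - E) * (1 - (t - s) ^ 2 / 2) =
          1 - E - (t - s) ^ 2 / 2 + E * ((t - s) ^ 2 / 2) := by ring
      have hEd : 0 ≤ E * ((t - s) ^ 2 / 2) := mul_nonneg hE0 hd0
      linarith
    have h3 : (t - s) ^ 2 / 2 ≤ 1 / (2 * L ^ 2) := by
      have heq : 1 / (2 * L ^ 2) = (1 / L ^ 2) / 2 := by ring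
      linarith
    have h4 : 1 / (2 * L ^ 2) + 1 / (2 * L ^ 2) = 1 / L ^ 2 := by
      field_simp
      ring
    linarith
  have hLsq : (Real.log u) ^ 2 = L ^ 2 := by rw [hLdef]; ring
  rw [hLsq]
  linarith [hstep2]
end
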